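/- arXiv:1906.04285 — 6 statements merged into one kernel-verified Lean document; each statement's English description precedes it below -/
import Mathlib

section
/- Let (𝗎ₙ) be generated by the general momentum method with parameters λ ∈ (0,1), a ≥ 0 and learning rate h > 0, and let u ∈ C³([0,∞); ℝ^d) be the solution of the rescaled gradient flow du/dt = −(1−λ)⁻¹ ∇Φ(u) with u(0) = 𝗎₀. Then for every T ≥ 0 there is a constant C = C(T) > 0, independent of h, such that sup over all n with 0 ≤ nh ≤ T of |u(nh) − 𝗎ₙ| ≤ C h. -/
set_option maxHeartbeats 1600000 in
/-- Theorem 1 (convergence of momentum methods to the rescaled gradient flow):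
the general momentum method with parameters `lam ∈ (0,1)`, `a ≥ 0`, learning rate `h > 0`
stays within `C·h` of the solution of `du/dt = -(1-λ)⁻¹ ∇Φ(u)` on `[0,T]`,
with `C = C(T)` independent of `h`. -/
theorem momentum_converges_to_rescaled_gradient_flow
    {d : ℕ} (Φ : EuclideanSpace ℝ (Fin d) → ℝ)
    (B₀ B₁ B₂ : ℝ) (hB₀ : 0 < B₀) (hB₁ : 0 < B₁) (hB₂ : 0 < B₂)
    (hΦ : ContDiff ℝ 3 Φ)
    (hbd₀ : ∀ x, ‖gradient Φ x‖ ≤ B₀)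
    (hbd₁ : ∀ x, ‖fderiv ℝ (gradient Φ) x‖ ≤ B₁)
    (hbd₂ : ∀ x, ‖fderiv ℝ (fderiv ℝ (gradient Φ)) x‖ ≤ B₂)
    (lam a : ℝ) (hlam : lam ∈ Set.Ioo (0:ℝ) 1) (ha : 0 ≤ a)
    (u₀ : EuclideanSpace ℝ (Fin d)) (T : ℝ) (hT : 0 ≤ T) :
    ∃ C : ℝ, 0 < C ∧
      ∀ h : ℝ, 0 < h →
      ∀ (u : ℝ → EuclideanSpace ℝ (Fin d)) (uu : ℕ → EuclideanSpace ℝ (Fin d)),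
        ContDiff ℝ 3 u →
        (∀ t : ℝ, HasDerivAt u (-((1 - lam)⁻¹ • gradient Φ (u t))) t) →
        u 0 = u₀ →
        uu 0 = u₀ →
        uu 1 = uu 0 - h • gradient Φ (uu 0) →
        (∀ n : ℕ, uu (n+2) = uu (n+1) + lam • (uu (n+1) - uu n)
            - h • gradient Φ (uu (n+1) + a • (uu (n+1) - uu n))) →
        ∀ n : ℕ, (n : ℝ) * h ≤ T → ‖u ((n : ℝ) * h) - uu n‖ ≤ C * h := by
  obtain ⟨hl0, hl1⟩ := hlam
  have h1l : (0:ℝ) < 1 - lam := by linarith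
  have hne : (1:ℝ) - lam ≠ 0 := ne_of_gt h1l
  set g : EuclideanSpace ℝ (Fin d) → EuclideanSpace ℝ (Fin d) := gradient Φ with hgdef
  set lb : ℝ := (1 - lam)⁻¹ with hlbdef
  have hlb0 : (0:ℝ) < lb := inv_pos.mpr h1l
  have hlbeq : lam * lb + 1 = lb := by rw [hlbdef]; field_simp; ring
  have hlb1 : (1:ℝ) ≤ lb := by nlinarith
  have hlb' : lb * (1 - lam) = 1 := by rw [hlbdef]; field_simp
  have hlb2 : (1 - lam)⁻¹ * (1 - lam) = 1 := inv_mul_cancel₀ hne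
  -- differentiability and Lipschitz continuity of the gradient
  have hgdiff : Differentiable ℝ g := by
    have h1 : ContDiff ℝ 2 (fderiv ℝ Φ) := hΦ.fderiv_right (by norm_num)
    have h2 : Differentiable ℝ (fderiv ℝ Φ) := h1.differentiable (by norm_num)
    set e0 := (InnerProductSpace.toDual ℝ (EuclideanSpace ℝ (Fin d))).symm with he0
    let eL : StrongDual ℝ (EuclideanSpace ℝ (Fin d)) →L[ℝ]
        EuclideanSpace ℝ (Fin d) :=
      LinearMap.mkContinuous (σ := RingHom.id ℝ)
        { toFun := e0
          map_add' := fun x y => map_add e0 x y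
          map_smul' := fun r x => by
            simpa using e0.map_smulₛₗ r x }
        1 (fun x => by simp [e0.norm_map])
    have : Differentiable ℝ (fun y => eL (fderiv ℝ Φ y)) := eL.differentiable.comp h2
    exact this
  have hLip : ∀ x y, ‖g x - g y‖ ≤ B₁ * ‖x - y‖ := by
    intro x y
    have := convex_univ.norm_image_sub_le_of_norm_fderiv_le (f := g)
      (fun z _ => hgdiff z) (fun z _ => hbd₁ z) (Set.mem_univ y) (Set.mem_univ x)
    simpa using this
  have hK0 : (0:ℝ) ≤ B₀*B₁*(lb*lb)*(a + lam*(1+a)) := by positivity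
  refine ⟨Real.exp (T*(lb*B₁)) *
      (T*(lb*lb*B₁*B₀ + lb*(B₀*B₁*(lb*lb)*(a + lam*(1+a)))) + lb*(lam*lb*B₀)), ?_, ?_⟩
  · have h1 : (0:ℝ) < lb*(lam*lb*B₀) := by positivity
    have h2 : (0:ℝ) ≤ T*(lb*lb*B₁*B₀ + lb*(B₀*B₁*(lb*lb)*(a + lam*(1+a)))) := by positivity
    have h3 := Real.exp_pos (T*(lb*B₁))
    nlinarith
  intro h hh u uu hC3 hu' hu0 huu0 huu1 hrec
  -- Lipschitz bound for the flow in time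
  have hu_lip : ∀ s t : ℝ, ‖u s - u t‖ ≤ (lb*B₀) * |s - t| := by
    intro s t
    have hb : ∀ x : ℝ, x ∈ (Set.univ : Set ℝ) → ‖-(lb • g (u x))‖ ≤ lb*B₀ := by
      intro x _
      rw [norm_neg, norm_smul, Real.norm_eq_abs, abs_of_pos hlb0]
      exact mul_le_mul_of_nonneg_left (hbd₀ _) hlb0.le
    have := convex_univ.norm_image_sub_le_of_norm_hasDerivWithin_le
      (f := u) (f' := fun x => -(lb • g (u x)))
      (fun x _ => (hu' x).hasDerivWithinAt) hb (Set.mem_univ t) (Set.mem_univ s)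
    simpa [Real.norm_eq_abs] using this
  -- Taylor estimate for the flow
  have hTaylor : ∀ t : ℝ, ‖u (t + h) - u t + (h*lb) • g (u t)‖ ≤ (lb*lb*B₁*B₀) * (h*h) := by
    intro t
    have hmem1 : t ∈ Set.Icc t (t + h) := ⟨le_refl t, by linarith⟩
    have hmem2 : t + h ∈ Set.Icc t (t + h) := ⟨by linarith, le_refl _⟩
    have hder : ∀ s ∈ Set.Icc t (t+h),
        HasDerivWithinAt (fun s => u s - s • (-(lb • g (u t))))
          (-(lb • g (u s)) - (-(lb • g (u t)))) (Set.Icc t (t+h)) s := by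
      intro s _
      have h1 : HasDerivAt u (-(lb • g (u s))) s := hu' s
      have h2 : HasDerivAt (fun y : ℝ => y • (-(lb • g (u t)))) (-(lb • g (u t))) s := by
        simpa using (hasDerivAt_id s).smul_const (-(lb • g (u t)))
      exact (h1.sub h2).hasDerivWithinAt
    have hbnd : ∀ s ∈ Set.Icc t (t+h),
        ‖-(lb • g (u s)) - (-(lb • g (u t)))‖ ≤ (lb*lb*B₁*B₀) * h := by
      intro s hs
      have heq : -(lb • g (u s)) - (-(lb • g (u t))) = (-lb) • (g (u s) - g (u t)) := by
        module
      rw [heq, norm_smul, Real.norm_eq_abs, abs_neg, abs_of_pos hlb0]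
      have h1 : ‖g (u s) - g (u t)‖ ≤ B₁ * ‖u s - u t‖ := hLip _ _
      have h2 : ‖u s - u t‖ ≤ (lb*B₀) * |s - t| := hu_lip s t
      have h3 : |s - t| ≤ h := by
        rw [abs_of_nonneg (by linarith [hs.1])]; linarith [hs.2]
      nlinarith [mul_le_mul_of_nonneg_left h1 hlb0.le,
        mul_le_mul_of_nonneg_left h2 (by positivity : (0:ℝ) ≤ lb*B₁),
        mul_le_mul_of_nonneg_left h3 (by positivity : (0:ℝ) ≤ lb*B₁*(lb*B₀))]
    have hmv := Convex.norm_image_sub_le_of_norm_hasDerivWithin_le hder hbnd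
      (convex_Icc _ _) hmem1 hmem2
    have heq2 : (u (t+h) - (t+h) • (-(lb • g (u t)))) - (u t - t • (-(lb • g (u t))))
        = u (t + h) - u t + (h*lb) • g (u t) := by
      match_scalars <;> ring
    rw [show ((t+h) - t) = h by ring] at hmv
    rw [heq2] at hmv
    calc ‖u (t + h) - u t + (h*lb) • g (u t)‖ ≤ (lb*lb*B₁*B₀) * h * ‖h‖ := hmv
      _ = (lb*lb*B₁*B₀) * (h*h) := by
          rw [Real.norm_eq_abs, abs_of_pos hh]; ring
  -- bound on the discrete increments
  have hδbd : ∀ n : ℕ, ‖uu (n+1) - uu n‖ ≤ h * (B₀ * lb) := by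
    intro n
    induction n with
    | zero =>
      rw [huu1]
      have heq : uu 0 - h • g (uu 0) - uu 0 = -(h • g (uu 0)) := by abel
      rw [heq, norm_neg, norm_smul, Real.norm_eq_abs, abs_of_pos hh]
      nlinarith [mul_le_mul_of_nonneg_left (hbd₀ (uu 0)) hh.le,
        mul_nonneg (mul_nonneg hh.le hB₀.le) (by linarith : (0:ℝ) ≤ lb - 1)]
    | succ n ih =>
      have heq : uu (n+2) - uu (n+1)
          = lam • (uu (n+1) - uu n) - h • g (uu (n+1) + a • (uu (n+1) - uu n)) := by
        rw [hrec n]; abel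
      rw [heq]
      refine le_trans (norm_sub_le _ _) ?_
      rw [norm_smul, norm_smul, Real.norm_eq_abs, Real.norm_eq_abs,
        abs_of_pos hl0, abs_of_pos hh]
      have h2 := hbd₀ (uu (n+1) + a • (uu (n+1) - uu n))
      have e1 : lam * ‖uu (n+1) - uu n‖ ≤ lam * (h * (B₀ * lb)) :=
        mul_le_mul_of_nonneg_left ih hl0.le
      have e2 : h * ‖g (uu (n+1) + a • (uu (n+1) - uu n))‖ ≤ h * B₀ :=
        mul_le_mul_of_nonneg_left h2 hh.le
      have e3 : h*B₀*(lam*lb + 1) = h*B₀*lb := by rw [hlbeq]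
      linarith [e1, e2, e3]
  -- bound on the deviation of increments from the rescaled gradient
  have hsbd : ∀ n : ℕ, ‖(uu (n+1) - uu n) + (h*lb) • g (uu n)‖
      ≤ lb*(B₀*B₁*(lb*lb)*(a + lam*(1+a)))*(h*h) + lam^n * ((lam*lb*B₀)*h) := by
    intro n
    induction n with
    | zero =>
      rw [huu1]
      have heq : (uu 0 - h • g (uu 0) - uu 0) + (h*lb) • g (uu 0)
          = (h*lb - h) • g (uu 0) := by
        match_scalars <;> ring
      rw [heq, norm_smul, Real.norm_eq_abs]
      have h1 : h*lb - h = h*(lam*lb) := by linear_combination (-h) * hlbeq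
      rw [h1, abs_of_nonneg (by positivity)]
      simp only [pow_zero, one_mul]
      linarith [mul_le_mul_of_nonneg_left (hbd₀ (uu 0)) (by positivity : (0:ℝ) ≤ h*(lam*lb)),
        (by positivity : (0:ℝ) ≤ lb*(B₀*B₁*(lb*lb)*(a + lam*(1+a)))*(h*h))]
    | succ n ih =>
      have heq : (uu (n+2) - uu (n+1)) + (h*lb) • g (uu (n+1))
          = lam • ((uu (n+1) - uu n) + (h*lb) • g (uu n))
            + h • (lb • (g (uu (n+1)) - g (uu (n+1) + a • (uu (n+1) - uu n)))
                   + (lam*lb) • (g (uu (n+1) + a • (uu (n+1) - uu n)) - g (uu n))) := by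
        rw [hrec n]
        match_scalars <;> (try ring) <;> (try simp only [hlbdef]) <;>
          (try field_simp) <;> (try ring)
      rw [heq]
      refine le_trans (norm_add_le _ _) ?_
      have e1 : ‖lam • ((uu (n+1) - uu n) + (h*lb) • g (uu n))‖
          = lam * ‖(uu (n+1) - uu n) + (h*lb) • g (uu n)‖ := by
        rw [norm_smul, Real.norm_eq_abs, abs_of_pos hl0]
      -- bound the bracket
      have hv1 : uu (n+1) - (uu (n+1) + a • (uu (n+1) - uu n))
          = -(a • (uu (n+1) - uu n)) := by abel
      have hw1 : ‖g (uu (n+1)) - g (uu (n+1) + a • (uu (n+1) - uu n))‖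
          ≤ B₁ * (a * (h * (B₀ * lb))) := by
        refine le_trans (hLip _ _) ?_
        rw [hv1, norm_neg, norm_smul, Real.norm_eq_abs, abs_of_nonneg ha]
        gcongr
        exact hδbd n
      have hv2 : (uu (n+1) + a • (uu (n+1) - uu n)) - uu n
          = (1+a) • (uu (n+1) - uu n) := by
        match_scalars <;> ring
      have hw2 : ‖g (uu (n+1) + a • (uu (n+1) - uu n)) - g (uu n)‖
          ≤ B₁ * ((1+a) * (h * (B₀ * lb))) := by
        refine le_trans (hLip _ _) ?_
        rw [hv2, norm_smul, Real.norm_eq_abs, abs_of_nonneg (by linarith : (0:ℝ) ≤ 1 + a)]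
        gcongr
        exact hδbd n
      have hwbd : ‖lb • (g (uu (n+1)) - g (uu (n+1) + a • (uu (n+1) - uu n)))
                   + (lam*lb) • (g (uu (n+1) + a • (uu (n+1) - uu n)) - g (uu n))‖
          ≤ h * (B₀*B₁*(lb*lb)*(a + lam*(1+a))) := by
        refine le_trans (norm_add_le _ _) ?_
        rw [norm_smul, norm_smul, Real.norm_eq_abs, Real.norm_eq_abs,
          abs_of_pos hlb0, abs_of_pos (by positivity : (0:ℝ) < lam*lb)]
        calc lb * ‖g (uu (n+1)) - g (uu (n+1) + a • (uu (n+1) - uu n))‖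
              + lam*lb * ‖g (uu (n+1) + a • (uu (n+1) - uu n)) - g (uu n)‖
            ≤ lb * (B₁ * (a * (h * (B₀ * lb)))) + lam*lb * (B₁ * ((1+a) * (h * (B₀ * lb)))) := by
              refine add_le_add (mul_le_mul_of_nonneg_left hw1 hlb0.le)
                (mul_le_mul_of_nonneg_left hw2 (by positivity))
          _ = h * (B₀*B₁*(lb*lb)*(a + lam*(1+a))) := by ring
      rw [e1]
      have e2 : ‖h • (lb • (g (uu (n+1)) - g (uu (n+1) + a • (uu (n+1) - uu n)))
                   + (lam*lb) • (g (uu (n+1) + a • (uu (n+1) - uu n)) - g (uu n)))‖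
          ≤ h * (h * (B₀*B₁*(lb*lb)*(a + lam*(1+a)))) := by
        rw [norm_smul, Real.norm_eq_abs, abs_of_pos hh]
        exact mul_le_mul_of_nonneg_left hwbd hh.le
      have e3 : lam * ‖(uu (n+1) - uu n) + (h*lb) • g (uu n)‖
          ≤ lam * (lb*(B₀*B₁*(lb*lb)*(a + lam*(1+a)))*(h*h) + lam^n * ((lam*lb*B₀)*h)) :=
        mul_le_mul_of_nonneg_left ih hl0.le
      have e4 : (lam*lb + 1) * ((B₀*B₁*(lb*lb)*(a + lam*(1+a)))*(h*h))
          = lb * ((B₀*B₁*(lb*lb)*(a + lam*(1+a)))*(h*h)) := by rw [hlbeq]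
      have e5 : lam * (lam^n * ((lam*lb*B₀)*h)) = lam^(n+1) * ((lam*lb*B₀)*h) := by ring
      linarith [e2, e3, e4, e5]
  -- main error recursion (discrete Gronwall)
  have herr : ∀ n : ℕ, ‖u ((n:ℝ)*h) - uu n‖
      ≤ (1 + h*(lb*B₁))^n *
        (((n:ℝ)*((lb*lb*B₁*B₀ + lb*(B₀*B₁*(lb*lb)*(a + lam*(1+a))))*h)
          + lb*(1-lam^n)*(lam*lb*B₀)) * h) := by
    intro n
    induction n with
    | zero => simp [hu0, huu0]
    | succ n ih =>
      have hcast : ((n+1 : ℕ):ℝ) * h = (n:ℝ)*h + h := by push_cast; ring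
      rw [hcast]
      have hsplit : u ((n:ℝ)*h + h) - uu (n+1)
          = (u ((n:ℝ)*h + h) - u ((n:ℝ)*h) + (h*lb) • g (u ((n:ℝ)*h)))
            + (u ((n:ℝ)*h) - uu n)
            - ((uu (n+1) - uu n) + (h*lb) • g (uu n))
            + (h*lb) • (g (uu n) - g (u ((n:ℝ)*h))) := by
        rw [smul_sub]; abel
      rw [hsplit]
      have hb1 := hTaylor ((n:ℝ)*h)
      have hb3 := hsbd n
      have hb4 : ‖(h*lb) • (g (uu n) - g (u ((n:ℝ)*h)))‖
          ≤ (h*lb) * (B₁ * ‖u ((n:ℝ)*h) - uu n‖) := by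
        rw [norm_smul, Real.norm_eq_abs, abs_of_pos (by positivity : (0:ℝ) < h*lb)]
        refine mul_le_mul_of_nonneg_left ?_ (by positivity)
        calc ‖g (uu n) - g (u ((n:ℝ)*h))‖ ≤ B₁ * ‖uu n - u ((n:ℝ)*h)‖ := hLip _ _
          _ = B₁ * ‖u ((n:ℝ)*h) - uu n‖ := by rw [norm_sub_rev]
      have hchain : ‖(u ((n:ℝ)*h + h) - u ((n:ℝ)*h) + (h*lb) • g (u ((n:ℝ)*h)))
            + (u ((n:ℝ)*h) - uu n)
            - ((uu (n+1) - uu n) + (h*lb) • g (uu n))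
            + (h*lb) • (g (uu n) - g (u ((n:ℝ)*h)))‖
          ≤ ‖u ((n:ℝ)*h + h) - u ((n:ℝ)*h) + (h*lb) • g (u ((n:ℝ)*h))‖
            + ‖u ((n:ℝ)*h) - uu n‖
            + ‖(uu (n+1) - uu n) + (h*lb) • g (uu n)‖
            + ‖(h*lb) • (g (uu n) - g (u ((n:ℝ)*h)))‖ := by
        refine le_trans (norm_add_le _ _) ?_
        gcongr
        refine le_trans (norm_sub_le _ _) ?_
        gcongr
        exact norm_add_le _ _
      -- numeric assembly
      have hP1 : (1:ℝ) ≤ 1 + h*(lb*B₁) := by nlinarith [mul_pos hh (mul_pos hlb0 hB₁)]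
      have hPn1 : (1:ℝ) ≤ (1 + h*(lb*B₁))^(n+1) := by
        calc (1:ℝ) = 1^(n+1) := (one_pow _).symm
          _ ≤ (1 + h*(lb*B₁))^(n+1) := pow_le_pow_left₀ (by norm_num) hP1 _
      have hgeo : lb*(1-lam^(n+1))*(lam*lb*B₀)
          = lb*(1-lam^n)*(lam*lb*B₀) + lam^n*(lam*lb*B₀) := by
        linear_combination (lam*lb*B₀*lam^n) * hlb'
      have hih : (1 + h*(lb*B₁)) * ‖u ((n:ℝ)*h) - uu n‖
          ≤ (1 + h*(lb*B₁))^(n+1) *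
            (((n:ℝ)*((lb*lb*B₁*B₀ + lb*(B₀*B₁*(lb*lb)*(a + lam*(1+a))))*h)
              + lb*(1-lam^n)*(lam*lb*B₀)) * h) := by
        rw [pow_succ]
        calc (1 + h*(lb*B₁)) * ‖u ((n:ℝ)*h) - uu n‖
            ≤ (1 + h*(lb*B₁)) * ((1 + h*(lb*B₁))^n *
              (((n:ℝ)*((lb*lb*B₁*B₀ + lb*(B₀*B₁*(lb*lb)*(a + lam*(1+a))))*h)
                + lb*(1-lam^n)*(lam*lb*B₀)) * h)) :=
              mul_le_mul_of_nonneg_left ih (by positivity)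
          _ = (1 + h*(lb*B₁))^n * (1 + h*(lb*B₁)) *
              (((n:ℝ)*((lb*lb*B₁*B₀ + lb*(B₀*B₁*(lb*lb)*(a + lam*(1+a))))*h)
                + lb*(1-lam^n)*(lam*lb*B₀)) * h) := by ring
      have hrest : (lb*lb*B₁*B₀)*(h*h)
            + (lb*(B₀*B₁*(lb*lb)*(a + lam*(1+a)))*(h*h) + lam^n * ((lam*lb*B₀)*h))
          ≤ (1 + h*(lb*B₁))^(n+1) *
            (((lb*lb*B₁*B₀ + lb*(B₀*B₁*(lb*lb)*(a + lam*(1+a))))*h + lam^n*(lam*lb*B₀)) * h) := by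
        have hnn : (0:ℝ) ≤ ((lb*lb*B₁*B₀ + lb*(B₀*B₁*(lb*lb)*(a + lam*(1+a))))*h
            + lam^n*(lam*lb*B₀)) * h := by
          have := pow_nonneg hl0.le n
          positivity
        calc (lb*lb*B₁*B₀)*(h*h)
              + (lb*(B₀*B₁*(lb*lb)*(a + lam*(1+a)))*(h*h) + lam^n * ((lam*lb*B₀)*h))
            = ((lb*lb*B₁*B₀ + lb*(B₀*B₁*(lb*lb)*(a + lam*(1+a))))*h + lam^n*(lam*lb*B₀)) * h := by
              ring
          _ ≤ (1 + h*(lb*B₁))^(n+1) *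
              (((lb*lb*B₁*B₀ + lb*(B₀*B₁*(lb*lb)*(a + lam*(1+a))))*h + lam^n*(lam*lb*B₀)) * h) :=
              le_mul_of_one_le_left hnn hPn1
      have hfin : ‖u ((n:ℝ)*h + h) - u ((n:ℝ)*h) + (h*lb) • g (u ((n:ℝ)*h))‖
            + ‖u ((n:ℝ)*h) - uu n‖
            + ‖(uu (n+1) - uu n) + (h*lb) • g (uu n)‖
            + ‖(h*lb) • (g (uu n) - g (u ((n:ℝ)*h)))‖
          ≤ (1 + h*(lb*B₁))^(n+1) *
            ((((n:ℕ):ℝ)+1)*((lb*lb*B₁*B₀ + lb*(B₀*B₁*(lb*lb)*(a + lam*(1+a))))*h)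
              + lb*(1-lam^(n+1))*(lam*lb*B₀)) * h := by
        have expand : (1 + h*(lb*B₁))^(n+1) *
            ((((n:ℕ):ℝ)+1)*((lb*lb*B₁*B₀ + lb*(B₀*B₁*(lb*lb)*(a + lam*(1+a))))*h)
              + lb*(1-lam^(n+1))*(lam*lb*B₀)) * h
            = (1 + h*(lb*B₁))^(n+1) *
              (((n:ℝ)*((lb*lb*B₁*B₀ + lb*(B₀*B₁*(lb*lb)*(a + lam*(1+a))))*h)
                + lb*(1-lam^n)*(lam*lb*B₀)) * h)
              + (1 + h*(lb*B₁))^(n+1) *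
              (((lb*lb*B₁*B₀ + lb*(B₀*B₁*(lb*lb)*(a + lam*(1+a))))*h + lam^n*(lam*lb*B₀)) * h) := by
          rw [hgeo]; ring
        rw [expand]
        linarith [hb1, hb3, hb4, hih, hrest]
      calc ‖(u ((n:ℝ)*h + h) - u ((n:ℝ)*h) + (h*lb) • g (u ((n:ℝ)*h)))
            + (u ((n:ℝ)*h) - uu n)
            - ((uu (n+1) - uu n) + (h*lb) • g (uu n))
            + (h*lb) • (g (uu n) - g (u ((n:ℝ)*h)))‖
          ≤ ‖u ((n:ℝ)*h + h) - u ((n:ℝ)*h) + (h*lb) • g (u ((n:ℝ)*h))‖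
            + ‖u ((n:ℝ)*h) - uu n‖
            + ‖(uu (n+1) - uu n) + (h*lb) • g (uu n)‖
            + ‖(h*lb) • (g (uu n) - g (u ((n:ℝ)*h)))‖ := hchain
        _ ≤ (1 + h*(lb*B₁))^(n+1) *
            ((((n:ℕ):ℝ)+1)*((lb*lb*B₁*B₀ + lb*(B₀*B₁*(lb*lb)*(a + lam*(1+a))))*h)
              + lb*(1-lam^(n+1))*(lam*lb*B₀)) * h := hfin
        _ = (1 + h*(lb*B₁))^(n+1) *
            (((((n:ℕ)+1 : ℕ):ℝ))*((lb*lb*B₁*B₀ + lb*(B₀*B₁*(lb*lb)*(a + lam*(1+a))))*h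
              ) + lb*(1-lam^(n+1))*(lam*lb*B₀)) * h := by push_cast; ring
        _ = (1 + h*(lb*B₁))^(n+1) *
            ((((n+1 : ℕ):ℝ)*((lb*lb*B₁*B₀ + lb*(B₀*B₁*(lb*lb)*(a + lam*(1+a))))*h)
              + lb*(1-lam^(n+1))*(lam*lb*B₀)) * h) := by ring
  -- conclusion
  intro n hn
  have hEn := herr n
  have hLnn : (0:ℝ) ≤ lb*B₁ := by positivity
  have hP : (1 + h*(lb*B₁))^n ≤ Real.exp (T*(lb*B₁)) := by
    calc (1 + h*(lb*B₁))^n ≤ (Real.exp (h*(lb*B₁)))^n := by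
          refine pow_le_pow_left₀ (by nlinarith) ?_ n
          linarith [Real.add_one_le_exp (h*(lb*B₁))]
      _ = Real.exp ((n:ℝ)*(h*(lb*B₁))) := (Real.exp_nat_mul _ n).symm
      _ ≤ Real.exp (T*(lb*B₁)) := by
          rw [Real.exp_le_exp]
          calc (n:ℝ)*(h*(lb*B₁)) = ((n:ℝ)*h)*(lb*B₁) := by ring
            _ ≤ T*(lb*B₁) := mul_le_mul_of_nonneg_right hn hLnn
  have hlamn0 : (0:ℝ) ≤ lam^n := pow_nonneg hl0.le n
  have hlamn1 : lam^n ≤ 1 := pow_le_one₀ hl0.le hl1.le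
  have hS : (n:ℝ)*((lb*lb*B₁*B₀ + lb*(B₀*B₁*(lb*lb)*(a + lam*(1+a))))*h)
        + lb*(1-lam^n)*(lam*lb*B₀)
      ≤ T*(lb*lb*B₁*B₀ + lb*(B₀*B₁*(lb*lb)*(a + lam*(1+a)))) + lb*(lam*lb*B₀) := by
    have h1 : (n:ℝ)*((lb*lb*B₁*B₀ + lb*(B₀*B₁*(lb*lb)*(a + lam*(1+a))))*h)
        = ((n:ℝ)*h)*(lb*lb*B₁*B₀ + lb*(B₀*B₁*(lb*lb)*(a + lam*(1+a)))) := by ring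
    have h2 : (0:ℝ) ≤ lb*lb*B₁*B₀ + lb*(B₀*B₁*(lb*lb)*(a + lam*(1+a))) := by positivity
    have h3 : ((n:ℝ)*h)*(lb*lb*B₁*B₀ + lb*(B₀*B₁*(lb*lb)*(a + lam*(1+a))))
        ≤ T*(lb*lb*B₁*B₀ + lb*(B₀*B₁*(lb*lb)*(a + lam*(1+a)))) :=
      mul_le_mul_of_nonneg_right hn h2
    nlinarith [mul_pos (mul_pos hl0 hlb0) hB₀, mul_pos hlb0 (mul_pos (mul_pos hl0 hlb0) hB₀)]
  have hSnn : (0:ℝ) ≤ (n:ℝ)*((lb*lb*B₁*B₀ + lb*(B₀*B₁*(lb*lb)*(a + lam*(1+a))))*h)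
        + lb*(1-lam^n)*(lam*lb*B₀) := by
    have : (0:ℝ) ≤ 1 - lam^n := by linarith
    positivity
  calc ‖u ((n:ℝ)*h) - uu n‖
      ≤ (1 + h*(lb*B₁))^n *
        (((n:ℝ)*((lb*lb*B₁*B₀ + lb*(B₀*B₁*(lb*lb)*(a + lam*(1+a))))*h)
          + lb*(1-lam^n)*(lam*lb*B₀)) * h) := hEn
    _ ≤ Real.exp (T*(lb*B₁)) *
        ((T*(lb*lb*B₁*B₀ + lb*(B₀*B₁*(lb*lb)*(a + lam*(1+a)))) + lb*(lam*lb*B₀)) * h) := by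
        refine mul_le_mul hP ?_ (by positivity) (Real.exp_pos _).le
        exact mul_le_mul_of_nonneg_right hS hh.le
    _ = Real.exp (T*(lb*B₁)) *
        (T*(lb*lb*B₁*B₀ + lb*(B₀*B₁*(lb*lb)*(a + lam*(1+a)))) + lb*(lam*lb*B₀)) * h := by ring
end

section
/- Fix λ ∈ (0,1) and a ≥ 0. There exists τ > 0 such that for all h ∈ (0, τ) there is a unique g ∈ Γ(γ,δ) with the invariance property: for the two-step form of the momentum method, 𝗎ₙ₊₁ = 𝗎ₙ + hλ𝗏ₙ + h f(𝗎ₙ + ha𝗏ₙ), 𝗏ₙ₊₁ = λ𝗏ₙ + f(𝗎ₙ + ha𝗏ₙ), one has 𝗏ₙ = λ̄ f(𝗎ₙ) + h g(𝗎ₙ) if and only if 𝗏ₙ₊₁ = λ̄ f(𝗎ₙ₊₁) + h g(𝗎ₙ₊₁). -/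
open Function NNReal BoundedContinuousFunction

section Q
variable {E : Type*} [NormedAddCommGroup E] [NormedSpace ℝ E]

lemma nsmIM {c : ℝ} (hc : 0 ≤ c) (x : E) : ‖c • x‖ = c * ‖x‖ := by
  rw [norm_smul, Real.norm_eq_abs, abs_of_nonneg hc]

variable (f : E → E) (lam a h : ℝ)

noncomputable def vmIM (g : E → E) (u : E) : E := (1 - lam)⁻¹ • f u + h • g u

noncomputable def wmIM (g : E → E) (u : E) : E := u + (h * a) • vmIM f lam h g u

noncomputable def GmIM (g : E → E) (u : E) : E :=
  lam • vmIM f lam h g u + f (wmIM f lam a h g u)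

noncomputable def PsiIM (g : E → E) (u : E) : E := u + h • GmIM f lam a h g u

noncomputable def RmIM (g : E → E) (u : E) : E :=
  h⁻¹ • ((f (wmIM f lam a h g u) - f u)
    - (1 - lam)⁻¹ • (f (PsiIM f lam a h g u) - f u))

noncomputable def PhiIM [Nonempty E] (g : E → E) (y : E) : E :=
  invFun (PsiIM f lam a h g) y

noncomputable def TmapIM [Nonempty E] (g : E → E) (y : E) : E :=
  lam • g (PhiIM f lam a h g y) + RmIM f lam a h g (PhiIM f lam a h g y)

lemma PsiIM_eq (g : E → E) (u : E) :
    PsiIM f lam a h g u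
      = u + (h * lam) • vmIM f lam h g u + h • f (wmIM f lam a h g u) := by
  simp only [PsiIM, GmIM, smul_add, smul_smul, add_assoc]

lemma key_identity (hh : h ≠ 0) (hl1 : 1 - lam ≠ 0) (g : E → E) (u : E) :
    h • (lam • g u + RmIM f lam a h g u)
      = lam • vmIM f lam h g u + f (wmIM f lam a h g u)
        - (1 - lam)⁻¹ • f (PsiIM f lam a h g u) := by
  simp only [RmIM, vmIM]
  match_scalars <;> field_simp <;> ring

lemma invariance_iff (hh : h ≠ 0) (hl1 : 1 - lam ≠ 0) (g : E → E) (u : E) :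
    (lam • vmIM f lam h g u + f (wmIM f lam a h g u)
        = (1 - lam)⁻¹ • f (PsiIM f lam a h g u) + h • g (PsiIM f lam a h g u))
      ↔ g (PsiIM f lam a h g u) = lam • g u + RmIM f lam a h g u := by
  constructor
  · intro hE
    have h2 : h • g (PsiIM f lam a h g u) = h • (lam • g u + RmIM f lam a h g u) := by
      rw [key_identity f lam a h hh hl1, hE]; abel
    exact (smul_right_injective E hh h2)
  · intro hE
    rw [hE, key_identity f lam a h hh hl1]; abel

lemma vmIM_sub (g₁ g₂ : E → E) (u u' : E) :
    vmIM f lam h g₁ u - vmIM f lam h g₂ u'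
      = (1 - lam)⁻¹ • (f u - f u') + h • (g₁ u - g₂ u') := by
  simp only [vmIM]; module

lemma wmIM_sub (g₁ g₂ : E → E) (u u' : E) :
    wmIM f lam a h g₁ u - wmIM f lam a h g₂ u'
      = (u - u') + (h * a) • (vmIM f lam h g₁ u - vmIM f lam h g₂ u') := by
  simp only [wmIM]; module

lemma GmIM_sub (g₁ g₂ : E → E) (u u' : E) :
    GmIM f lam a h g₁ u - GmIM f lam a h g₂ u'
      = lam • (vmIM f lam h g₁ u - vmIM f lam h g₂ u')
        + (f (wmIM f lam a h g₁ u) - f (wmIM f lam a h g₂ u')) := by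
  simp only [GmIM]; module

lemma PsiIM_sub (g₁ g₂ : E → E) (u u' : E) :
    PsiIM f lam a h g₁ u - PsiIM f lam a h g₂ u'
      = (u - u') + h • (GmIM f lam a h g₁ u - GmIM f lam a h g₂ u') := by
  simp only [PsiIM]; module

lemma RmIM_sub (g₁ g₂ : E → E) (u u' : E) :
    RmIM f lam a h g₁ u - RmIM f lam a h g₂ u'
      = h⁻¹ • (((f (wmIM f lam a h g₁ u) - f u) - (f (wmIM f lam a h g₂ u') - f u'))
          - (1 - lam)⁻¹ • ((f (PsiIM f lam a h g₁ u) - f u)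
              - (f (PsiIM f lam a h g₂ u') - f u'))) := by
  simp only [RmIM]; module

variable {B₀ B₁ B₂ L M N MG LG γ δ D : ℝ}

lemma vm_bound (hh0 : 0 < h) (hL : 0 < L) (hLdef : L = (1 - lam)⁻¹)
    (hbd₀ : ∀ x, ‖f x‖ ≤ B₀) (hγ1 : h * γ ≤ 1) (hMdef : M = L * B₀ + 1)
    (g : E → E) (hgb : ∀ x, ‖g x‖ ≤ γ) :
    ∀ u, ‖vmIM f lam h g u‖ ≤ M := by
  intro u
  show ‖(1 - lam)⁻¹ • f u + h • g u‖ ≤ M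
  refine (norm_add_le _ _).trans ?_
  rw [← hLdef, nsmIM hL.le (f u), nsmIM hh0.le (g u), hMdef]
  have e1 : L * ‖f u‖ ≤ L * B₀ := mul_le_mul_of_nonneg_left (hbd₀ u) hL.le
  have e2 : h * ‖g u‖ ≤ h * γ := mul_le_mul_of_nonneg_left (hgb u) hh0.le
  linarith

lemma vm_lip (hh0 : 0 < h) (hL : 0 < L) (hLdef : L = (1 - lam)⁻¹)
    (hlipf : ∀ x y, ‖f x - f y‖ ≤ B₁ * ‖x - y‖) (hδ1 : h * δ ≤ 1)
    (hNdef : N = L * B₁ + 1)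
    (g : E → E) (hgl : ∀ x y, ‖g x - g y‖ ≤ δ * ‖x - y‖) :
    ∀ u u', ‖vmIM f lam h g u - vmIM f lam h g u'‖ ≤ N * ‖u - u'‖ := by
  intro u u'
  rw [vmIM_sub]
  refine (norm_add_le _ _).trans ?_
  rw [← hLdef, nsmIM hL.le _, nsmIM hh0.le _, hNdef]
  have e1 : L * ‖f u - f u'‖ ≤ L * (B₁ * ‖u - u'‖) :=
    mul_le_mul_of_nonneg_left (hlipf u u') hL.le
  have e2 : h * ‖g u - g u'‖ ≤ h * (δ * ‖u - u'‖) :=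
    mul_le_mul_of_nonneg_left (hgl u u') hh0.le
  have e3 : h * (δ * ‖u - u'‖) ≤ 1 * ‖u - u'‖ := by
    rw [← mul_assoc]
    exact mul_le_mul_of_nonneg_right hδ1 (norm_nonneg _)
  nlinarith [norm_nonneg (u - u')]

lemma Gm_bound (hlam0 : 0 < lam) (hbd₀ : ∀ x, ‖f x‖ ≤ B₀) (hMGdef : MG = lam * M + B₀)
    (g : E → E) (hvb : ∀ u, ‖vmIM f lam h g u‖ ≤ M) :
    ∀ u, ‖GmIM f lam a h g u‖ ≤ MG := by
  intro u
  show ‖lam • vmIM f lam h g u + f (wmIM f lam a h g u)‖ ≤ MG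
  refine (norm_add_le _ _).trans ?_
  rw [nsmIM hlam0.le _, hMGdef]
  have e1 : lam * ‖vmIM f lam h g u‖ ≤ lam * M :=
    mul_le_mul_of_nonneg_left (hvb u) hlam0.le
  linarith [hbd₀ (wmIM f lam a h g u)]

lemma wm_lip (hh0 : 0 < h) (h1 : h ≤ 1) (ha : 0 ≤ a) (hN : 0 < N)
    (g : E → E) (hvl : ∀ u u', ‖vmIM f lam h g u - vmIM f lam h g u'‖ ≤ N * ‖u - u'‖) :
    ∀ u u', ‖wmIM f lam a h g u - wmIM f lam a h g u'‖ ≤ (1 + a * N) * ‖u - u'‖ := by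
  intro u u'
  rw [wmIM_sub]
  refine (norm_add_le _ _).trans ?_
  rw [nsmIM (by positivity) _]
  have e3 : h * a * ‖vmIM f lam h g u - vmIM f lam h g u'‖ ≤ h * a * (N * ‖u - u'‖) :=
    mul_le_mul_of_nonneg_left (hvl u u') (by positivity)
  nlinarith [norm_nonneg (u - u'),
    mul_nonneg (mul_nonneg ha hN.le) (norm_nonneg (u - u')),
    mul_le_mul_of_nonneg_right h1
      (mul_nonneg (mul_nonneg ha hN.le) (norm_nonneg (u - u')))]

lemma Gm_lip (hh0 : 0 < h) (h1 : h ≤ 1) (hlam0 : 0 < lam) (ha : 0 ≤ a) (hN : 0 < N)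
    (hB₁ : 0 < B₁) (hlipf : ∀ x y, ‖f x - f y‖ ≤ B₁ * ‖x - y‖)
    (hLGdef : LG = lam * N + B₁ * (1 + a * N))
    (g : E → E) (hvl : ∀ u u', ‖vmIM f lam h g u - vmIM f lam h g u'‖ ≤ N * ‖u - u'‖) :
    ∀ u u', ‖GmIM f lam a h g u - GmIM f lam a h g u'‖ ≤ LG * ‖u - u'‖ := by
  intro u u'
  rw [GmIM_sub]
  refine (norm_add_le _ _).trans ?_
  rw [nsmIM hlam0.le _, hLGdef]
  have e1 : lam * ‖vmIM f lam h g u - vmIM f lam h g u'‖ ≤ lam * (N * ‖u - u'‖) :=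
    mul_le_mul_of_nonneg_left (hvl u u') hlam0.le
  have e2 := wm_lip f lam a h hh0 h1 ha hN g hvl u u'
  have e4 : ‖f (wmIM f lam a h g u) - f (wmIM f lam a h g u')‖
      ≤ B₁ * ((1 + a * N) * ‖u - u'‖) :=
    (hlipf _ _).trans (mul_le_mul_of_nonneg_left e2 hB₁.le)
  nlinarith [norm_nonneg (u - u')]

lemma Psi_exp (hh0 : 0 < h) (hlam0 : 0 < lam) (hLG : 0 < LG)
    (hLGs : h * LG ≤ (1 - lam) / 2)
    (g : E → E)
    (hGl : ∀ u u', ‖GmIM f lam a h g u - GmIM f lam a h g u'‖ ≤ LG * ‖u - u'‖) :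
    ∀ u u', (1 + lam) / 2 * ‖u - u'‖ ≤ ‖PsiIM f lam a h g u - PsiIM f lam a h g u'‖ := by
  intro u u'
  have e0 : u - u' = (PsiIM f lam a h g u - PsiIM f lam a h g u')
      - h • (GmIM f lam a h g u - GmIM f lam a h g u') := by
    rw [PsiIM_sub]; abel
  have e1 : ‖u - u'‖ ≤ ‖PsiIM f lam a h g u - PsiIM f lam a h g u'‖
      + h * ‖GmIM f lam a h g u - GmIM f lam a h g u'‖ := by
    rw [e0]
    refine (norm_sub_le _ _).trans ?_
    rw [nsmIM hh0.le]
  have e2 : h * ‖GmIM f lam a h g u - GmIM f lam a h g u'‖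
      ≤ (1 - lam) / 2 * ‖u - u'‖ := by
    have := mul_le_mul_of_nonneg_left (hGl u u') hh0.le
    have e3 : h * (LG * ‖u - u'‖) ≤ (1 - lam) / 2 * ‖u - u'‖ := by
      rw [← mul_assoc]
      exact mul_le_mul_of_nonneg_right hLGs (norm_nonneg _)
    linarith
  linarith

lemma Psi_inj (hh0 : 0 < h) (hlam0 : 0 < lam) (hLG : 0 < LG)
    (hLGs : h * LG ≤ (1 - lam) / 2)
    (g : E → E)
    (hGl : ∀ u u', ‖GmIM f lam a h g u - GmIM f lam a h g u'‖ ≤ LG * ‖u - u'‖) :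
    Injective (PsiIM f lam a h g) := by
  intro u u' he
  have := Psi_exp f lam a h hh0 hlam0 hLG hLGs g hGl u u'
  rw [he, sub_self, norm_zero] at this
  have hn : ‖u - u'‖ ≤ 0 := by nlinarith [norm_nonneg (u - u')]
  have := le_antisymm hn (norm_nonneg _)
  rwa [norm_sub_eq_zero_iff] at this

lemma Psi_surj [CompleteSpace E] [Nonempty E] (hh0 : 0 < h) (hlam0 : 0 < lam)
    (hLG : 0 < LG) (hLGs : h * LG ≤ (1 - lam) / 2)
    (g : E → E)
    (hGl : ∀ u u', ‖GmIM f lam a h g u - GmIM f lam a h g u'‖ ≤ LG * ‖u - u'‖) :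
    ∀ y, ∃ u, PsiIM f lam a h g u = y := by
  intro y
  set c : E → E := fun u => y - h • GmIM f lam a h g u with hc
  have hlip : LipschitzWith (1/2 : ℝ≥0) c := by
    apply LipschitzWith.of_dist_le_mul
    intro u u'
    rw [dist_eq_norm, dist_eq_norm]
    have e0 : c u - c u' = -(h • (GmIM f lam a h g u - GmIM f lam a h g u')) := by
      rw [hc]; simp only [smul_sub]; abel
    rw [e0, norm_neg, nsmIM hh0.le]
    have e1 : h * ‖GmIM f lam a h g u - GmIM f lam a h g u'‖
        ≤ (1 - lam) / 2 * ‖u - u'‖ := by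
      have := mul_le_mul_of_nonneg_left (hGl u u') hh0.le
      have e3 : h * (LG * ‖u - u'‖) ≤ (1 - lam) / 2 * ‖u - u'‖ := by
        rw [← mul_assoc]
        exact mul_le_mul_of_nonneg_right hLGs (norm_nonneg _)
      linarith
    have e2 : ((1/2 : ℝ≥0) : ℝ) = 1/2 := by norm_num
    rw [e2]
    nlinarith [norm_nonneg (u - u')]
  have hcon : ContractingWith (1/2 : ℝ≥0) c := ⟨by rw [← NNReal.coe_lt_coe]; norm_num, hlip⟩
  refine ⟨ContractingWith.fixedPoint c hcon, ?_⟩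
  have hfix' : y - h • GmIM f lam a h g (ContractingWith.fixedPoint c hcon)
      = ContractingWith.fixedPoint c hcon := hcon.fixedPoint_isFixedPt
  set u₀ := ContractingWith.fixedPoint c hcon
  show u₀ + h • GmIM f lam a h g u₀ = y
  have h2 := congrArg (· + h • GmIM f lam a h g u₀) hfix'
  simp only [sub_add_cancel] at h2
  exact h2.symm

lemma incr_diff {f : E → E} {B₁ B₂ : ℝ}
    (hlipf : ∀ x y, ‖f x - f y‖ ≤ B₁ * ‖x - y‖)
    (hA : ∀ s x y, ‖(f (x + s) - f x) - (f (y + s) - f y)‖ ≤ B₂ * ‖s‖ * ‖x - y‖)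
    (s s' : E) (u u' : E) :
    ‖(f (u + s) - f u) - (f (u' + s') - f u')‖
      ≤ B₂ * ‖s‖ * ‖u - u'‖ + B₁ * ‖s - s'‖ := by
  have e : (f (u + s) - f u) - (f (u' + s') - f u')
      = ((f (u + s) - f u) - (f (u' + s) - f u')) + (f (u' + s) - f (u' + s')) := by
    abel
  rw [e]
  refine (norm_add_le _ _).trans (add_le_add (hA s u u') ?_)
  have := hlipf (u' + s) (u' + s')
  simpa [add_sub_add_left_eq_sub] using this

lemma Psi_Phi [Nonempty E] (g : E → E)
    (hsurj : ∀ y, ∃ u, PsiIM f lam a h g u = y) :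
    ∀ y, PsiIM f lam a h g (PhiIM f lam a h g y) = y :=
  fun y => invFun_eq (hsurj y)

lemma Phi_Psi [Nonempty E] (g : E → E) (hinj : Injective (PsiIM f lam a h g)) :
    ∀ u, PhiIM f lam a h g (PsiIM f lam a h g u) = u :=
  fun u => leftInverse_invFun hinj u

lemma Phi_lip [Nonempty E] (hlam0 : 0 < lam) (g : E → E)
    (hexp : ∀ u u', (1 + lam) / 2 * ‖u - u'‖
      ≤ ‖PsiIM f lam a h g u - PsiIM f lam a h g u'‖)
    (hPsiPhi : ∀ y, PsiIM f lam a h g (PhiIM f lam a h g y) = y) :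
    ∀ y y', ‖PhiIM f lam a h g y - PhiIM f lam a h g y'‖ ≤ 2 / (1 + lam) * ‖y - y'‖ := by
  intro y y'
  have he := hexp (PhiIM f lam a h g y) (PhiIM f lam a h g y')
  rw [hPsiPhi y, hPsiPhi y'] at he
  have h2 : (0:ℝ) < 2 / (1 + lam) := by positivity
  have h3 := mul_le_mul_of_nonneg_left he h2.le
  have h4 : 2 / (1 + lam) * ((1 + lam) / 2 * ‖PhiIM f lam a h g y - PhiIM f lam a h g y'‖)
      = ‖PhiIM f lam a h g y - PhiIM f lam a h g y'‖ := by
    have : (1:ℝ) + lam ≠ 0 := by linarith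
    field_simp
  rw [h4] at h3
  exact h3

lemma Rm_bound (hh0 : 0 < h) (hL : 0 < L) (hLdef : L = (1 - lam)⁻¹) (hB₁ : 0 < B₁)
    (ha : 0 ≤ a) (hM : 0 < M) (hMG : 0 < MG)
    (hlipf : ∀ x y, ‖f x - f y‖ ≤ B₁ * ‖x - y‖)
    (hγeq : B₁ * (a * M + L * MG) = (1 - lam) / 2 * γ)
    (g : E → E) (hvb : ∀ u, ‖vmIM f lam h g u‖ ≤ M)
    (hGb : ∀ u, ‖GmIM f lam a h g u‖ ≤ MG) :
    ∀ u, ‖RmIM f lam a h g u‖ ≤ (1 - lam) / 2 * γ := by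
  intro u
  show ‖h⁻¹ • ((f (wmIM f lam a h g u) - f u)
      - (1 - lam)⁻¹ • (f (PsiIM f lam a h g u) - f u))‖ ≤ (1 - lam) / 2 * γ
  rw [nsmIM (by positivity)]
  have hq1 : ‖f (wmIM f lam a h g u) - f u‖ ≤ B₁ * (h * a * M) := by
    refine (hlipf _ _).trans ?_
    have e : wmIM f lam a h g u - u = (h * a) • vmIM f lam h g u := by
      simp only [wmIM]; abel
    rw [e, nsmIM (by positivity)]
    exact mul_le_mul_of_nonneg_left
      (mul_le_mul_of_nonneg_left (hvb u) (by positivity)) hB₁.le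
  have hq2 : ‖f (PsiIM f lam a h g u) - f u‖ ≤ B₁ * (h * MG) := by
    refine (hlipf _ _).trans ?_
    have e : PsiIM f lam a h g u - u = h • GmIM f lam a h g u := by
      simp only [PsiIM]; abel
    rw [e, nsmIM hh0.le]
    exact mul_le_mul_of_nonneg_left
      (mul_le_mul_of_nonneg_left (hGb u) hh0.le) hB₁.le
  have htri : ‖(f (wmIM f lam a h g u) - f u)
      - (1 - lam)⁻¹ • (f (PsiIM f lam a h g u) - f u)‖
      ≤ B₁ * (h * a * M) + L * (B₁ * (h * MG)) := by
    refine (norm_sub_le _ _).trans ?_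
    rw [← hLdef, nsmIM hL.le]
    have := mul_le_mul_of_nonneg_left hq2 hL.le
    linarith
  have hfin : h⁻¹ * (B₁ * (h * a * M) + L * (B₁ * (h * MG)))
      = B₁ * (a * M + L * MG) := by
    field_simp
  calc h⁻¹ * ‖(f (wmIM f lam a h g u) - f u)
        - (1 - lam)⁻¹ • (f (PsiIM f lam a h g u) - f u)‖
      ≤ h⁻¹ * (B₁ * (h * a * M) + L * (B₁ * (h * MG))) :=
        mul_le_mul_of_nonneg_left htri (by positivity)
    _ = B₁ * (a * M + L * MG) := hfin
    _ = (1 - lam) / 2 * γ := hγeq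

lemma Rm_lip (hh0 : 0 < h) (hL : 0 < L) (hLdef : L = (1 - lam)⁻¹)
    (hB₁ : 0 < B₁) (hB₂ : 0 < B₂) (ha : 0 ≤ a) (hM : 0 < M) (hN : 0 < N)
    (hMG : 0 < MG) (hLG : 0 < LG)
    (hlipf : ∀ x y, ‖f x - f y‖ ≤ B₁ * ‖x - y‖)
    (hA : ∀ s x y, ‖(f (x + s) - f x) - (f (y + s) - f y)‖ ≤ B₂ * ‖s‖ * ‖x - y‖)
    (hDdef : D = a * B₂ * M + a * B₁ * N + L * (B₂ * MG + B₁ * LG))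
    (g : E → E) (hvb : ∀ u, ‖vmIM f lam h g u‖ ≤ M)
    (hvl : ∀ u u', ‖vmIM f lam h g u - vmIM f lam h g u'‖ ≤ N * ‖u - u'‖)
    (hGb : ∀ u, ‖GmIM f lam a h g u‖ ≤ MG)
    (hGl : ∀ u u', ‖GmIM f lam a h g u - GmIM f lam a h g u'‖ ≤ LG * ‖u - u'‖) :
    ∀ u u', ‖RmIM f lam a h g u - RmIM f lam a h g u'‖ ≤ D * ‖u - u'‖ := by
  intro u u'
  rw [RmIM_sub, nsmIM (by positivity)]
  set t := ‖u - u'‖ with ht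
  have ht0 : 0 ≤ t := norm_nonneg _
  -- first increment
  have hX : ‖(f (wmIM f lam a h g u) - f u) - (f (wmIM f lam a h g u') - f u')‖
      ≤ h * ((a * B₂ * M + a * B₁ * N) * t) := by
    rw [show wmIM f lam a h g u = u + (h * a) • vmIM f lam h g u from rfl,
      show wmIM f lam a h g u' = u' + (h * a) • vmIM f lam h g u' from rfl]
    refine (incr_diff hlipf hA _ _ u u').trans ?_
    have e1 : ‖(h * a) • vmIM f lam h g u‖ ≤ h * a * M := by
      rw [nsmIM (by positivity)]
      exact mul_le_mul_of_nonneg_left (hvb u) (by positivity)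
    have e2 : ‖(h * a) • vmIM f lam h g u - (h * a) • vmIM f lam h g u'‖
        ≤ h * a * (N * t) := by
      rw [← smul_sub, nsmIM (by positivity)]
      exact mul_le_mul_of_nonneg_left (hvl u u') (by positivity)
    have e3 : B₂ * ‖(h * a) • vmIM f lam h g u‖ * t ≤ B₂ * (h * a * M) * t :=
      mul_le_mul_of_nonneg_right (mul_le_mul_of_nonneg_left e1 hB₂.le) ht0
    have e4 : B₁ * ‖(h * a) • vmIM f lam h g u - (h * a) • vmIM f lam h g u'‖
        ≤ B₁ * (h * a * (N * t)) := mul_le_mul_of_nonneg_left e2 hB₁.le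
    nlinarith
  -- second increment
  have hY : ‖(f (PsiIM f lam a h g u) - f u) - (f (PsiIM f lam a h g u') - f u')‖
      ≤ h * ((B₂ * MG + B₁ * LG) * t) := by
    rw [show PsiIM f lam a h g u = u + h • GmIM f lam a h g u from rfl,
      show PsiIM f lam a h g u' = u' + h • GmIM f lam a h g u' from rfl]
    refine (incr_diff hlipf hA _ _ u u').trans ?_
    have e1 : ‖h • GmIM f lam a h g u‖ ≤ h * MG := by
      rw [nsmIM hh0.le]
      exact mul_le_mul_of_nonneg_left (hGb u) hh0.le
    have e2 : ‖h • GmIM f lam a h g u - h • GmIM f lam a h g u'‖ ≤ h * (LG * t) := by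
      rw [← smul_sub, nsmIM hh0.le]
      exact mul_le_mul_of_nonneg_left (hGl u u') hh0.le
    have e3 : B₂ * ‖h • GmIM f lam a h g u‖ * t ≤ B₂ * (h * MG) * t :=
      mul_le_mul_of_nonneg_right (mul_le_mul_of_nonneg_left e1 hB₂.le) ht0
    have e4 : B₁ * ‖h • GmIM f lam a h g u - h • GmIM f lam a h g u'‖
        ≤ B₁ * (h * (LG * t)) := mul_le_mul_of_nonneg_left e2 hB₁.le
    nlinarith
  have htri : ‖((f (wmIM f lam a h g u) - f u) - (f (wmIM f lam a h g u') - f u'))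
      - (1 - lam)⁻¹ • ((f (PsiIM f lam a h g u) - f u)
          - (f (PsiIM f lam a h g u') - f u'))‖
      ≤ h * ((a * B₂ * M + a * B₁ * N) * t) + L * (h * ((B₂ * MG + B₁ * LG) * t)) := by
    refine (norm_sub_le _ _).trans ?_
    rw [← hLdef, nsmIM hL.le]
    have := mul_le_mul_of_nonneg_left hY hL.le
    linarith
  have hfin : h⁻¹ * (h * ((a * B₂ * M + a * B₁ * N) * t)
      + L * (h * ((B₂ * MG + B₁ * LG) * t))) = D * t := by
    rw [hDdef]; field_simp
  calc h⁻¹ * ‖((f (wmIM f lam a h g u) - f u) - (f (wmIM f lam a h g u') - f u'))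
        - (1 - lam)⁻¹ • ((f (PsiIM f lam a h g u) - f u)
            - (f (PsiIM f lam a h g u') - f u'))‖
      ≤ h⁻¹ * (h * ((a * B₂ * M + a * B₁ * N) * t)
          + L * (h * ((B₂ * MG + B₁ * LG) * t))) :=
        mul_le_mul_of_nonneg_left htri (by positivity)
    _ = D * t := hfin

lemma Tmap_bound [Nonempty E] (hlam0 : 0 < lam) (hlam1 : lam < 1) (hγ : 0 < γ)
    (g : E → E) (hgb : ∀ x, ‖g x‖ ≤ γ)
    (hRb : ∀ u, ‖RmIM f lam a h g u‖ ≤ (1 - lam) / 2 * γ) :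
    ∀ y, ‖TmapIM f lam a h g y‖ ≤ γ := by
  intro y
  show ‖lam • g (PhiIM f lam a h g y) + RmIM f lam a h g (PhiIM f lam a h g y)‖ ≤ γ
  refine (norm_add_le _ _).trans ?_
  rw [nsmIM hlam0.le]
  have e1 : lam * ‖g (PhiIM f lam a h g y)‖ ≤ lam * γ :=
    mul_le_mul_of_nonneg_left (hgb _) hlam0.le
  have e2 := hRb (PhiIM f lam a h g y)
  nlinarith

lemma Tmap_lip [Nonempty E] (hlam0 : 0 < lam) (hδ : 0 < δ) (hD : 0 < D)
    (hDδ : D = (1 - lam) / 2 * δ)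
    (g : E → E) (hgl : ∀ x y, ‖g x - g y‖ ≤ δ * ‖x - y‖)
    (hRl : ∀ u u', ‖RmIM f lam a h g u - RmIM f lam a h g u'‖ ≤ D * ‖u - u'‖)
    (hPhil : ∀ y y', ‖PhiIM f lam a h g y - PhiIM f lam a h g y'‖
      ≤ 2 / (1 + lam) * ‖y - y'‖) :
    ∀ y y', ‖TmapIM f lam a h g y - TmapIM f lam a h g y'‖ ≤ δ * ‖y - y'‖ := by
  intro y y'
  have hid : TmapIM f lam a h g y - TmapIM f lam a h g y'
      = lam • (g (PhiIM f lam a h g y) - g (PhiIM f lam a h g y'))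
        + (RmIM f lam a h g (PhiIM f lam a h g y)
            - RmIM f lam a h g (PhiIM f lam a h g y')) := by
    simp only [TmapIM]; module
  rw [hid]
  refine (norm_add_le _ _).trans ?_
  rw [nsmIM hlam0.le]
  set X := ‖PhiIM f lam a h g y - PhiIM f lam a h g y'‖ with hX
  have hX0 : 0 ≤ X := norm_nonneg _
  have e1 : lam * ‖g (PhiIM f lam a h g y) - g (PhiIM f lam a h g y')‖
      ≤ lam * (δ * X) := mul_le_mul_of_nonneg_left (hgl _ _) hlam0.le
  have e2 := hRl (PhiIM f lam a h g y) (PhiIM f lam a h g y')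
  have e3 : (lam * δ + D) * X ≤ (lam * δ + D) * (2 / (1 + lam) * ‖y - y'‖) := by
    refine mul_le_mul_of_nonneg_left (hPhil y y') ?_
    nlinarith
  have e4 : (lam * δ + D) * (2 / (1 + lam) * ‖y - y'‖) = δ * ‖y - y'‖ := by
    rw [hDδ]
    have : (1:ℝ) + lam ≠ 0 := by linarith
    field_simp
    ring
  nlinarith

lemma vm_diff (hh0 : 0 < h) (g₁ g₂ : E → E) {dd : ℝ}
    (hgd : ∀ u, ‖g₁ u - g₂ u‖ ≤ dd) :
    ∀ u, ‖vmIM f lam h g₁ u - vmIM f lam h g₂ u‖ ≤ h * dd := by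
  intro u
  have ev : vmIM f lam h g₁ u - vmIM f lam h g₂ u = h • (g₁ u - g₂ u) := by
    rw [vmIM_sub]; simp
  rw [ev, nsmIM hh0.le]
  exact mul_le_mul_of_nonneg_left (hgd u) hh0.le

lemma Gm_diff (hh0 : 0 < h) (h1 : h ≤ 1) (hlam0 : 0 < lam) (ha : 0 ≤ a) (hB₁ : 0 < B₁)
    (hlipf : ∀ x y, ‖f x - f y‖ ≤ B₁ * ‖x - y‖)
    (g₁ g₂ : E → E) {dd : ℝ} (hdd : 0 ≤ dd)
    (hgd : ∀ u, ‖g₁ u - g₂ u‖ ≤ dd) :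
    ∀ u, ‖GmIM f lam a h g₁ u - GmIM f lam a h g₂ u‖ ≤ (lam + a * B₁) * (h * dd) := by
  intro u
  have hvd := vm_diff f lam h hh0 g₁ g₂ hgd
  rw [GmIM_sub]
  refine (norm_add_le _ _).trans ?_
  rw [nsmIM hlam0.le]
  have e1 : lam * ‖vmIM f lam h g₁ u - vmIM f lam h g₂ u‖ ≤ lam * (h * dd) :=
    mul_le_mul_of_nonneg_left (hvd u) hlam0.le
  have ew : wmIM f lam a h g₁ u - wmIM f lam a h g₂ u
      = (h * a) • (vmIM f lam h g₁ u - vmIM f lam h g₂ u) := by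
    rw [wmIM_sub]; simp
  have e2 : ‖f (wmIM f lam a h g₁ u) - f (wmIM f lam a h g₂ u)‖
      ≤ B₁ * (h * a * (h * dd)) := by
    refine (hlipf _ _).trans ?_
    rw [ew, nsmIM (by positivity)]
    exact mul_le_mul_of_nonneg_left
      (mul_le_mul_of_nonneg_left (hvd u) (by positivity)) hB₁.le
  nlinarith [mul_nonneg (mul_nonneg hB₁.le ha) (mul_nonneg hh0.le hdd),
    mul_le_mul_of_nonneg_right h1
      (mul_nonneg (mul_nonneg hB₁.le ha) (mul_nonneg hh0.le hdd))]

lemma Psi_diff (hh0 : 0 < h) (g₁ g₂ : E → E) {cG : ℝ}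
    (hGd : ∀ u, ‖GmIM f lam a h g₁ u - GmIM f lam a h g₂ u‖ ≤ cG) :
    ∀ u, ‖PsiIM f lam a h g₁ u - PsiIM f lam a h g₂ u‖ ≤ h * cG := by
  intro u
  have e : PsiIM f lam a h g₁ u - PsiIM f lam a h g₂ u
      = h • (GmIM f lam a h g₁ u - GmIM f lam a h g₂ u) := by
    rw [PsiIM_sub]; simp
  rw [e, nsmIM hh0.le]
  exact mul_le_mul_of_nonneg_left (hGd u) hh0.le

lemma Phi_diff [Nonempty E] (hlam0 : 0 < lam) (g₁ g₂ : E → E) {cP : ℝ}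
    (hexp₁ : ∀ u u', (1 + lam) / 2 * ‖u - u'‖
      ≤ ‖PsiIM f lam a h g₁ u - PsiIM f lam a h g₁ u'‖)
    (hPsiPhi₁ : ∀ y, PsiIM f lam a h g₁ (PhiIM f lam a h g₁ y) = y)
    (hPsiPhi₂ : ∀ y, PsiIM f lam a h g₂ (PhiIM f lam a h g₂ y) = y)
    (hΨd : ∀ u, ‖PsiIM f lam a h g₁ u - PsiIM f lam a h g₂ u‖ ≤ cP) :
    ∀ y, ‖PhiIM f lam a h g₁ y - PhiIM f lam a h g₂ y‖ ≤ 2 / (1 + lam) * cP := by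
  intro y
  have he := hexp₁ (PhiIM f lam a h g₁ y) (PhiIM f lam a h g₂ y)
  rw [hPsiPhi₁ y] at he
  have hb : ‖y - PsiIM f lam a h g₁ (PhiIM f lam a h g₂ y)‖ ≤ cP := by
    have e : ‖y - PsiIM f lam a h g₁ (PhiIM f lam a h g₂ y)‖
        = ‖PsiIM f lam a h g₁ (PhiIM f lam a h g₂ y)
            - PsiIM f lam a h g₂ (PhiIM f lam a h g₂ y)‖ := by
      rw [norm_sub_rev]
      rw [hPsiPhi₂ y]
    rw [e]
    exact hΨd _
  have h2 : (0:ℝ) < 2 / (1 + lam) := by positivity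
  have h3 := mul_le_mul_of_nonneg_left (he.trans hb) h2.le
  have h4 : 2 / (1 + lam) * ((1 + lam) / 2
      * ‖PhiIM f lam a h g₁ y - PhiIM f lam a h g₂ y‖)
      = ‖PhiIM f lam a h g₁ y - PhiIM f lam a h g₂ y‖ := by
    have : (1:ℝ) + lam ≠ 0 := by linarith
    field_simp
  rw [h4] at h3
  exact h3

lemma Rm_diff (hh0 : 0 < h) (h1 : h ≤ 1) (hlam0 : 0 < lam) (ha : 0 ≤ a)
    (hB₁ : 0 < B₁) (hL : 0 < L) (hLdef : L = (1 - lam)⁻¹)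
    (hlipf : ∀ x y, ‖f x - f y‖ ≤ B₁ * ‖x - y‖)
    (g₁ g₂ : E → E) {dd : ℝ} (hdd : 0 ≤ dd)
    (hgd : ∀ u, ‖g₁ u - g₂ u‖ ≤ dd) :
    ∀ u, ‖RmIM f lam a h g₁ u - RmIM f lam a h g₂ u‖
      ≤ B₁ * (a + L * (lam + a * B₁)) * (h * dd) := by
  intro u
  have hvd := vm_diff f lam h hh0 g₁ g₂ hgd
  have hGd := Gm_diff f lam a h hh0 h1 hlam0 ha hB₁ hlipf g₁ g₂ hdd hgd
  have hΨd := Psi_diff f lam a h hh0 g₁ g₂ hGd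
  rw [RmIM_sub, nsmIM (by positivity)]
  have ea : (f (wmIM f lam a h g₁ u) - f u) - (f (wmIM f lam a h g₂ u) - f u)
      = f (wmIM f lam a h g₁ u) - f (wmIM f lam a h g₂ u) := by abel
  have eb : (f (PsiIM f lam a h g₁ u) - f u) - (f (PsiIM f lam a h g₂ u) - f u)
      = f (PsiIM f lam a h g₁ u) - f (PsiIM f lam a h g₂ u) := by abel
  rw [ea, eb]
  have ew : wmIM f lam a h g₁ u - wmIM f lam a h g₂ u
      = (h * a) • (vmIM f lam h g₁ u - vmIM f lam h g₂ u) := by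
    rw [wmIM_sub]; simp
  have e2 : ‖f (wmIM f lam a h g₁ u) - f (wmIM f lam a h g₂ u)‖
      ≤ B₁ * (h * a * (h * dd)) := by
    refine (hlipf _ _).trans ?_
    rw [ew, nsmIM (by positivity)]
    exact mul_le_mul_of_nonneg_left
      (mul_le_mul_of_nonneg_left (hvd u) (by positivity)) hB₁.le
  have e3 : ‖f (PsiIM f lam a h g₁ u) - f (PsiIM f lam a h g₂ u)‖
      ≤ B₁ * (h * ((lam + a * B₁) * (h * dd))) := by
    refine (hlipf _ _).trans ?_
    exact mul_le_mul_of_nonneg_left (hΨd u) hB₁.le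
  have htri : ‖(f (wmIM f lam a h g₁ u) - f (wmIM f lam a h g₂ u))
      - (1 - lam)⁻¹ • (f (PsiIM f lam a h g₁ u) - f (PsiIM f lam a h g₂ u))‖
      ≤ B₁ * (h * a * (h * dd)) + L * (B₁ * (h * ((lam + a * B₁) * (h * dd)))) := by
    refine (norm_sub_le _ _).trans ?_
    rw [← hLdef, nsmIM hL.le]
    have := mul_le_mul_of_nonneg_left e3 hL.le
    linarith
  have hfin : h⁻¹ * (B₁ * (h * a * (h * dd))
      + L * (B₁ * (h * ((lam + a * B₁) * (h * dd)))))
      = B₁ * (a + L * (lam + a * B₁)) * (h * dd) := by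
    field_simp
  calc h⁻¹ * ‖(f (wmIM f lam a h g₁ u) - f (wmIM f lam a h g₂ u))
        - (1 - lam)⁻¹ • (f (PsiIM f lam a h g₁ u) - f (PsiIM f lam a h g₂ u))‖
      ≤ h⁻¹ * (B₁ * (h * a * (h * dd))
          + L * (B₁ * (h * ((lam + a * B₁) * (h * dd))))) :=
        mul_le_mul_of_nonneg_left htri (by positivity)
    _ = B₁ * (a + L * (lam + a * B₁)) * (h * dd) := hfin

lemma Tmap_contract {K : ℝ} [Nonempty E] (hh0 : 0 < h) (h1 : h ≤ 1)
    (hlam0 : 0 < lam) (hlam1 : lam < 1) (ha : 0 ≤ a) (hB₁ : 0 < B₁)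
    (hδ : 0 < δ) (hD : 0 < D) (hL : 0 < L) (hLdef : L = (1 - lam)⁻¹)
    (hDδ : D = (1 - lam) / 2 * δ)
    (hKdef : K = δ * (lam + a * B₁) + B₁ * (a + L * (lam + a * B₁)))
    (hlipf : ∀ x y, ‖f x - f y‖ ≤ B₁ * ‖x - y‖)
    (g₁ g₂ : E → E) {dd : ℝ} (hdd : 0 ≤ dd)
    (hgd : ∀ u, ‖g₁ u - g₂ u‖ ≤ dd)
    (hg₁l : ∀ x y, ‖g₁ x - g₁ y‖ ≤ δ * ‖x - y‖)
    (hexp₁ : ∀ u u', (1 + lam) / 2 * ‖u - u'‖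
      ≤ ‖PsiIM f lam a h g₁ u - PsiIM f lam a h g₁ u'‖)
    (hPsiPhi₁ : ∀ y, PsiIM f lam a h g₁ (PhiIM f lam a h g₁ y) = y)
    (hPsiPhi₂ : ∀ y, PsiIM f lam a h g₂ (PhiIM f lam a h g₂ y) = y)
    (hRl₁ : ∀ u u', ‖RmIM f lam a h g₁ u - RmIM f lam a h g₁ u'‖ ≤ D * ‖u - u'‖) :
    ∀ y, ‖TmapIM f lam a h g₁ y - TmapIM f lam a h g₂ y‖ ≤ (lam + h * K) * dd := by
  intro y
  have hGd := Gm_diff f lam a h hh0 h1 hlam0 ha hB₁ hlipf g₁ g₂ hdd hgd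
  have hΨd := Psi_diff f lam a h hh0 g₁ g₂ hGd
  have hxd := Phi_diff f lam a h hlam0 g₁ g₂ hexp₁ hPsiPhi₁ hPsiPhi₂ hΨd y
  have hRd := Rm_diff f lam a h hh0 h1 hlam0 ha hB₁ hL hLdef hlipf g₁ g₂ hdd hgd
  have hid : TmapIM f lam a h g₁ y - TmapIM f lam a h g₂ y
      = lam • (g₁ (PhiIM f lam a h g₁ y) - g₂ (PhiIM f lam a h g₂ y))
        + (RmIM f lam a h g₁ (PhiIM f lam a h g₁ y)
            - RmIM f lam a h g₂ (PhiIM f lam a h g₂ y)) := by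
    simp only [TmapIM]; module
  rw [hid]
  refine (norm_add_le _ _).trans ?_
  rw [nsmIM hlam0.le]
  have hX0 : (0:ℝ) ≤ ‖PhiIM f lam a h g₁ y - PhiIM f lam a h g₂ y‖ := norm_nonneg _
  have b1 : ‖g₁ (PhiIM f lam a h g₁ y) - g₂ (PhiIM f lam a h g₂ y)‖
      ≤ δ * ‖PhiIM f lam a h g₁ y - PhiIM f lam a h g₂ y‖ + dd := by
    have e : g₁ (PhiIM f lam a h g₁ y) - g₂ (PhiIM f lam a h g₂ y)
        = (g₁ (PhiIM f lam a h g₁ y) - g₁ (PhiIM f lam a h g₂ y))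
          + (g₁ (PhiIM f lam a h g₂ y) - g₂ (PhiIM f lam a h g₂ y)) := by abel
    rw [e]
    exact (norm_add_le _ _).trans (add_le_add (hg₁l _ _) (hgd _))
  have b2 : ‖RmIM f lam a h g₁ (PhiIM f lam a h g₁ y)
      - RmIM f lam a h g₂ (PhiIM f lam a h g₂ y)‖
      ≤ D * ‖PhiIM f lam a h g₁ y - PhiIM f lam a h g₂ y‖
        + B₁ * (a + L * (lam + a * B₁)) * (h * dd) := by
    have e : RmIM f lam a h g₁ (PhiIM f lam a h g₁ y)
        - RmIM f lam a h g₂ (PhiIM f lam a h g₂ y)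
        = (RmIM f lam a h g₁ (PhiIM f lam a h g₁ y)
            - RmIM f lam a h g₁ (PhiIM f lam a h g₂ y))
          + (RmIM f lam a h g₁ (PhiIM f lam a h g₂ y)
              - RmIM f lam a h g₂ (PhiIM f lam a h g₂ y)) := by abel
    rw [e]
    exact (norm_add_le _ _).trans (add_le_add (hRl₁ _ _) (hRd _))
  have t1 : lam * ‖g₁ (PhiIM f lam a h g₁ y) - g₂ (PhiIM f lam a h g₂ y)‖
      ≤ lam * (δ * ‖PhiIM f lam a h g₁ y - PhiIM f lam a h g₂ y‖ + dd) :=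
    mul_le_mul_of_nonneg_left b1 hlam0.le
  have e5 : (lam * δ + D) * ‖PhiIM f lam a h g₁ y - PhiIM f lam a h g₂ y‖
      ≤ (lam * δ + D) * (2 / (1 + lam) * (h * ((lam + a * B₁) * (h * dd)))) := by
    refine mul_le_mul_of_nonneg_left hxd ?_
    nlinarith
  have e6 : (lam * δ + D) * (2 / (1 + lam) * (h * ((lam + a * B₁) * (h * dd))))
      = δ * (h * ((lam + a * B₁) * (h * dd))) := by
    rw [hDδ]
    have : (1:ℝ) + lam ≠ 0 := by linarith
    field_simp
    ring
  have e7 : δ * (h * ((lam + a * B₁) * (h * dd))) ≤ δ * ((lam + a * B₁) * (h * dd)) := by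
    have base : (0:ℝ) ≤ δ * ((lam + a * B₁) * (h * dd)) := by
      have : (0:ℝ) ≤ lam + a * B₁ := by positivity
      positivity
    nlinarith [mul_le_mul_of_nonneg_right h1 base]
  have efin : lam * dd + (δ * ((lam + a * B₁) * (h * dd))
      + B₁ * (a + L * (lam + a * B₁)) * (h * dd)) = (lam + h * K) * dd := by
    rw [hKdef]; ring
  nlinarith [t1, b2, e5, e7]

lemma fixed_implies_forward [Nonempty E] (hh0 : 0 < h) (hl1ne : 1 - lam ≠ 0)
    (g : E → E)
    (hPhiPsi : ∀ u, PhiIM f lam a h g (PsiIM f lam a h g u) = u)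
    (hfx : ∀ y, TmapIM f lam a h g y = g y) :
    ∀ uu, lam • vmIM f lam h g uu + f (wmIM f lam a h g uu)
      = (1 - lam)⁻¹ • f (PsiIM f lam a h g uu) + h • g (PsiIM f lam a h g uu) := by
  intro uu
  refine (invariance_iff f lam a h hh0.ne' hl1ne g uu).mpr ?_
  have ht := hfx (PsiIM f lam a h g uu)
  simp only [TmapIM] at ht
  rw [hPhiPsi uu] at ht
  exact ht.symm

set_option maxHeartbeats 1000000 in
lemma vv_unique {J : ℝ} (hh0 : 0 < h) (h1 : h ≤ 1) (hlam0 : 0 < lam)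
    (hB₁ : 0 < B₁) (ha : 0 ≤ a) (hδ : 0 < δ) (hδ1 : h * δ ≤ 1)
    (hL : 0 < L) (hLdef : L = (1 - lam)⁻¹)
    (hJdef : J = B₁ * a + (L * B₁ + 1) * (lam + a * B₁)) (hJs : h * J ≤ lam / 2)
    (hlipf : ∀ x y, ‖f x - f y‖ ≤ B₁ * ‖x - y‖)
    (g : E → E) (hgl : ∀ x y, ‖g x - g y‖ ≤ δ * ‖x - y‖)
    (uu vv₁ vv₂ : E)
    (hn₁ : lam • vv₁ + f (uu + (h * a) • vv₁)
      = (1 - lam)⁻¹ • f (uu + (h * lam) • vv₁ + h • f (uu + (h * a) • vv₁))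
        + h • g (uu + (h * lam) • vv₁ + h • f (uu + (h * a) • vv₁)))
    (hn₂ : lam • vv₂ + f (uu + (h * a) • vv₂)
      = (1 - lam)⁻¹ • f (uu + (h * lam) • vv₂ + h • f (uu + (h * a) • vv₂))
        + h • g (uu + (h * lam) • vv₂ + h • f (uu + (h * a) • vv₂))) :
    vv₁ = vv₂ := by
  have hd := congrArg₂ (fun p q : E => p - q) hn₁ hn₂
  have hdiffeq : lam • (vv₁ - vv₂)
      = ((1 - lam)⁻¹ • f (uu + (h * lam) • vv₁ + h • f (uu + (h * a) • vv₁))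
          - (1 - lam)⁻¹ • f (uu + (h * lam) • vv₂ + h • f (uu + (h * a) • vv₂)))
        + (h • g (uu + (h * lam) • vv₁ + h • f (uu + (h * a) • vv₁))
            - h • g (uu + (h * lam) • vv₂ + h • f (uu + (h * a) • vv₂)))
        - (f (uu + (h * a) • vv₁) - f (uu + (h * a) • vv₂)) := by
    calc lam • (vv₁ - vv₂)
        = (lam • vv₁ + f (uu + (h * a) • vv₁))
            - (lam • vv₂ + f (uu + (h * a) • vv₂))
          - (f (uu + (h * a) • vv₁) - f (uu + (h * a) • vv₂)) := by module
      _ = ((1 - lam)⁻¹ • f (uu + (h * lam) • vv₁ + h • f (uu + (h * a) • vv₁))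
            + h • g (uu + (h * lam) • vv₁ + h • f (uu + (h * a) • vv₁)))
          - ((1 - lam)⁻¹ • f (uu + (h * lam) • vv₂ + h • f (uu + (h * a) • vv₂))
              + h • g (uu + (h * lam) • vv₂ + h • f (uu + (h * a) • vv₂)))
          - (f (uu + (h * a) • vv₁) - f (uu + (h * a) • vv₂)) := by rw [hd]
      _ = _ := by module
  set nΔ := ‖vv₁ - vv₂‖ with hnΔ
  have hn0 : 0 ≤ nΔ := norm_nonneg _
  have hwsub : (uu + (h * a) • vv₁) - (uu + (h * a) • vv₂) = (h * a) • (vv₁ - vv₂) := by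
    module
  have hfw : ‖f (uu + (h * a) • vv₁) - f (uu + (h * a) • vv₂)‖
      ≤ B₁ * (h * a * nΔ) := by
    refine (hlipf _ _).trans ?_
    rw [hwsub, nsmIM (by positivity)]
  have hnsub : (uu + (h * lam) • vv₁ + h • f (uu + (h * a) • vv₁))
      - (uu + (h * lam) • vv₂ + h • f (uu + (h * a) • vv₂))
      = (h * lam) • (vv₁ - vv₂)
        + h • (f (uu + (h * a) • vv₁) - f (uu + (h * a) • vv₂)) := by
    module
  have hnd : ‖(uu + (h * lam) • vv₁ + h • f (uu + (h * a) • vv₁))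
      - (uu + (h * lam) • vv₂ + h • f (uu + (h * a) • vv₂))‖
      ≤ h * ((lam + a * B₁) * nΔ) := by
    rw [hnsub]
    refine (norm_add_le _ _).trans ?_
    rw [nsmIM (by positivity), nsmIM hh0.le]
    have e1 : h * ‖f (uu + (h * a) • vv₁) - f (uu + (h * a) • vv₂)‖
        ≤ h * (B₁ * (h * a * nΔ)) := mul_le_mul_of_nonneg_left hfw hh0.le
    have e2 : h * (B₁ * (h * a * nΔ)) ≤ h * (B₁ * (a * nΔ)) := by
      have base : (0:ℝ) ≤ B₁ * (a * nΔ) := by positivity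
      have := mul_le_mul_of_nonneg_right h1 base
      nlinarith
    nlinarith
  have hnorm : lam * nΔ ≤ L * (B₁ * (h * ((lam + a * B₁) * nΔ)))
      + h * (δ * (h * ((lam + a * B₁) * nΔ))) + B₁ * (h * a * nΔ) := by
    have e0 : ‖lam • (vv₁ - vv₂)‖ = lam * nΔ := nsmIM hlam0.le _
    rw [← e0, hdiffeq]
    refine (norm_sub_le _ _).trans ?_
    have ea : ‖(1 - lam)⁻¹ • f (uu + (h * lam) • vv₁ + h • f (uu + (h * a) • vv₁))
        - (1 - lam)⁻¹ • f (uu + (h * lam) • vv₂ + h • f (uu + (h * a) • vv₂))‖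
        ≤ L * (B₁ * (h * ((lam + a * B₁) * nΔ))) := by
      rw [← smul_sub, ← hLdef, nsmIM hL.le]
      refine mul_le_mul_of_nonneg_left ?_ hL.le
      exact (hlipf _ _).trans (mul_le_mul_of_nonneg_left hnd hB₁.le)
    have eb : ‖h • g (uu + (h * lam) • vv₁ + h • f (uu + (h * a) • vv₁))
        - h • g (uu + (h * lam) • vv₂ + h • f (uu + (h * a) • vv₂))‖
        ≤ h * (δ * (h * ((lam + a * B₁) * nΔ))) := by
      rw [← smul_sub, nsmIM hh0.le]
      refine mul_le_mul_of_nonneg_left ?_ hh0.le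
      exact (hgl _ _).trans (mul_le_mul_of_nonneg_left hnd hδ.le)
    have := norm_add_le
      ((1 - lam)⁻¹ • f (uu + (h * lam) • vv₁ + h • f (uu + (h * a) • vv₁))
        - (1 - lam)⁻¹ • f (uu + (h * lam) • vv₂ + h • f (uu + (h * a) • vv₂)))
      (h • g (uu + (h * lam) • vv₁ + h • f (uu + (h * a) • vv₁))
        - h • g (uu + (h * lam) • vv₂ + h • f (uu + (h * a) • vv₂)))
    linarith
  -- now conclude `nΔ = 0`
  have hhalf : lam * nΔ ≤ lam / 2 * nΔ := by
    have c1 : L * (B₁ * (h * ((lam + a * B₁) * nΔ)))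
        = (L * B₁) * (h * ((lam + a * B₁) * nΔ)) := by ring
    have c2 : h * (δ * (h * ((lam + a * B₁) * nΔ)))
        = (h * δ) * (h * ((lam + a * B₁) * nΔ)) := by ring
    have hbase : (0:ℝ) ≤ h * ((lam + a * B₁) * nΔ) := by positivity
    have c3 : (h * δ) * (h * ((lam + a * B₁) * nΔ)) ≤ 1 * (h * ((lam + a * B₁) * nΔ)) :=
      mul_le_mul_of_nonneg_right hδ1 hbase
    have c4 : (L * B₁) * (h * ((lam + a * B₁) * nΔ)) + 1 * (h * ((lam + a * B₁) * nΔ))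
        = (L * B₁ + 1) * ((lam + a * B₁)) * (h * nΔ) := by ring
    have c5 : B₁ * (h * a * nΔ) = B₁ * a * (h * nΔ) := by ring
    have c6 : (L * B₁ + 1) * (lam + a * B₁) * (h * nΔ) + B₁ * a * (h * nΔ)
        = J * (h * nΔ) := by rw [hJdef]; ring
    have c7 : J * (h * nΔ) = (h * J) * nΔ := by ring
    have c8 : (h * J) * nΔ ≤ (lam / 2) * nΔ := mul_le_mul_of_nonneg_right hJs hn0
    nlinarith
  have : nΔ ≤ 0 := by nlinarith [hhalf, hn0, hlam0]
  have : nΔ = 0 := le_antisymm this hn0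
  rw [hnΔ, norm_sub_eq_zero_iff] at this
  exact this

lemma iff_implies_fixed [Nonempty E] (hh0 : 0 < h) (hl1ne : 1 - lam ≠ 0)
    (g : E → E)
    (hPsiPhi : ∀ y, PsiIM f lam a h g (PhiIM f lam a h g y) = y)
    (hiff : ∀ uu vv : E,
      (vv = (1 - lam)⁻¹ • f uu + h • g uu ↔
        lam • vv + f (uu + (h * a) • vv)
          = (1 - lam)⁻¹ • f (uu + (h * lam) • vv + h • f (uu + (h * a) • vv))
            + h • g (uu + (h * lam) • vv + h • f (uu + (h * a) • vv)))) :
    ∀ y, TmapIM f lam a h g y = g y := by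
  intro y
  have hnext := (hiff (PhiIM f lam a h g y)
    (vmIM f lam h g (PhiIM f lam a h g y))).mp rfl
  rw [← (show wmIM f lam a h g (PhiIM f lam a h g y)
      = PhiIM f lam a h g y + (h * a) • vmIM f lam h g (PhiIM f lam a h g y)
      from rfl), ← PsiIM_eq] at hnext
  have hg := (invariance_iff f lam a h hh0.ne' hl1ne g (PhiIM f lam a h g y)).mp hnext
  rw [hPsiPhi y] at hg
  show lam • g (PhiIM f lam a h g y) + RmIM f lam a h g (PhiIM f lam a h g y) = g y
  exact hg.symm

lemma fixed_implies_iff {J : ℝ} [Nonempty E] (hh0 : 0 < h) (h1 : h ≤ 1)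
    (hlam0 : 0 < lam) (hl1ne : 1 - lam ≠ 0)
    (hB₁ : 0 < B₁) (ha : 0 ≤ a) (hδ : 0 < δ) (hδ1 : h * δ ≤ 1)
    (hL : 0 < L) (hLdef : L = (1 - lam)⁻¹)
    (hJdef : J = B₁ * a + (L * B₁ + 1) * (lam + a * B₁)) (hJs : h * J ≤ lam / 2)
    (hlipf : ∀ x y, ‖f x - f y‖ ≤ B₁ * ‖x - y‖)
    (g : E → E) (hgl : ∀ x y, ‖g x - g y‖ ≤ δ * ‖x - y‖)
    (hPhiPsi : ∀ u, PhiIM f lam a h g (PsiIM f lam a h g u) = u)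
    (hfx : ∀ y, TmapIM f lam a h g y = g y) :
    ∀ uu vv : E,
      (vv = (1 - lam)⁻¹ • f uu + h • g uu ↔
        lam • vv + f (uu + (h * a) • vv)
          = (1 - lam)⁻¹ • f (uu + (h * lam) • vv + h • f (uu + (h * a) • vv))
            + h • g (uu + (h * lam) • vv + h • f (uu + (h * a) • vv))) := by
  have hfwd : ∀ uu vv : E, vv = (1 - lam)⁻¹ • f uu + h • g uu →
      lam • vv + f (uu + (h * a) • vv)
        = (1 - lam)⁻¹ • f (uu + (h * lam) • vv + h • f (uu + (h * a) • vv))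
          + h • g (uu + (h * lam) • vv + h • f (uu + (h * a) • vv)) := by
    intro uu vv hv
    subst hv
    rw [← (show vmIM f lam h g uu = (1 - lam)⁻¹ • f uu + h • g uu from rfl)]
    rw [← (show wmIM f lam a h g uu = uu + (h * a) • vmIM f lam h g uu from rfl)]
    rw [← PsiIM_eq]
    exact fixed_implies_forward f lam a h hh0 hl1ne g hPhiPsi hfx uu
  intro uu vv
  refine ⟨hfwd uu vv, fun hn => ?_⟩
  exact vv_unique f lam a h hh0 h1 hlam0 hB₁ ha hδ hδ1 hL hLdef hJdef hJs hlipf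
    g hgl uu vv ((1 - lam)⁻¹ • f uu + h • g uu) hn (hfwd uu _ rfl)

end Q

section MainIM
variable {E : Type*} [NormedAddCommGroup E] [NormedSpace ℝ E] [CompleteSpace E] [Nonempty E]

set_option maxHeartbeats 2000000 in
theorem core_exists
    (f : E → E) (B₀ B₁ B₂ : ℝ) (hB₀ : 0 < B₀) (hB₁ : 0 < B₁) (hB₂ : 0 < B₂)
    (hfc : Continuous f)
    (hbd₀ : ∀ x, ‖f x‖ ≤ B₀)
    (hlipf : ∀ x y, ‖f x - f y‖ ≤ B₁ * ‖x - y‖)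
    (hA : ∀ s x y, ‖(f (x + s) - f x) - (f (y + s) - f y)‖ ≤ B₂ * ‖s‖ * ‖x - y‖)
    (lam a : ℝ) (hlam0 : 0 < lam) (hlam1 : lam < 1) (ha : 0 ≤ a) :
    ∃ τ : ℝ, 0 < τ ∧
      ∀ h : ℝ, 0 < h → h < τ →
        ∃ γ : ℝ, 0 < γ ∧ ∃ δ : ℝ, 0 < δ ∧
          ∃! g : E → E,
            (Continuous g ∧ (∀ ξ, ‖g ξ‖ ≤ γ) ∧
              (∀ ξ η, ‖g ξ - g η‖ ≤ δ * ‖ξ - η‖)) ∧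
            ∀ uu vv : E,
              (vv = (1 - lam)⁻¹ • f uu + h • g uu ↔
                lam • vv + f (uu + (h * a) • vv)
                  = (1 - lam)⁻¹ • f (uu + (h * lam) • vv + h • f (uu + (h * a) • vv))
                    + h • g (uu + (h * lam) • vv + h • f (uu + (h * a) • vv))) := by
  have hl1 : (0:ℝ) < 1 - lam := by linarith
  have hcΔ : (0:ℝ) < lam + a * B₁ := by nlinarith [mul_nonneg ha hB₁.le]
  obtain ⟨L, hLdef⟩ : ∃ L : ℝ, L = (1 - lam)⁻¹ := ⟨_, rfl⟩
  have hL : 0 < L := hLdef ▸ inv_pos.mpr hl1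
  obtain ⟨M, hMdef⟩ : ∃ M : ℝ, M = L * B₀ + 1 := ⟨_, rfl⟩
  have hM : 0 < M := by nlinarith
  obtain ⟨N, hNdef⟩ : ∃ N : ℝ, N = L * B₁ + 1 := ⟨_, rfl⟩
  have hN : 0 < N := by nlinarith
  obtain ⟨MG, hMGdef⟩ : ∃ MG : ℝ, MG = lam * M + B₀ := ⟨_, rfl⟩
  have hMG : 0 < MG := by nlinarith
  obtain ⟨LG, hLGdef⟩ : ∃ LG : ℝ, LG = lam * N + B₁ * (1 + a * N) := ⟨_, rfl⟩
  have hLG : 0 < LG := by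
    nlinarith [mul_pos hlam0 hN,
      mul_pos hB₁ (show (0:ℝ) < 1 + a * N by nlinarith [mul_nonneg ha hN.le])]
  obtain ⟨γ, hγdef⟩ : ∃ γ : ℝ, γ = 2 * B₁ * (a * M + L * MG) / (1 - lam) := ⟨_, rfl⟩
  have hγ : 0 < γ := by
    rw [hγdef]; apply div_pos _ hl1
    nlinarith [mul_pos hB₁ (add_pos_of_nonneg_of_pos (mul_nonneg ha hM.le) (mul_pos hL hMG))]
  obtain ⟨D, hDdef⟩ : ∃ D : ℝ, D = a * B₂ * M + a * B₁ * N + L * (B₂ * MG + B₁ * LG) :=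
    ⟨_, rfl⟩
  have hD : 0 < D := by
    nlinarith [mul_nonneg (mul_nonneg ha hB₂.le) hM.le,
      mul_nonneg (mul_nonneg ha hB₁.le) hN.le,
      mul_pos hL (add_pos (mul_pos hB₂ hMG) (mul_pos hB₁ hLG))]
  obtain ⟨δ, hδdef⟩ : ∃ δ : ℝ, δ = 2 * D / (1 - lam) := ⟨_, rfl⟩
  have hδ : 0 < δ := by rw [hδdef]; positivity
  obtain ⟨K, hKdef⟩ : ∃ K : ℝ, K = δ * (lam + a * B₁) + B₁ * (a + L * (lam + a * B₁)) :=
    ⟨_, rfl⟩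
  have hK : 0 < K := by
    nlinarith [mul_pos hδ hcΔ,
      mul_pos hB₁ (add_pos_of_nonneg_of_pos ha (mul_pos hL hcΔ))]
  obtain ⟨J, hJdef⟩ : ∃ J : ℝ, J = B₁ * a + (L * B₁ + 1) * (lam + a * B₁) := ⟨_, rfl⟩
  have hJ : 0 < J := by
    nlinarith [mul_nonneg hB₁.le ha,
      mul_pos (show (0:ℝ) < L * B₁ + 1 by nlinarith [mul_pos hL hB₁]) hcΔ]
  have hγeq : B₁ * (a * M + L * MG) = (1 - lam) / 2 * γ := by
    rw [hγdef]; field_simp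
  have hDδ : D = (1 - lam) / 2 * δ := by
    rw [hδdef]; field_simp
  refine ⟨min 1 (min γ⁻¹ (min δ⁻¹ (min ((1 - lam) / 2 / LG)
      (min ((1 - lam) / 2 / K) (lam / 2 / J))))), by positivity, ?_⟩
  intro h hh0 hhτ
  simp only [lt_min_iff] at hhτ
  obtain ⟨hlt1, hltγ, hltδ, hltLG, hltK, hltJ⟩ := hhτ
  have h1 : h ≤ 1 := hlt1.le
  have hγ1 : h * γ ≤ 1 := by
    have := mul_lt_mul_of_pos_right hltγ hγ
    rw [inv_mul_cancel₀ hγ.ne'] at this; exact this.le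
  have hδ1 : h * δ ≤ 1 := by
    have := mul_lt_mul_of_pos_right hltδ hδ
    rw [inv_mul_cancel₀ hδ.ne'] at this; exact this.le
  have hLGs : h * LG ≤ (1 - lam) / 2 := ((lt_div_iff₀ hLG).mp hltLG).le
  have hKs : h * K ≤ (1 - lam) / 2 := ((lt_div_iff₀ hK).mp hltK).le
  have hJs : h * J ≤ lam / 2 := ((lt_div_iff₀ hJ).mp hltJ).le
  have hhne : h ≠ 0 := hh0.ne'
  have hl1ne : 1 - lam ≠ 0 := hl1.ne'
  refine ⟨γ, hγ, δ, hδ, ?_⟩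
  -- packaged per-`g` facts
  have Hvb : ∀ g : E → E, (∀ x, ‖g x‖ ≤ γ) → ∀ u, ‖vmIM f lam h g u‖ ≤ M :=
    fun g hgb => vm_bound f lam h hh0 hL hLdef hbd₀ hγ1 hMdef g hgb
  have Hvl : ∀ g : E → E, (∀ x y, ‖g x - g y‖ ≤ δ * ‖x - y‖) →
      ∀ u u', ‖vmIM f lam h g u - vmIM f lam h g u'‖ ≤ N * ‖u - u'‖ :=
    fun g hgl => vm_lip f lam h hh0 hL hLdef hlipf hδ1 hNdef g hgl
  have HGb : ∀ g : E → E, (∀ x, ‖g x‖ ≤ γ) → ∀ u, ‖GmIM f lam a h g u‖ ≤ MG :=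
    fun g hgb => Gm_bound f lam a h hlam0 hbd₀ hMGdef g (Hvb g hgb)
  have HGl : ∀ g : E → E, (∀ x y, ‖g x - g y‖ ≤ δ * ‖x - y‖) →
      ∀ u u', ‖GmIM f lam a h g u - GmIM f lam a h g u'‖ ≤ LG * ‖u - u'‖ :=
    fun g hgl => Gm_lip f lam a h hh0 h1 hlam0 ha hN hB₁ hlipf hLGdef g (Hvl g hgl)
  have Hexp : ∀ g : E → E, (∀ x y, ‖g x - g y‖ ≤ δ * ‖x - y‖) →
      ∀ u u', (1 + lam) / 2 * ‖u - u'‖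
        ≤ ‖PsiIM f lam a h g u - PsiIM f lam a h g u'‖ :=
    fun g hgl => Psi_exp f lam a h hh0 hlam0 hLG hLGs g (HGl g hgl)
  have HPsiPhi : ∀ g : E → E, (∀ x y, ‖g x - g y‖ ≤ δ * ‖x - y‖) →
      ∀ y, PsiIM f lam a h g (PhiIM f lam a h g y) = y :=
    fun g hgl => Psi_Phi f lam a h g (Psi_surj f lam a h hh0 hlam0 hLG hLGs g (HGl g hgl))
  have HPhiPsi : ∀ g : E → E, (∀ x y, ‖g x - g y‖ ≤ δ * ‖x - y‖) →
      ∀ u, PhiIM f lam a h g (PsiIM f lam a h g u) = u :=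
    fun g hgl => Phi_Psi f lam a h g (Psi_inj f lam a h hh0 hlam0 hLG hLGs g (HGl g hgl))
  have HPhil : ∀ g : E → E, (∀ x y, ‖g x - g y‖ ≤ δ * ‖x - y‖) →
      ∀ y y', ‖PhiIM f lam a h g y - PhiIM f lam a h g y'‖ ≤ 2 / (1 + lam) * ‖y - y'‖ :=
    fun g hgl => Phi_lip f lam a h hlam0 g (Hexp g hgl) (HPsiPhi g hgl)
  have HRb : ∀ g : E → E, (∀ x, ‖g x‖ ≤ γ) →
      ∀ u, ‖RmIM f lam a h g u‖ ≤ (1 - lam) / 2 * γ :=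
    fun g hgb => Rm_bound f lam a h hh0 hL hLdef hB₁ ha hM hMG hlipf hγeq g
      (Hvb g hgb) (HGb g hgb)
  have HRl : ∀ g : E → E, (∀ x, ‖g x‖ ≤ γ) → (∀ x y, ‖g x - g y‖ ≤ δ * ‖x - y‖) →
      ∀ u u', ‖RmIM f lam a h g u - RmIM f lam a h g u'‖ ≤ D * ‖u - u'‖ :=
    fun g hgb hgl => Rm_lip f lam a h hh0 hL hLdef hB₁ hB₂ ha hM hN hMG hLG hlipf hA
      hDdef g (Hvb g hgb) (Hvl g hgl) (HGb g hgb) (HGl g hgl)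
  have HTb : ∀ g : E → E, (∀ x, ‖g x‖ ≤ γ) →
      ∀ y, ‖TmapIM f lam a h g y‖ ≤ γ :=
    fun g hgb => Tmap_bound f lam a h hlam0 hlam1 hγ g hgb (HRb g hgb)
  have HTl : ∀ g : E → E, (∀ x, ‖g x‖ ≤ γ) → (∀ x y, ‖g x - g y‖ ≤ δ * ‖x - y‖) →
      ∀ y y', ‖TmapIM f lam a h g y - TmapIM f lam a h g y'‖ ≤ δ * ‖y - y'‖ :=
    fun g hgb hgl => Tmap_lip f lam a h hlam0 hδ hD hDδ g hgl (HRl g hgb hgl) (HPhil g hgl)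
  -- the complete metric space of admissible graphs
  set Xset : Set (E →ᵇ E) :=
    {p | (∀ x, ‖p x‖ ≤ γ) ∧ ∀ x y, ‖p x - p y‖ ≤ δ * ‖x - y‖} with hXset
  have hclosed : IsClosed Xset := by
    have e : Xset = (⋂ x, {p : E →ᵇ E | ‖p x‖ ≤ γ}) ∩
        ⋂ x, ⋂ y, {p : E →ᵇ E | ‖p x - p y‖ ≤ δ * ‖x - y‖} := by
      ext p
      simp [hXset, Set.mem_iInter]
    rw [e]
    refine IsClosed.inter (isClosed_iInter fun x => ?_)
      (isClosed_iInter fun x => isClosed_iInter fun y => ?_)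
    · exact isClosed_le (Continuous.norm
        (continuous_eval_const x)) continuous_const
    · exact isClosed_le ((Continuous.sub
        (continuous_eval_const x)
        (continuous_eval_const y)).norm) continuous_const
  haveI : CompleteSpace ↥Xset := hclosed.completeSpace_coe
  haveI : Nonempty ↥Xset := by
    refine ⟨⟨0, ?_, ?_⟩⟩
    · intro x; simpa using hγ.le
    · intro x y; simp; positivity
  -- the graph transform
  have hTcont : ∀ gp : ↥Xset, Continuous (TmapIM f lam a h ⇑gp.1) := by
    intro gp
    have hlip : LipschitzWith δ.toNNReal (TmapIM f lam a h ⇑gp.1) := by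
      apply LipschitzWith.of_dist_le_mul
      intro y y'
      rw [dist_eq_norm, dist_eq_norm, Real.coe_toNNReal δ hδ.le]
      exact HTl (⇑gp.1) gp.2.1 gp.2.2 y y'
    exact hlip.continuous
  set Tfun : ↥Xset → ↥Xset := fun gp =>
    ⟨BoundedContinuousFunction.ofNormedAddCommGroup (TmapIM f lam a h ⇑gp.1)
        (hTcont gp) γ (HTb (⇑gp.1) gp.2.1),
      HTb (⇑gp.1) gp.2.1, HTl (⇑gp.1) gp.2.1 gp.2.2⟩ with hTfun
  -- contraction property
  have hKlt : ∀ gp₁ gp₂ : ↥Xset, dist (Tfun gp₁) (Tfun gp₂)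
      ≤ (1 + lam) / 2 * dist gp₁ gp₂ := by
    intro gp₁ gp₂
    have hdd : (0:ℝ) ≤ dist gp₁.1 gp₂.1 := dist_nonneg
    have hgd : ∀ u, ‖(⇑gp₁.1 : E → E) u - ⇑gp₂.1 u‖ ≤ dist gp₁.1 gp₂.1 := fun u => by
      rw [← dist_eq_norm]
      exact BoundedContinuousFunction.dist_coe_le_dist u
    have hpt := Tmap_contract f lam a h hh0 h1 hlam0 hlam1 ha hB₁ hδ hD hL hLdef hDδ
      hKdef hlipf (⇑gp₁.1) (⇑gp₂.1) hdd hgd gp₁.2.2 (Hexp _ gp₁.2.2)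
      (HPsiPhi _ gp₁.2.2) (HPsiPhi _ gp₂.2.2) (HRl _ gp₁.2.1 gp₁.2.2)
    rw [Subtype.dist_eq, Subtype.dist_eq]
    refine (BoundedContinuousFunction.dist_le (by positivity)).mpr ?_
    intro x
    rw [dist_eq_norm]
    have e1 : ‖TmapIM f lam a h (⇑gp₁.1) x - TmapIM f lam a h (⇑gp₂.1) x‖
        ≤ (lam + h * K) * dist gp₁.1 gp₂.1 := hpt x
    have e2 : (lam + h * K) * dist gp₁.1 gp₂.1
        ≤ (1 + lam) / 2 * dist gp₁.1 gp₂.1 := by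
      refine mul_le_mul_of_nonneg_right ?_ hdd
      linarith
    have e3 : dist ((Tfun gp₁).1 x) ((Tfun gp₂).1 x)
        = ‖TmapIM f lam a h (⇑gp₁.1) x - TmapIM f lam a h (⇑gp₂.1) x‖ := by
      rw [hTfun, dist_eq_norm]
      rfl
    rw [← dist_eq_norm, e3]
    linarith
  have hklt1 : ((⟨(1 + lam) / 2, by positivity⟩ : ℝ≥0) : ℝ≥0) < 1 := by
    change ((1 + lam) / 2 : ℝ) < 1
    show (1 + lam) / 2 < 1
    linarith
  have hcontr : ContractingWith ⟨(1 + lam) / 2, by positivity⟩ Tfun := by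
    constructor
    · exact hklt1
    · apply LipschitzWith.of_dist_le_mul
      intro gp₁ gp₂
      exact hKlt gp₁ gp₂
  set gstar := ContractingWith.fixedPoint Tfun hcontr with hgstar
  have hfixTg : Tfun gstar = gstar := hcontr.fixedPoint_isFixedPt
  have hfixpt : ∀ y, TmapIM f lam a h (⇑gstar.1) y = gstar.1 y := by
    intro y
    have h1' := congrArg (fun q : ↥Xset => (q.1 : E → E) y) hfixTg
    simpa [hTfun] using h1'
  refine ⟨⇑gstar.1, ⟨⟨gstar.1.continuous, gstar.2.1, gstar.2.2⟩, ?_⟩, ?_⟩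
  · exact fixed_implies_iff f lam a h hh0 h1 hlam0 hl1ne hB₁ ha hδ hδ1 hL hLdef hJdef
      hJs hlipf (⇑gstar.1) gstar.2.2 (HPhiPsi _ gstar.2.2) hfixpt
  · rintro g' ⟨⟨hc', hb', hl'⟩, hiff'⟩
    have hfix' : ∀ y, TmapIM f lam a h g' y = g' y :=
      iff_implies_fixed f lam a h hh0 hl1ne g' (HPsiPhi g' hl') hiff'
    have hfixg'' : Tfun ⟨BoundedContinuousFunction.ofNormedAddCommGroup g' hc' γ hb',
        hb', hl'⟩ = ⟨BoundedContinuousFunction.ofNormedAddCommGroup g' hc' γ hb',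
        hb', hl'⟩ := by
      apply Subtype.ext
      apply BoundedContinuousFunction.ext
      intro y
      show TmapIM f lam a h g' y = g' y
      exact hfix' y
    have huniq := hcontr.fixedPoint_unique hfixg''
    rw [← hgstar] at huniq
    exact congrArg (fun q : ↥Xset => (q.1 : E → E)) huniq

end MainIM

section DerivIM

variable {E : Type*} [NormedAddCommGroup E] [NormedSpace ℝ E]
variable {F : Type*} [NormedAddCommGroup F] [NormedSpace ℝ F]

lemma lip_of_fderiv_bound {f : E → F} (hd : Differentiable ℝ f) {C : ℝ}
    (hb : ∀ x, ‖fderiv ℝ f x‖ ≤ C) : ∀ x y, ‖f x - f y‖ ≤ C * ‖x - y‖ := fun x y =>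
  Convex.norm_image_sub_le_of_norm_fderiv_le (fun z _ => hd z) (fun z _ => hb z)
    convex_univ (Set.mem_univ y) (Set.mem_univ x)

lemma second_diff_bound {f : E → F} (hd : Differentiable ℝ f) {B₂ : ℝ}
    (hb : ∀ x y, ‖fderiv ℝ f x - fderiv ℝ f y‖ ≤ B₂ * ‖x - y‖) :
    ∀ s x y, ‖(f (x + s) - f x) - (f (y + s) - f y)‖ ≤ B₂ * ‖s‖ * ‖x - y‖ := by
  intro s x y
  have hF : ∀ z : E, HasFDerivAt (fun z => f (z + s) - f z)
      (fderiv ℝ f (z + s) - fderiv ℝ f z) z := by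
    intro z
    have h1 : HasFDerivAt (fun z : E => f (z + s))
        ((fderiv ℝ f (z + s)).comp (ContinuousLinearMap.id ℝ E)) z :=
      (hd (z + s)).hasFDerivAt.comp z ((hasFDerivAt_id z).add_const s)
    rw [ContinuousLinearMap.comp_id] at h1
    exact h1.sub (hd z).hasFDerivAt
  have := Convex.norm_image_sub_le_of_norm_hasFDerivWithin_le
    (f := fun z => f (z + s) - f z) (f' := fun z => fderiv ℝ f (z + s) - fderiv ℝ f z)
    (fun z _ => (hF z).hasFDerivWithinAt)
    (fun z _ => by simpa [add_sub_cancel_left] using hb (z + s) z)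
    convex_univ (Set.mem_univ y) (Set.mem_univ x)
  simpa [mul_assoc] using this

end DerivIM

/-- Theorem 3 (existence and uniqueness of the invariant-manifold function `g`):
there is `τ > 0` such that for all `h ∈ (0,τ)` there exist constants `γ, δ > 0`
and a unique `g ∈ Γ(γ,δ)` (continuous, `γ`-bounded, `δ`-Lipschitz) such that the manifold
`v = λ̄ f(u) + h g(u)` is invariant for the two-step momentum method:
`v = λ̄ f(u) + h g(u)` holds iff it holds at the next iterate. -/
theorem invariant_manifold_existence
    {d : ℕ} (Φ : EuclideanSpace ℝ (Fin d) → ℝ)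
    (B₀ B₁ B₂ : ℝ) (hB₀ : 0 < B₀) (hB₁ : 0 < B₁) (hB₂ : 0 < B₂)
    (hΦ : ContDiff ℝ 3 Φ)
    (f : EuclideanSpace ℝ (Fin d) → EuclideanSpace ℝ (Fin d))
    (hf : f = fun x => -gradient Φ x)
    (hbd₀ : ∀ x, ‖f x‖ ≤ B₀)
    (hbd₁ : ∀ x, ‖fderiv ℝ f x‖ ≤ B₁)
    (hbd₂ : ∀ x, ‖fderiv ℝ (fderiv ℝ f) x‖ ≤ B₂)
    (lam a : ℝ) (hlam : lam ∈ Set.Ioo (0:ℝ) 1) (ha : 0 ≤ a) :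
    ∃ τ : ℝ, 0 < τ ∧
      ∀ h : ℝ, 0 < h → h < τ →
        ∃ γ : ℝ, 0 < γ ∧ ∃ δ : ℝ, 0 < δ ∧
          ∃! g : EuclideanSpace ℝ (Fin d) → EuclideanSpace ℝ (Fin d),
            (Continuous g ∧ (∀ ξ, ‖g ξ‖ ≤ γ) ∧
              (∀ ξ η, ‖g ξ - g η‖ ≤ δ * ‖ξ - η‖)) ∧
            ∀ uu vv : EuclideanSpace ℝ (Fin d),
              (vv = (1-lam)⁻¹ • f uu + h • g uu ↔
                lam • vv + f (uu + (h*a) • vv)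
                  = (1-lam)⁻¹ • f (uu + (h*lam) • vv + h • f (uu + (h*a) • vv))
                    + h • g (uu + (h*lam) • vv + h • f (uu + (h*a) • vv))) := by
  have hcd : ContDiff ℝ 2 f := by
    rw [hf]
    have h1 : ContDiff ℝ 2 (fderiv ℝ Φ) := hΦ.fderiv_right (by norm_num)
    have h2 : ContDiff ℝ 2 (fun l : (EuclideanSpace ℝ (Fin d)) →L[ℝ] ℝ =>
        (InnerProductSpace.toDual ℝ (EuclideanSpace ℝ (Fin d))).symm l) :=
      (InnerProductSpace.toDual ℝ (EuclideanSpace ℝ (Fin d))).symm.contDiff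
    exact (h2.comp h1).neg
  have hdiff : Differentiable ℝ f := hcd.differentiable (by norm_num)
  have hdiff2 : Differentiable ℝ (fderiv ℝ f) :=
    (hcd.fderiv_right (m := 1) (by norm_num)).differentiable (by norm_num)
  have hlipf : ∀ x y, ‖f x - f y‖ ≤ B₁ * ‖x - y‖ := lip_of_fderiv_bound hdiff hbd₁
  have hlipDf : ∀ x y, ‖fderiv ℝ f x - fderiv ℝ f y‖ ≤ B₂ * ‖x - y‖ :=
    lip_of_fderiv_bound hdiff2 hbd₂
  have hA : ∀ s x y, ‖(f (x + s) - f x) - (f (y + s) - f y)‖ ≤ B₂ * ‖s‖ * ‖x - y‖ :=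
    second_diff_bound hdiff hlipDf
  exact core_exists f B₀ B₁ B₂ hB₀ hB₁ hB₂ hdiff.continuous hbd₀ hlipf hA
    lam a hlam.1 hlam.2 ha
end

section
/- Let u ∈ C³([0,∞); ℝ^d) solve h α ü + (1−λ) u̇ = f(u) with u(0) = 𝗎₀, u̇(0) = 𝗏₀, where α > 0 is independent of h and h ≤ (1−λ)²/(2αB₁). Then there exist constants C⁽¹⁾, C⁽²⁾₁, C⁽²⁾₂, C⁽³⁾₁, C⁽³⁾₂ > 0, independent of h, such that for all t ≥ 0: |u̇(t)| ≤ C⁽¹⁾; |ü(t)| ≤ (C⁽²⁾₁/h)·exp(−(1−λ)t/(2hα)) + C⁽²⁾₂; and |u⃛(t)| ≤ (C⁽³⁾₁/h²)·exp(−(1−λ)t/(2hα)) + C⁽³⁾₂. -/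
open Real Set

section Aux

lemma decay_est {E : Type*} [NormedAddCommGroup E] [NormedSpace ℝ E]
    {y y' r : ℝ → E} {a b M N : ℝ}
    (ha : 0 < a) (hb : 0 < b) (hM : 0 ≤ M) (hN : 0 ≤ N)
    (hy : ∀ t, HasDerivAt y (y' t) t)
    (heq : ∀ t, a • y' t + b • y t = r t)
    (hr : ∀ t, 0 ≤ t → ‖r t‖ ≤ M + N * Real.exp (-(b / (2*a)) * t)) :
    ∀ t, 0 ≤ t → ‖y t‖ ≤ (‖y 0‖ + 2*N/b) * Real.exp (-(b / (2*a)) * t) + M / b := by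
  set k : ℝ := b / a with hk
  have hk0 : 0 < k := div_pos hb ha
  have ha' : a ≠ 0 := ha.ne'
  have hb' : b ≠ 0 := hb.ne'
  -- derivative of Y s = exp (k s) • y s
  have hY : ∀ s : ℝ, HasDerivAt (fun s => Real.exp (k*s) • y s)
      (Real.exp (k*s) • (a⁻¹ • r s)) s := by
    intro s
    have h1 : HasDerivAt (fun s : ℝ => Real.exp (k*s)) (Real.exp (k*s) * k) s := by
      simpa using ((hasDerivAt_id s).const_mul k).exp
    have h2 := h1.smul (hy s)
    convert h2 using 1
    · rfl
    have hy' : y' s = a⁻¹ • (r s - b • y s) := by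
      have h3 : a • y' s = r s - b • y s := by
        rw [← heq s]; abel
      rw [← h3, smul_smul, inv_mul_cancel₀ ha', one_smul]
    have hab : a⁻¹ • (b • y s) = k • y s := by
      rw [smul_smul]; congr 1; rw [hk, div_eq_mul_inv, mul_comm]
    rw [hy', smul_sub a⁻¹, hab]; simp only [smul_sub, smul_smul]
    abel
  intro T hT
  -- boundary function
  set B : ℝ → ℝ := fun s => ‖y 0‖ + (M/b) * (Real.exp (k*s) - 1)
      + (2*N/b) * (Real.exp (k*s/2) - 1) with hB
  have hB' : ∀ s : ℝ, HasDerivAt B ((M/a) * Real.exp (k*s) + (N/a) * Real.exp (k*s/2)) s := by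
    intro s
    have h1 : HasDerivAt (fun s : ℝ => Real.exp (k*s)) (Real.exp (k*s) * k) s := by
      simpa using ((hasDerivAt_id s).const_mul k).exp
    have h2 : HasDerivAt (fun s : ℝ => Real.exp (k*s/2)) (Real.exp (k*s/2) * (k/2)) s := by
      have h4 : HasDerivAt (fun s : ℝ => k * s / 2) (k/2) s := by
        simpa using (((hasDerivAt_id s).const_mul k).div_const 2)
      simpa using h4.exp
    have h3 := ((((h1.sub_const 1).const_mul (M/b))).add
      (((h2.sub_const 1).const_mul (2*N/b)))).const_add ‖y 0‖
    have heqd : (M/a) * Real.exp (k*s) + (N/a) * Real.exp (k*s/2)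
        = M / b * (Real.exp (k * s) * k) + 2 * N / b * (Real.exp (k * s / 2) * (k / 2)) := by
      rw [hk]; field_simp
    rw [heqd]
    have heqf : B = fun x => ‖y 0‖ + (M / b * (Real.exp (k * x) - 1)
        + 2 * N / b * (Real.exp (k * x / 2) - 1)) := by
      funext x; rw [hB]; ring
    rw [heqf]
    exact h3
  have hbound : ∀ s ∈ Ico (0:ℝ) T, ‖Real.exp (k*s) • (a⁻¹ • r s)‖
      ≤ (M/a) * Real.exp (k*s) + (N/a) * Real.exp (k*s/2) := by
    intro s hs
    rw [norm_smul, norm_smul, Real.norm_eq_abs, Real.norm_eq_abs,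
      abs_of_pos (Real.exp_pos _), abs_of_pos (inv_pos.mpr ha)]
    have hrs := hr s hs.1
    have hexp : Real.exp (k*s) * Real.exp (-(b / (2*a)) * s) = Real.exp (k*s/2) := by
      rw [← Real.exp_add]; congr 1; rw [hk]; field_simp; ring
    calc Real.exp (k*s) * (a⁻¹ * ‖r s‖)
        ≤ Real.exp (k*s) * (a⁻¹ * (M + N * Real.exp (-(b / (2*a)) * s))) := by
          apply mul_le_mul_of_nonneg_left _ (Real.exp_pos _).le
          exact mul_le_mul_of_nonneg_left hrs (inv_pos.mpr ha).le
      _ = (M/a) * Real.exp (k*s) + (N/a) * (Real.exp (k*s) * Real.exp (-(b / (2*a)) * s)) := by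
          field_simp
      _ = (M/a) * Real.exp (k*s) + (N/a) * Real.exp (k*s/2) := by rw [hexp]
  have key := image_norm_le_of_norm_deriv_right_le_deriv_boundary
    (f := fun s => Real.exp (k*s) • y s) (a := 0) (b := T)
    (fun s _ => (hY s).continuousAt.continuousWithinAt)
    (fun s _ => (hY s).hasDerivWithinAt)
    (by simp [hB]) hB' hbound (right_mem_Icc.mpr hT)
  -- now extract
  set Q : ℝ := Real.exp (k*T/2) with hQdef
  have hQ : Q ^ 2 = Real.exp (k*T) := by
    rw [hQdef, sq, ← Real.exp_add]; congr 1; ring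
  have hQ1 : 1 ≤ Q := Real.one_le_exp (by positivity)
  have hQ0 : 0 < Q := Real.exp_pos _
  have hYT : ‖y T‖ * Q^2 ≤ ‖y 0‖ + (M/b) * (Q^2 - 1) + (2*N/b) * (Q - 1) := by
    have hn : ‖Real.exp (k*T) • y T‖ = Real.exp (k*T) * ‖y T‖ := by
      rw [norm_smul, Real.norm_eq_abs, abs_of_pos (Real.exp_pos _)]
    rw [hn, hB] at key
    rw [hQ]
    linarith [key]
  have hexpT : Real.exp (-(b / (2*a)) * T) = Q⁻¹ := by
    have h5 : -(b / (2*a)) * T = -(k*T/2) := by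
      rw [hk]; field_simp; try ring
      try tauto
    rw [h5, Real.exp_neg, hQdef]
  rw [hexpT]
  have hNb : 0 ≤ 2*N/b := by positivity
  have hMb : 0 ≤ M/b := by positivity
  have h0 : 0 ≤ ‖y 0‖ := norm_nonneg _
  have h2 : ‖y T‖ * Q^2 ≤ ((‖y 0‖ + 2*N/b) * Q⁻¹ + M/b) * Q^2 := by
    have h6 : ((‖y 0‖ + 2*N/b) * Q⁻¹ + M/b) * Q^2 = (‖y 0‖ + 2*N/b)*Q + (M/b)*Q^2 := by
      field_simp
    rw [h6]
    nlinarith [hYT]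
  exact le_of_mul_le_mul_right h2 (by positivity)

end Aux

set_option maxHeartbeats 1600000 in
/-- Lemma (a priori bounds on the derivatives of the solution of the modified equation):
if `u` solves `hα ü + (1−λ) u̇ = f(u)` with `u(0) = u₀`, `u̇(0) = v₀`, `α > 0` independent
of `h`, and `h ≤ (1−λ)²/(2αB₁)`, then there exist constants `C⁽¹⁾, C⁽²⁾₁, C⁽²⁾₂, C⁽³⁾₁,
C⁽³⁾₂ > 0`, independent of `h`, bounding `u̇`, `ü`, `u⃛` as stated. -/
theorem modified_equation_derivative_bounds
    {d : ℕ} (Φ : EuclideanSpace ℝ (Fin d) → ℝ)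
    (B₀ B₁ B₂ : ℝ) (hB₀ : 0 < B₀) (hB₁ : 0 < B₁) (hB₂ : 0 < B₂)
    (hΦ : ContDiff ℝ 3 Φ)
    (f : EuclideanSpace ℝ (Fin d) → EuclideanSpace ℝ (Fin d))
    (hf : f = fun x => -gradient Φ x)
    (hbd₀ : ∀ x, ‖f x‖ ≤ B₀)
    (hbd₁ : ∀ x, ‖fderiv ℝ f x‖ ≤ B₁)
    (hbd₂ : ∀ x, ‖fderiv ℝ (fderiv ℝ f) x‖ ≤ B₂)
    (lam : ℝ) (hlam : lam ∈ Set.Ioo (0:ℝ) 1)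
    (α : ℝ) (hα : 0 < α)
    (u₀ v₀ : EuclideanSpace ℝ (Fin d)) :
    ∃ C1 C21 C22 C31 C32 : ℝ,
      0 < C1 ∧ 0 < C21 ∧ 0 < C22 ∧ 0 < C31 ∧ 0 < C32 ∧
      ∀ h : ℝ, 0 < h → h ≤ (1-lam)^2 / (2*α*B₁) →
      ∀ u v w z : ℝ → EuclideanSpace ℝ (Fin d),
        ContDiff ℝ 3 u →
        (∀ t : ℝ, HasDerivAt u (v t) t) →
        (∀ t : ℝ, HasDerivAt v (w t) t) →
        (∀ t : ℝ, HasDerivAt w (z t) t) →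
        (∀ t : ℝ, (h*α) • w t + (1-lam) • v t = f (u t)) →
        u 0 = u₀ → v 0 = v₀ →
        ∀ t : ℝ, 0 ≤ t →
          ‖v t‖ ≤ C1 ∧
          ‖w t‖ ≤ (C21 / h) * Real.exp (-(1-lam) * t / (2*h*α)) + C22 ∧
          ‖z t‖ ≤ (C31 / h^2) * Real.exp (-(1-lam) * t / (2*h*α)) + C32 := by
  obtain ⟨hlam0, hlam1⟩ := hlam
  have hb : 0 < 1 - lam := by linarith
  have hb1 : 1 - lam ≤ 1 := by linarith
  -- smoothness of f
  have hfC2 : ContDiff ℝ 2 f := by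
    rw [hf]
    have h1 : ContDiff ℝ 2 (fderiv ℝ Φ) := hΦ.fderiv_right (by norm_num)
    exact (((InnerProductSpace.toDual ℝ
      (EuclideanSpace ℝ (Fin d))).symm.contDiff.comp h1)).neg
  have hfd : Differentiable ℝ f := hfC2.differentiable (by norm_num)
  have hfd' : Differentiable ℝ (fderiv ℝ f) :=
    (hfC2.fderiv_right (m := 1) (by norm_num)).differentiable (by norm_num)
  -- the constants
  set b : ℝ := 1 - lam with hbdef
  set C1 : ℝ := ‖v₀‖ + B₀ / b with hC1
  set C21 : ℝ := (B₀ + ‖v₀‖) / α with hC21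
  set C22 : ℝ := B₁ * C1 / b with hC22
  set H : ℝ := b^2 / (2*α*B₁) with hH
  set C31 : ℝ := B₁*C1*H/α + (B₀+‖v₀‖)/α^2 + 2*B₁*C21*H/b with hC31
  set C32 : ℝ := (B₂*C1^2 + B₁*C22)/b with hC32
  have hC1pos : 0 < C1 := by positivity
  have hC21pos : 0 < C21 := by positivity
  have hHpos : 0 < H := by positivity
  refine ⟨C1, C21, C22, C31, C32, hC1pos, hC21pos, by positivity, by positivity, by positivity, ?_⟩
  intro h hh hhH u v w z hu hu' hv' hw' hode hu0 hv0
  have ha : 0 < h * α := mul_pos hh hα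
  have ha' : (h*α) ≠ 0 := ha.ne'
  -- exponent conversion
  have hexpeq : ∀ t : ℝ, Real.exp (-(b / (2*(h*α))) * t) = Real.exp (-(1-lam) * t / (2*h*α)) := by
    intro t; congr 1; rw [hbdef]; field_simp
    try ring
    try tauto
  -- Claim 1 : bound on v
  have hvb' := decay_est ha hb hB₀.le le_rfl hv' hode
    (by intro t ht; simpa using hbd₀ (u t))
  have hvb : ∀ t, 0 ≤ t → ‖v t‖ ≤ C1 := by
    intro t ht
    have h1 := hvb' t ht
    have h2 : Real.exp (-(b / (2*(h*α))) * t) ≤ 1 := by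
      apply Real.exp_le_one_iff.mpr
      have : 0 ≤ b / (2*(h*α)) * t := by positivity
      linarith
    have h3 : (0:ℝ) ≤ ‖v 0‖ + 2*0/b := by positivity
    calc ‖v t‖ ≤ (‖v 0‖ + 2*0/b) * Real.exp (-(b / (2*(h*α))) * t) + B₀ / b := h1
      _ ≤ (‖v 0‖ + 2*0/b) * 1 + B₀ / b := by nlinarith
      _ = ‖v₀‖ + B₀ / b := by rw [hv0]; ring
      _ = C1 := by rw [hC1]
  -- derived first-order equation for w
  have hDf : ∀ t, HasDerivAt (fun t => f (u t)) ((fderiv ℝ f (u t)) (v t)) t :=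
    fun t => (hfd (u t)).hasFDerivAt.comp_hasDerivAt t (hu' t)
  have E1 : ∀ t, (h*α) • z t + b • w t = (fderiv ℝ f (u t)) (v t) := by
    intro t
    have hfeq : (fun t => (h*α) • w t + b • v t) = fun t => f (u t) := by
      funext s; rw [hbdef]; exact hode s
    have h1 : HasDerivAt (fun t => f (u t)) ((h*α) • z t + b • w t) t := by
      rw [← hfeq]
      exact ((hw' t).const_smul (h*α)).add ((hv' t).const_smul b)
    exact h1.unique (hDf t)
  -- bound on w 0
  have hw0 : ‖w 0‖ ≤ C21 / h := by
    have h1 : (h*α) • w 0 = f (u 0) - b • v 0 := by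
      rw [← hode 0]; abel
    have h2 : ‖(h*α) • w 0‖ ≤ B₀ + ‖v₀‖ := by
      rw [h1, hu0, hv0]
      calc ‖f u₀ - b • v₀‖ ≤ ‖f u₀‖ + ‖b • v₀‖ := norm_sub_le _ _
        _ ≤ B₀ + ‖v₀‖ := by
            refine add_le_add (hbd₀ u₀) ?_
            rw [norm_smul, Real.norm_eq_abs, abs_of_pos hb]
            nlinarith [norm_nonneg v₀]
    rw [norm_smul, Real.norm_eq_abs, abs_of_pos ha] at h2
    rw [hC21, div_div, le_div_iff₀ (by positivity : (0:ℝ) < α*h)]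
    nlinarith [h2]
  -- Claim 2 : bound on w
  have hwb' := decay_est ha hb (by positivity : (0:ℝ) ≤ B₁ * C1) le_rfl hw' E1
    (by
      intro t ht
      have h1 : ‖(fderiv ℝ f (u t)) (v t)‖ ≤ B₁ * C1 := by
        calc ‖(fderiv ℝ f (u t)) (v t)‖ ≤ ‖fderiv ℝ f (u t)‖ * ‖v t‖ :=
              ContinuousLinearMap.le_opNorm _ _
          _ ≤ B₁ * C1 := mul_le_mul (hbd₁ _) (hvb t ht) (norm_nonneg _) hB₁.le
      simpa using h1)
  have hwb : ∀ t, 0 ≤ t → ‖w t‖ ≤ (C21/h) * Real.exp (-(1-lam) * t / (2*h*α)) + C22 := by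
    intro t ht
    have h1 := hwb' t ht
    rw [hexpeq t] at h1
    have hexps : 0 < Real.exp (-(1-lam) * t / (2*h*α)) := Real.exp_pos _
    calc ‖w t‖ ≤ (‖w 0‖ + 2*0/b) * Real.exp (-(1-lam) * t / (2*h*α)) + B₁*C1/b := h1
      _ ≤ (C21/h) * Real.exp (-(1-lam) * t / (2*h*α)) + C22 := by
          rw [hC22]
          have h3 : ‖w 0‖ + 2*0/b ≤ C21/h := by simpa using hw0
          nlinarith
  -- derivative of g t = Df(u t) (v t)
  set g : ℝ → EuclideanSpace ℝ (Fin d) := fun t => (fderiv ℝ f (u t)) (v t) with hgdef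
  set g' : ℝ → EuclideanSpace ℝ (Fin d) :=
    fun t => ((fderiv ℝ (fderiv ℝ f) (u t)) (v t)) (v t) + (fderiv ℝ f (u t)) (w t) with hg'def
  have hg : ∀ t, HasDerivAt g (g' t) t := by
    intro t
    have hA : HasDerivAt (fun t => fderiv ℝ f (u t)) ((fderiv ℝ (fderiv ℝ f) (u t)) (v t)) t :=
      (hfd' (u t)).hasFDerivAt.comp_hasDerivAt t (hu' t)
    exact hA.clm_apply (hv' t)
  -- derivative of z
  set ζ : ℝ → EuclideanSpace ℝ (Fin d) := fun t => (h*α)⁻¹ • (g' t - b • z t) with hζdef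
  have hz' : ∀ t, HasDerivAt z (ζ t) t := by
    intro t
    have hzz : HasDerivAt (fun t => (h*α)⁻¹ • (g t - b • w t)) (ζ t) t :=
      ((hg t).sub ((hw' t).const_smul b)).const_smul ((h*α)⁻¹)
    have hfeq : (fun t => (h*α)⁻¹ • (g t - b • w t)) = z := by
      funext s
      have h1 : g s - b • w s = (h*α) • z s := by
        simp only [hgdef]; rw [← E1 s]; abel
      rw [h1, smul_smul, inv_mul_cancel₀ ha', one_smul]
    rw [hfeq] at hzz
    exact hzz
  have E2 : ∀ t, (h*α) • ζ t + b • z t = g' t := by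
    intro t
    rw [hζdef]
    simp only [smul_smul, mul_inv_cancel₀ ha', one_smul]
    abel
  -- bound on g'
  have hg'b : ∀ t, 0 ≤ t → ‖g' t‖ ≤ (B₂*C1^2 + B₁*C22)
      + (B₁*C21/h) * Real.exp (-(b / (2*(h*α))) * t) := by
    intro t ht
    rw [hg'def]
    have h1 : ‖((fderiv ℝ (fderiv ℝ f) (u t)) (v t)) (v t)‖ ≤ B₂ * C1^2 := by
      calc ‖((fderiv ℝ (fderiv ℝ f) (u t)) (v t)) (v t)‖
          ≤ ‖(fderiv ℝ (fderiv ℝ f) (u t)) (v t)‖ * ‖v t‖ := ContinuousLinearMap.le_opNorm _ _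
        _ ≤ (‖fderiv ℝ (fderiv ℝ f) (u t)‖ * ‖v t‖) * ‖v t‖ := by
            apply mul_le_mul_of_nonneg_right (ContinuousLinearMap.le_opNorm _ _) (norm_nonneg _)
        _ ≤ (B₂ * C1) * C1 := by
            have hv1 := hvb t ht
            have hvn := norm_nonneg (v t)
            apply mul_le_mul _ hv1 (norm_nonneg _) (by positivity)
            exact mul_le_mul (hbd₂ _) hv1 (norm_nonneg _) hB₂.le
        _ = B₂ * C1^2 := by ring
    have h2 : ‖(fderiv ℝ f (u t)) (w t)‖
        ≤ B₁*C22 + (B₁*C21/h) * Real.exp (-(b / (2*(h*α))) * t) := by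
      calc ‖(fderiv ℝ f (u t)) (w t)‖ ≤ ‖fderiv ℝ f (u t)‖ * ‖w t‖ :=
            ContinuousLinearMap.le_opNorm _ _
        _ ≤ B₁ * ‖w t‖ := mul_le_mul_of_nonneg_right (hbd₁ _) (norm_nonneg _)
        _ ≤ B₁ * ((C21/h) * Real.exp (-(1-lam) * t / (2*h*α)) + C22) :=
            mul_le_mul_of_nonneg_left (hwb t ht) hB₁.le
        _ = B₁*C22 + (B₁*C21/h) * Real.exp (-(b / (2*(h*α))) * t) := by
            rw [hexpeq t]; ring
    calc ‖((fderiv ℝ (fderiv ℝ f) (u t)) (v t)) (v t) + (fderiv ℝ f (u t)) (w t)‖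
        ≤ ‖((fderiv ℝ (fderiv ℝ f) (u t)) (v t)) (v t)‖ + ‖(fderiv ℝ f (u t)) (w t)‖ :=
          norm_add_le _ _
      _ ≤ (B₂*C1^2 + B₁*C22) + (B₁*C21/h) * Real.exp (-(b / (2*(h*α))) * t) :=
          (add_le_add h1 h2).trans (le_of_eq (by ring))
  -- Claim 3 : bound on z
  have hzb' := decay_est ha hb (by positivity : (0:ℝ) ≤ B₂*C1^2 + B₁*C22)
    (by positivity : (0:ℝ) ≤ B₁*C21/h) hz' E2 hg'b
  -- bound on z 0
  have hz0 : ‖z 0‖ ≤ B₁*C1/(h*α) + (B₀+‖v₀‖)/(h^2*α^2) := by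
    have h1 : (h*α) • z 0 = g 0 - b • w 0 := by
      simp only [hgdef]; rw [← E1 0]; abel
    have h2 : (h*α) * ‖z 0‖ ≤ B₁*C1 + ‖w 0‖ := by
      rw [← abs_of_pos ha, ← Real.norm_eq_abs, ← norm_smul, h1]
      calc ‖g 0 - b • w 0‖ ≤ ‖g 0‖ + ‖b • w 0‖ := norm_sub_le _ _
        _ ≤ B₁*C1 + ‖w 0‖ := by
            refine add_le_add ?_ ?_
            · rw [hgdef]
              calc ‖(fderiv ℝ f (u 0)) (v 0)‖ ≤ ‖fderiv ℝ f (u 0)‖ * ‖v 0‖ :=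
                    ContinuousLinearMap.le_opNorm _ _
                _ ≤ B₁ * C1 := mul_le_mul (hbd₁ _) (hvb 0 le_rfl) (norm_nonneg _) hB₁.le
            · rw [norm_smul, Real.norm_eq_abs, abs_of_pos hb]
              nlinarith [norm_nonneg (w 0)]
    have h3 : ‖w 0‖ ≤ (B₀+‖v₀‖)/(h*α) := by
      rw [hC21, div_div] at hw0
      calc ‖w 0‖ ≤ (B₀+‖v₀‖)/(α*h) := hw0
        _ = (B₀+‖v₀‖)/(h*α) := by rw [mul_comm]
    have h4 : (h*α) * ‖z 0‖ ≤ B₁*C1 + (B₀+‖v₀‖)/(h*α) :=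
      h2.trans (add_le_add_right h3 _)
    rw [← le_div_iff₀' ha] at h4
    calc ‖z 0‖ ≤ (B₁*C1 + (B₀+‖v₀‖)/(h*α))/(h*α) := h4
      _ = B₁*C1/(h*α) + (B₀+‖v₀‖)/(h^2*α^2) := by field_simp
  have hhH' : h ≤ H := by rw [hH, hbdef]; exact hhH
  have hzb : ∀ t, 0 ≤ t → ‖z t‖ ≤ (C31/h^2) * Real.exp (-(1-lam) * t / (2*h*α)) + C32 := by
    intro t ht
    have h1 := hzb' t ht
    rw [hexpeq t] at h1
    have hexps : 0 < Real.exp (-(1-lam) * t / (2*h*α)) := Real.exp_pos _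
    have hcoef : ‖z 0‖ + 2*(B₁*C21/h)/b ≤ C31/h^2 := by
      have p1 : B₁*C1/(h*α) ≤ (B₁*C1*H/α)/h^2 := by
        have e1 : B₁*C1/(h*α) = (B₁*C1*h/α)/h^2 := by
          field_simp
          try ring
          try tauto
        rw [e1]
        gcongr
      have p2 : (B₀+‖v₀‖)/(h^2*α^2) = ((B₀+‖v₀‖)/α^2)/h^2 := by
        field_simp
        try ring
        try tauto
      have p3 : 2*(B₁*C21/h)/b ≤ (2*B₁*C21*H/b)/h^2 := by
        have e1 : 2*(B₁*C21/h)/b = (2*B₁*C21*h/b)/h^2 := by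
          field_simp
          try ring
          try tauto
        rw [e1]
        gcongr
      rw [hC31]
      calc ‖z 0‖ + 2*(B₁*C21/h)/b
          ≤ (B₁*C1/(h*α) + (B₀+‖v₀‖)/(h^2*α^2)) + (2*B₁*C21*H/b)/h^2 := by linarith [hz0]
        _ ≤ ((B₁*C1*H/α)/h^2 + ((B₀+‖v₀‖)/α^2)/h^2) + (2*B₁*C21*H/b)/h^2 := by
            rw [p2]; linarith
        _ = (B₁*C1*H/α + (B₀+‖v₀‖)/α^2 + 2*B₁*C21*H/b)/h^2 := by ring
    calc ‖z t‖ ≤ (‖z 0‖ + 2*(B₁*C21/h)/b) * Real.exp (-(1-lam) * t / (2*h*α))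
          + (B₂*C1^2 + B₁*C22)/b := h1
      _ ≤ (C31/h^2) * Real.exp (-(1-lam) * t / (2*h*α)) + C32 := by
          rw [hC32]
          nlinarith
  exact fun t ht => ⟨hvb t ht, hwb t ht, hzb t ht⟩
end

section
/- For any g, q ∈ Γ(γ,δ) and ξ, η ∈ ℝ^d, the integral I⁽²⁾_g(ξ) := ∫₀¹ Df(ξ + s h z_g(ξ)) z_g(ξ) ds satisfies: |I⁽²⁾_g(ξ)| ≤ B₁K₃; |I⁽²⁾_g(ξ) − I⁽²⁾_g(η)| ≤ ((B₁ + hB₂K₃)(λK₂ + B₁(1 + haK₂)) + B₂K₃)|ξ − η|; and |I⁽²⁾_g(ξ) − I⁽²⁾_q(ξ)| ≤ h(λ + hB₁a)(B₁ + hB₂K₃)|g(ξ) − q(ξ)|, where K₁ := λ̄B₀ + hγ, K₂ := λ̄B₁ + hδ and K₃ := B₀ + λK₁. -/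
/-- `w_g(ξ) := λ̄ f(ξ) + h g(ξ)`. -/
noncomputable def wMap {d : ℕ}
    (f : EuclideanSpace ℝ (Fin d) → EuclideanSpace ℝ (Fin d)) (lam h : ℝ)
    (g : EuclideanSpace ℝ (Fin d) → EuclideanSpace ℝ (Fin d))
    (ξ : EuclideanSpace ℝ (Fin d)) : EuclideanSpace ℝ (Fin d) :=
  (1-lam)⁻¹ • f ξ + h • g ξ

/-- `z_g(ξ) := λ w_g(ξ) + f(ξ + h a w_g(ξ))`. -/
noncomputable def zMap {d : ℕ}
    (f : EuclideanSpace ℝ (Fin d) → EuclideanSpace ℝ (Fin d)) (lam h a : ℝ)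
    (g : EuclideanSpace ℝ (Fin d) → EuclideanSpace ℝ (Fin d))
    (ξ : EuclideanSpace ℝ (Fin d)) : EuclideanSpace ℝ (Fin d) :=
  lam • wMap f lam h g ξ + f (ξ + (h*a) • wMap f lam h g ξ)

/-- `I⁽²⁾_g(ξ) := ∫₀¹ Df(ξ + s·h·z_g(ξ)) z_g(ξ) ds`. -/
noncomputable def I2 {d : ℕ}
    (f : EuclideanSpace ℝ (Fin d) → EuclideanSpace ℝ (Fin d)) (lam h a : ℝ)
    (g : EuclideanSpace ℝ (Fin d) → EuclideanSpace ℝ (Fin d))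
    (ξ : EuclideanSpace ℝ (Fin d)) : EuclideanSpace ℝ (Fin d) :=
  ∫ s in (0:ℝ)..1, fderiv ℝ f (ξ + (s*h) • zMap f lam h a g ξ) (zMap f lam h a g ξ)

section Aux
variable {d : ℕ}
  (f : EuclideanSpace ℝ (Fin d) → EuclideanSpace ℝ (Fin d))
  (lam a h γ δ B₀ B₁ : ℝ)

theorem wMap_norm_le
    (hbd₀ : ∀ x, ‖f x‖ ≤ B₀)
    (g : EuclideanSpace ℝ (Fin d) → EuclideanSpace ℝ (Fin d))
    (hgb : ∀ ξ, ‖g ξ‖ ≤ γ)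
    (hinv : (0:ℝ) ≤ (1-lam)⁻¹) (hh : 0 ≤ h)
    (ξ : EuclideanSpace ℝ (Fin d)) :
    ‖wMap f lam h g ξ‖ ≤ (1-lam)⁻¹*B₀ + h*γ := by
  have h1 := norm_add_le ((1-lam)⁻¹ • f ξ) (h • g ξ)
  rw [norm_smul, norm_smul, Real.norm_eq_abs, Real.norm_eq_abs, abs_of_nonneg hinv,
    abs_of_nonneg hh] at h1
  have h4 : (1-lam)⁻¹ * ‖f ξ‖ ≤ (1-lam)⁻¹ * B₀ :=
    mul_le_mul_of_nonneg_left (hbd₀ ξ) hinv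
  have h5 : h * ‖g ξ‖ ≤ h * γ := mul_le_mul_of_nonneg_left (hgb ξ) hh
  calc ‖wMap f lam h g ξ‖ ≤ _ := h1
    _ ≤ _ := by linarith

theorem zMap_norm_le
    (hbd₀ : ∀ x, ‖f x‖ ≤ B₀)
    (g : EuclideanSpace ℝ (Fin d) → EuclideanSpace ℝ (Fin d))
    (hgb : ∀ ξ, ‖g ξ‖ ≤ γ)
    (hinv : (0:ℝ) ≤ (1-lam)⁻¹) (hh : 0 ≤ h) (hlam : 0 ≤ lam)
    (ξ : EuclideanSpace ℝ (Fin d)) :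
    ‖zMap f lam h a g ξ‖ ≤ B₀ + lam * ((1-lam)⁻¹*B₀ + h*γ) := by
  have h1 := norm_add_le (lam • wMap f lam h g ξ) (f (ξ + (h*a) • wMap f lam h g ξ))
  rw [norm_smul, Real.norm_eq_abs, abs_of_nonneg hlam] at h1
  have h3 := hbd₀ (ξ + (h*a) • wMap f lam h g ξ)
  have h4 : lam * ‖wMap f lam h g ξ‖ ≤ lam * ((1-lam)⁻¹*B₀ + h*γ) :=
    mul_le_mul_of_nonneg_left (wMap_norm_le f lam h γ B₀ hbd₀ g hgb hinv hh ξ) hlam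
  calc ‖zMap f lam h a g ξ‖ ≤ _ := h1
    _ ≤ _ := by linarith

theorem wMap_lip
    (hfL : ∀ x y, ‖f x - f y‖ ≤ B₁ * ‖x - y‖)
    (g : EuclideanSpace ℝ (Fin d) → EuclideanSpace ℝ (Fin d))
    (hgL : ∀ ξ η, ‖g ξ - g η‖ ≤ δ * ‖ξ - η‖)
    (hinv : (0:ℝ) ≤ (1-lam)⁻¹) (hh : 0 ≤ h)
    (ξ η : EuclideanSpace ℝ (Fin d)) :
    ‖wMap f lam h g ξ - wMap f lam h g η‖ ≤ ((1-lam)⁻¹*B₁ + h*δ) * ‖ξ - η‖ := by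
  have e : wMap f lam h g ξ - wMap f lam h g η
      = (1-lam)⁻¹ • (f ξ - f η) + h • (g ξ - g η) := by
    simp only [wMap, smul_sub]; abel
  rw [e]
  have h1 := norm_add_le ((1-lam)⁻¹ • (f ξ - f η)) (h • (g ξ - g η))
  rw [norm_smul, norm_smul, Real.norm_eq_abs, Real.norm_eq_abs, abs_of_nonneg hinv,
    abs_of_nonneg hh] at h1
  have h4 : (1-lam)⁻¹ * ‖f ξ - f η‖ ≤ (1-lam)⁻¹ * (B₁ * ‖ξ - η‖) :=
    mul_le_mul_of_nonneg_left (hfL ξ η) hinv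
  have h5 : h * ‖g ξ - g η‖ ≤ h * (δ * ‖ξ - η‖) :=
    mul_le_mul_of_nonneg_left (hgL ξ η) hh
  calc ‖_ + _‖ ≤ _ := h1
    _ ≤ (1-lam)⁻¹ * (B₁ * ‖ξ - η‖) + h * (δ * ‖ξ - η‖) := by linarith
    _ = ((1-lam)⁻¹*B₁ + h*δ) * ‖ξ - η‖ := by ring

theorem zMap_lip
    (hfL : ∀ x y, ‖f x - f y‖ ≤ B₁ * ‖x - y‖)
    (g : EuclideanSpace ℝ (Fin d) → EuclideanSpace ℝ (Fin d))
    (hgL : ∀ ξ η, ‖g ξ - g η‖ ≤ δ * ‖ξ - η‖)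
    (hinv : (0:ℝ) ≤ (1-lam)⁻¹) (hh : 0 ≤ h) (hlam : 0 ≤ lam) (ha : 0 ≤ a)
    (hB₁ : 0 ≤ B₁)
    (ξ η : EuclideanSpace ℝ (Fin d)) :
    ‖zMap f lam h a g ξ - zMap f lam h a g η‖
      ≤ (lam * ((1-lam)⁻¹*B₁ + h*δ) + B₁*(1 + h*a*((1-lam)⁻¹*B₁ + h*δ))) * ‖ξ - η‖ := by
  set K₂ := (1-lam)⁻¹*B₁ + h*δ with hK₂def
  have hwl := wMap_lip f lam h δ B₁ hfL g hgL hinv hh ξ η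
  have e : zMap f lam h a g ξ - zMap f lam h a g η
      = lam • (wMap f lam h g ξ - wMap f lam h g η)
        + (f (ξ + (h*a) • wMap f lam h g ξ) - f (η + (h*a) • wMap f lam h g η)) := by
    simp only [zMap, smul_sub]; abel
  rw [e]
  have h1 := norm_add_le (lam • (wMap f lam h g ξ - wMap f lam h g η))
    (f (ξ + (h*a) • wMap f lam h g ξ) - f (η + (h*a) • wMap f lam h g η))
  rw [norm_smul, Real.norm_eq_abs, abs_of_nonneg hlam] at h1
  have h2 : lam * ‖wMap f lam h g ξ - wMap f lam h g η‖ ≤ lam * (K₂ * ‖ξ - η‖) :=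
    mul_le_mul_of_nonneg_left hwl hlam
  have eAB : (ξ + (h*a) • wMap f lam h g ξ) - (η + (h*a) • wMap f lam h g η)
      = (ξ - η) + (h*a) • (wMap f lam h g ξ - wMap f lam h g η) := by
    simp only [smul_sub]; abel
  have hAB : ‖(ξ + (h*a) • wMap f lam h g ξ) - (η + (h*a) • wMap f lam h g η)‖
      ≤ ‖ξ - η‖ + (h*a) * (K₂ * ‖ξ - η‖) := by
    rw [eAB]
    have := norm_add_le (ξ - η) ((h*a) • (wMap f lam h g ξ - wMap f lam h g η))
    rw [norm_smul, Real.norm_eq_abs, abs_of_nonneg (mul_nonneg hh ha)] at this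
    have h9 := mul_le_mul_of_nonneg_left hwl (mul_nonneg hh ha)
    rw [← hK₂def] at h9
    linarith
  have h3 : ‖f (ξ + (h*a) • wMap f lam h g ξ) - f (η + (h*a) • wMap f lam h g η)‖
      ≤ B₁ * (‖ξ - η‖ + (h*a) * (K₂ * ‖ξ - η‖)) :=
    le_trans (hfL _ _) (mul_le_mul_of_nonneg_left hAB hB₁)
  calc ‖_ + _‖ ≤ _ := h1
    _ ≤ lam * (K₂ * ‖ξ - η‖) + B₁ * (‖ξ - η‖ + (h*a) * (K₂ * ‖ξ - η‖)) := by linarith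
    _ = (lam * K₂ + B₁*(1 + h*a*K₂)) * ‖ξ - η‖ := by ring

theorem zMap_diff
    (hfL : ∀ x y, ‖f x - f y‖ ≤ B₁ * ‖x - y‖)
    (g q : EuclideanSpace ℝ (Fin d) → EuclideanSpace ℝ (Fin d))
    (hh : 0 ≤ h) (hlam : 0 ≤ lam) (ha : 0 ≤ a) (hB₁ : 0 ≤ B₁)
    (ξ : EuclideanSpace ℝ (Fin d)) :
    ‖zMap f lam h a g ξ - zMap f lam h a q ξ‖
      ≤ h * (lam + h*B₁*a) * ‖g ξ - q ξ‖ := by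
  have ew : wMap f lam h g ξ - wMap f lam h q ξ = h • (g ξ - q ξ) := by
    simp only [wMap, smul_sub]; abel
  have hw : ‖wMap f lam h g ξ - wMap f lam h q ξ‖ ≤ h * ‖g ξ - q ξ‖ := by
    rw [ew, norm_smul, Real.norm_eq_abs, abs_of_nonneg hh]
  have e : zMap f lam h a g ξ - zMap f lam h a q ξ
      = lam • (wMap f lam h g ξ - wMap f lam h q ξ)
        + (f (ξ + (h*a) • wMap f lam h g ξ) - f (ξ + (h*a) • wMap f lam h q ξ)) := by
    simp only [zMap, smul_sub]; abel
  rw [e]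
  have h1 := norm_add_le (lam • (wMap f lam h g ξ - wMap f lam h q ξ))
    (f (ξ + (h*a) • wMap f lam h g ξ) - f (ξ + (h*a) • wMap f lam h q ξ))
  rw [norm_smul, Real.norm_eq_abs, abs_of_nonneg hlam] at h1
  have h2 : lam * ‖wMap f lam h g ξ - wMap f lam h q ξ‖ ≤ lam * (h * ‖g ξ - q ξ‖) :=
    mul_le_mul_of_nonneg_left hw hlam
  have eAB : (ξ + (h*a) • wMap f lam h g ξ) - (ξ + (h*a) • wMap f lam h q ξ)
      = (h*a) • (wMap f lam h g ξ - wMap f lam h q ξ) := by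
    simp only [smul_sub]; abel
  have hAB : ‖(ξ + (h*a) • wMap f lam h g ξ) - (ξ + (h*a) • wMap f lam h q ξ)‖
      ≤ (h*a) * (h * ‖g ξ - q ξ‖) := by
    rw [eAB, norm_smul, Real.norm_eq_abs, abs_of_nonneg (mul_nonneg hh ha)]
    exact mul_le_mul_of_nonneg_left hw (mul_nonneg hh ha)
  have h3 : ‖f (ξ + (h*a) • wMap f lam h g ξ) - f (ξ + (h*a) • wMap f lam h q ξ)‖
      ≤ B₁ * ((h*a) * (h * ‖g ξ - q ξ‖)) :=
    le_trans (hfL _ _) (mul_le_mul_of_nonneg_left hAB hB₁)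
  calc ‖_ + _‖ ≤ _ := h1
    _ ≤ lam * (h * ‖g ξ - q ξ‖) + B₁ * ((h*a) * (h * ‖g ξ - q ξ‖)) := by linarith
    _ = h * (lam + h*B₁*a) * ‖g ξ - q ξ‖ := by ring

end Aux

theorem key_integrand_bound {d : ℕ}
    (f : EuclideanSpace ℝ (Fin d) → EuclideanSpace ℝ (Fin d))
    (B₁ B₂ K₃ D s h : ℝ)
    (hbd₁ : ∀ x, ‖fderiv ℝ f x‖ ≤ B₁)
    (hf'L : ∀ x y, ‖fderiv ℝ f x - fderiv ℝ f y‖ ≤ B₂ * ‖x - y‖)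
    (x y zx zy : EuclideanSpace ℝ (Fin d))
    (hs0 : 0 ≤ s) (hs1 : s ≤ 1) (hh : 0 ≤ h) (hB₁ : 0 ≤ B₁) (hB₂ : 0 ≤ B₂)
    (hD : ‖zx - zy‖ ≤ D) (hKz : ‖zy‖ ≤ K₃) (hK₃ : 0 ≤ K₃) (hDnn : 0 ≤ D) :
    ‖fderiv ℝ f (x + (s*h) • zx) zx - fderiv ℝ f (y + (s*h) • zy) zy‖
      ≤ B₁ * D + B₂ * (‖x - y‖ + h * D) * K₃ := by
  have e : fderiv ℝ f (x + (s*h) • zx) zx - fderiv ℝ f (y + (s*h) • zy) zy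
      = fderiv ℝ f (x + (s*h) • zx) (zx - zy)
        + (fderiv ℝ f (x + (s*h) • zx) - fderiv ℝ f (y + (s*h) • zy)) zy := by
    simp only [map_sub, ContinuousLinearMap.sub_apply]; abel
  rw [e]
  have t1 : ‖fderiv ℝ f (x + (s*h) • zx) (zx - zy)‖ ≤ B₁ * D :=
    le_trans (ContinuousLinearMap.le_opNorm _ _)
      (mul_le_mul (hbd₁ _) hD (norm_nonneg _) hB₁)
  have eAB : (x + (s*h) • zx) - (y + (s*h) • zy) = (x - y) + (s*h) • (zx - zy) := by
    simp only [smul_sub]; abel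
  have hAB : ‖(x + (s*h) • zx) - (y + (s*h) • zy)‖ ≤ ‖x - y‖ + h * D := by
    rw [eAB]
    have h1 := norm_add_le (x - y) ((s*h) • (zx - zy))
    rw [norm_smul, Real.norm_eq_abs, abs_of_nonneg (mul_nonneg hs0 hh)] at h1
    have h2 : s*h*‖zx - zy‖ ≤ h * D := by
      have hsh : s*h ≤ h := by nlinarith
      nlinarith [norm_nonneg (zx - zy), mul_nonneg hDnn (sub_nonneg.2 hsh)]
    linarith
  have t2 : ‖(fderiv ℝ f (x + (s*h) • zx) - fderiv ℝ f (y + (s*h) • zy)) zy‖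
      ≤ B₂ * (‖x - y‖ + h * D) * K₃ := by
    calc ‖(fderiv ℝ f (x + (s*h) • zx) - fderiv ℝ f (y + (s*h) • zy)) zy‖
        ≤ ‖fderiv ℝ f (x + (s*h) • zx) - fderiv ℝ f (y + (s*h) • zy)‖ * ‖zy‖ :=
          ContinuousLinearMap.le_opNorm _ _
      _ ≤ (B₂ * ‖(x + (s*h) • zx) - (y + (s*h) • zy)‖) * K₃ :=
          mul_le_mul (hf'L _ _) hKz (norm_nonneg _)
            (mul_nonneg hB₂ (norm_nonneg _))
      _ ≤ B₂ * (‖x - y‖ + h * D) * K₃ := by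
          have := mul_le_mul_of_nonneg_left hAB hB₂
          nlinarith
  calc ‖_ + _‖ ≤ _ := norm_add_le _ _
    _ ≤ B₁ * D + B₂ * (‖x - y‖ + h * D) * K₃ := by linarith



/-- Bounds on `I⁽²⁾_g`: for `g, q ∈ Γ(γ,δ)`,
`|I⁽²⁾_g(ξ)| ≤ B₁K₃`,
`|I⁽²⁾_g(ξ) − I⁽²⁾_g(η)| ≤ ((B₁ + hB₂K₃)(λK₂ + B₁(1 + haK₂)) + B₂K₃)|ξ−η|`,
`|I⁽²⁾_g(ξ) − I⁽²⁾_q(ξ)| ≤ h(λ + hB₁a)(B₁ + hB₂K₃)|g(ξ)−q(ξ)|`, where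
`K₁ = λ̄B₀ + hγ`, `K₂ = λ̄B₁ + hδ`, `K₃ = B₀ + λK₁`. -/
theorem I2_bounds
    {d : ℕ} (Φ : EuclideanSpace ℝ (Fin d) → ℝ)
    (B₀ B₁ B₂ : ℝ) (hB₀ : 0 < B₀) (hB₁ : 0 < B₁) (hB₂ : 0 < B₂)
    (hΦ : ContDiff ℝ 3 Φ)
    (f : EuclideanSpace ℝ (Fin d) → EuclideanSpace ℝ (Fin d))
    (hf : f = fun x => -gradient Φ x)
    (hbd₀ : ∀ x, ‖f x‖ ≤ B₀)
    (hbd₁ : ∀ x, ‖fderiv ℝ f x‖ ≤ B₁)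
    (hbd₂ : ∀ x, ‖fderiv ℝ (fderiv ℝ f) x‖ ≤ B₂)
    (lam a h γ δ : ℝ) (hlam : lam ∈ Set.Ioo (0:ℝ) 1) (ha : 0 ≤ a)
    (hh : 0 < h) (hγ : 0 < γ) (hδ : 0 < δ)
    (K₁ K₂ K₃ : ℝ)
    (hK₁ : K₁ = (1-lam)⁻¹*B₀ + h*γ)
    (hK₂ : K₂ = (1-lam)⁻¹*B₁ + h*δ)
    (hK₃ : K₃ = B₀ + lam*K₁)
    (g q : EuclideanSpace ℝ (Fin d) → EuclideanSpace ℝ (Fin d))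
    (hg : Continuous g ∧ (∀ ξ, ‖g ξ‖ ≤ γ) ∧ ∀ ξ η, ‖g ξ - g η‖ ≤ δ * ‖ξ - η‖)
    (hq : Continuous q ∧ (∀ ξ, ‖q ξ‖ ≤ γ) ∧ ∀ ξ η, ‖q ξ - q η‖ ≤ δ * ‖ξ - η‖) :
    ∀ ξ η : EuclideanSpace ℝ (Fin d),
      ‖I2 f lam h a g ξ‖ ≤ B₁*K₃ ∧
      ‖I2 f lam h a g ξ - I2 f lam h a g η‖
        ≤ ((B₁ + h*B₂*K₃)*(lam*K₂ + B₁*(1 + h*a*K₂)) + B₂*K₃) * ‖ξ - η‖ ∧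
      ‖I2 f lam h a g ξ - I2 f lam h a q ξ‖
        ≤ h*(lam + h*B₁*a)*(B₁ + h*B₂*K₃) * ‖g ξ - q ξ‖ := by
  obtain ⟨hgc, hgb, hgL⟩ := hg
  obtain ⟨hqc, hqb, hqL⟩ := hq
  obtain ⟨hlam0, hlam1⟩ := hlam
  have h1lam : (0:ℝ) < 1 - lam := by linarith
  have hinv : (0:ℝ) ≤ (1-lam)⁻¹ := (inv_pos.2 h1lam).le
  -- smoothness of f
  have hfC : ContDiff ℝ 2 f := by
    rw [hf]
    have : ContDiff ℝ 2 (fun x => gradient Φ x) := by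
      simp only [gradient]
      exact ((InnerProductSpace.toDual ℝ (EuclideanSpace ℝ (Fin d))).symm.contDiff).comp
        (hΦ.fderiv_right (by norm_num))
    exact this.neg
  have hfd : Differentiable ℝ f := hfC.differentiable (by norm_num)
  have hf'C : ContDiff ℝ 1 (fderiv ℝ f) := hfC.fderiv_right (by norm_num)
  have hf'd : Differentiable ℝ (fderiv ℝ f) := hf'C.differentiable (by norm_num)
  have hf'cont : Continuous (fderiv ℝ f) := hf'C.continuous
  -- Lipschitz bounds from the mean value inequality
  have hfL : ∀ x y, ‖f x - f y‖ ≤ B₁ * ‖x - y‖ := fun x y =>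
    Convex.norm_image_sub_le_of_norm_fderiv_le (fun z _ => hfd z)
      (fun z _ => hbd₁ z) convex_univ (Set.mem_univ y) (Set.mem_univ x)
  have hf'L : ∀ x y, ‖fderiv ℝ f x - fderiv ℝ f y‖ ≤ B₂ * ‖x - y‖ := fun x y =>
    Convex.norm_image_sub_le_of_norm_fderiv_le (fun z _ => hf'd z)
      (fun z _ => hbd₂ z) convex_univ (Set.mem_univ y) (Set.mem_univ x)
  -- norm bounds for zMap
  have hK₂nn : 0 ≤ K₂ := by rw [hK₂]; positivity
  have hK₁nn : 0 ≤ K₁ := by rw [hK₁]; positivity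
  have hK₃nn : 0 ≤ K₃ := by rw [hK₃]; nlinarith
  have hzK : ∀ (g' : EuclideanSpace ℝ (Fin d) → EuclideanSpace ℝ (Fin d))
      (_ : ∀ ξ, ‖g' ξ‖ ≤ γ) (ξ : EuclideanSpace ℝ (Fin d)),
      ‖zMap f lam h a g' ξ‖ ≤ K₃ := by
    intro g' hb' ξ
    rw [hK₃, hK₁]
    exact zMap_norm_le f lam a h γ B₀ hbd₀ g' hb' hinv hh.le hlam0.le ξ
  -- continuity/integrability of the integrands
  have hconti : ∀ (x z : EuclideanSpace ℝ (Fin d)),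
      IntervalIntegrable (fun s : ℝ => fderiv ℝ f (x + (s*h) • z) z)
        MeasureTheory.volume 0 1 := by
    intro x z
    have : Continuous fun s : ℝ => fderiv ℝ f (x + (s*h) • z) z := by
      apply Continuous.clm_apply _ continuous_const
      exact hf'cont.comp (continuous_const.add
        ((continuous_id.mul continuous_const).smul continuous_const))
    exact this.intervalIntegrable 0 1
  intro ξ η
  set Lz : ℝ := lam*K₂ + B₁*(1 + h*a*K₂) with hLzdef
  have hLznn : 0 ≤ Lz := by
    have : (0:ℝ) ≤ 1 + h*a*K₂ := by positivity
    have := mul_nonneg hB₁.le this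
    nlinarith [mul_nonneg hlam0.le hK₂nn]
  have hzlip : ∀ ξ' η', ‖zMap f lam h a g ξ' - zMap f lam h a g η'‖ ≤ Lz * ‖ξ' - η'‖ := by
    intro ξ' η'
    rw [hLzdef, hK₂]
    exact zMap_lip f lam a h δ B₁ hfL g hgL hinv hh.le hlam0.le ha hB₁.le ξ' η'
  refine ⟨?_, ?_, ?_⟩
  · -- first bound
    have := intervalIntegral.norm_integral_le_of_norm_le_const
      (C := B₁*K₃) (a := (0:ℝ)) (b := 1)
      (f := fun s : ℝ => fderiv ℝ f (ξ + (s*h) • zMap f lam h a g ξ) (zMap f lam h a g ξ)) ?_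
    · simpa [I2] using this
    · intro s _
      calc ‖fderiv ℝ f (ξ + (s*h) • zMap f lam h a g ξ) (zMap f lam h a g ξ)‖
          ≤ ‖fderiv ℝ f (ξ + (s*h) • zMap f lam h a g ξ)‖ * ‖zMap f lam h a g ξ‖ :=
            ContinuousLinearMap.le_opNorm _ _
        _ ≤ B₁ * K₃ := by
            apply mul_le_mul (hbd₁ _) (hzK g hgb ξ) (norm_nonneg _) hB₁.le
  · -- second bound
    have hsub : I2 f lam h a g ξ - I2 f lam h a g η
        = ∫ s in (0:ℝ)..1,
            (fderiv ℝ f (ξ + (s*h) • zMap f lam h a g ξ) (zMap f lam h a g ξ)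
              - fderiv ℝ f (η + (s*h) • zMap f lam h a g η) (zMap f lam h a g η)) := by
      rw [I2, I2, ← intervalIntegral.integral_sub (hconti ξ _) (hconti η _)]
    rw [hsub]
    have hbound : ∀ s ∈ Set.uIoc (0:ℝ) 1,
        ‖fderiv ℝ f (ξ + (s*h) • zMap f lam h a g ξ) (zMap f lam h a g ξ)
            - fderiv ℝ f (η + (s*h) • zMap f lam h a g η) (zMap f lam h a g η)‖
          ≤ ((B₁ + h*B₂*K₃)*Lz + B₂*K₃) * ‖ξ - η‖ := by
      intro s hs
      rw [Set.uIoc_of_le (by norm_num : (0:ℝ) ≤ 1)] at hs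
      have hkey := key_integrand_bound f B₁ B₂ K₃ (Lz * ‖ξ - η‖) s h hbd₁ hf'L
        ξ η (zMap f lam h a g ξ) (zMap f lam h a g η) hs.1.le hs.2 hh.le hB₁.le hB₂.le
        (hzlip ξ η) (hzK g hgb η) hK₃nn (mul_nonneg hLznn (norm_nonneg _))
      calc _ ≤ _ := hkey
        _ = ((B₁ + h*B₂*K₃)*Lz + B₂*K₃) * ‖ξ - η‖ := by ring
    have := intervalIntegral.norm_integral_le_of_norm_le_const hbound
    simpa using this
  · -- third bound
    have hsub : I2 f lam h a g ξ - I2 f lam h a q ξ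
        = ∫ s in (0:ℝ)..1,
            (fderiv ℝ f (ξ + (s*h) • zMap f lam h a g ξ) (zMap f lam h a g ξ)
              - fderiv ℝ f (ξ + (s*h) • zMap f lam h a q ξ) (zMap f lam h a q ξ)) := by
      rw [I2, I2, ← intervalIntegral.integral_sub (hconti ξ _) (hconti ξ _)]
    rw [hsub]
    have hZnn : (0:ℝ) ≤ h * (lam + h*B₁*a) * ‖g ξ - q ξ‖ := by positivity
    have hzd : ‖zMap f lam h a g ξ - zMap f lam h a q ξ‖
        ≤ h * (lam + h*B₁*a) * ‖g ξ - q ξ‖ :=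
      zMap_diff f lam a h B₁ hfL g q hh.le hlam0.le ha hB₁.le ξ
    have hbound : ∀ s ∈ Set.uIoc (0:ℝ) 1,
        ‖fderiv ℝ f (ξ + (s*h) • zMap f lam h a g ξ) (zMap f lam h a g ξ)
            - fderiv ℝ f (ξ + (s*h) • zMap f lam h a q ξ) (zMap f lam h a q ξ)‖
          ≤ h*(lam + h*B₁*a)*(B₁ + h*B₂*K₃) * ‖g ξ - q ξ‖ := by
      intro s hs
      rw [Set.uIoc_of_le (by norm_num : (0:ℝ) ≤ 1)] at hs
      have hkey := key_integrand_bound f B₁ B₂ K₃ (h * (lam + h*B₁*a) * ‖g ξ - q ξ‖)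
        s h hbd₁ hf'L ξ ξ (zMap f lam h a g ξ) (zMap f lam h a q ξ)
        hs.1.le hs.2 hh.le hB₁.le hB₂.le hzd (hzK q hqb ξ) hK₃nn hZnn
      rw [sub_self, norm_zero] at hkey
      calc _ ≤ _ := hkey
        _ = h*(lam + h*B₁*a)*(B₁ + h*B₂*K₃) * ‖g ξ - q ξ‖ := by ring
    have := intervalIntegral.norm_integral_le_of_norm_le_const hbound
    simpa using this
end

section
/- Suppose c := h(λK₂ + B₁(1 + haK₂)) < 1, where K₂ := λ̄B₁ + hδ. Then for every g ∈ Γ(γ,δ) and every p ∈ ℝ^d there exists a unique ξ ∈ ℝ^d satisfying p = ξ + h z_g(ξ). -/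
/-- Lemma (well-definedness of the map `T`): if
`c = h(λK₂ + B₁(1 + haK₂)) < 1` with `K₂ = λ̄B₁ + hδ`, then for every `g ∈ Γ(γ,δ)`
and every `p ∈ ℝ^d` there is a unique `ξ` with `p = ξ + h z_g(ξ)`. -/
theorem xi_exists_unique
    {d : ℕ} (Φ : EuclideanSpace ℝ (Fin d) → ℝ)
    (B₀ B₁ B₂ : ℝ) (hB₀ : 0 < B₀) (hB₁ : 0 < B₁) (hB₂ : 0 < B₂)
    (hΦ : ContDiff ℝ 3 Φ)
    (f : EuclideanSpace ℝ (Fin d) → EuclideanSpace ℝ (Fin d))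
    (hf : f = fun x => -gradient Φ x)
    (hbd₀ : ∀ x, ‖f x‖ ≤ B₀)
    (hbd₁ : ∀ x, ‖fderiv ℝ f x‖ ≤ B₁)
    (hbd₂ : ∀ x, ‖fderiv ℝ (fderiv ℝ f) x‖ ≤ B₂)
    (lam a h γ δ : ℝ) (hlam : lam ∈ Set.Ioo (0:ℝ) 1) (ha : 0 ≤ a)
    (hh : 0 < h) (hγ : 0 < γ) (hδ : 0 < δ)
    (hc : h*(lam*((1-lam)⁻¹*B₁ + h*δ) + B₁*(1 + h*a*((1-lam)⁻¹*B₁ + h*δ))) < 1) :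
    ∀ g : EuclideanSpace ℝ (Fin d) → EuclideanSpace ℝ (Fin d),
      (Continuous g ∧ (∀ ξ, ‖g ξ‖ ≤ γ) ∧ ∀ ξ η, ‖g ξ - g η‖ ≤ δ * ‖ξ - η‖) →
      ∀ p : EuclideanSpace ℝ (Fin d),
        ∃! ξ : EuclideanSpace ℝ (Fin d), p = ξ + h • zMap f lam h a g ξ := by
  intro g ⟨hgc, hgb, hgl⟩ p
  obtain ⟨hlam0, hlam1⟩ := hlam
  have hml : 0 < (1-lam)⁻¹ := inv_pos.mpr (by linarith)
  -- f is differentiable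
  have hfd : Differentiable ℝ f := by
    rw [hf]
    have h1 : Differentiable ℝ (fderiv ℝ Φ) := by
      have := hΦ.fderiv_right (m := 2) (by norm_num)
      exact this.differentiable (by norm_num)
    have h2 : Differentiable ℝ (fun x => gradient Φ x) := by
      simp only [gradient]
      exact (InnerProductSpace.toDual ℝ _).symm.differentiable.comp h1
    exact h2.neg
  -- f is B₁-Lipschitz
  have hfl : ∀ x y : EuclideanSpace ℝ (Fin d), ‖f x - f y‖ ≤ B₁ * ‖x - y‖ := by
    intro x y
    exact Convex.norm_image_sub_le_of_norm_fderiv_le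
      (fun z _ => hfd z) (fun z _ => hbd₁ z)
      convex_univ (Set.mem_univ y) (Set.mem_univ x)
  set K₂ : ℝ := (1-lam)⁻¹*B₁ + h*δ with hK₂
  have hK₂pos : 0 < K₂ := by positivity
  -- wMap is K₂-Lipschitz
  have hwl : ∀ ξ η, ‖wMap f lam h g ξ - wMap f lam h g η‖ ≤ K₂ * ‖ξ - η‖ := by
    intro ξ η
    have : wMap f lam h g ξ - wMap f lam h g η
        = (1-lam)⁻¹ • (f ξ - f η) + h • (g ξ - g η) := by
      simp only [wMap, smul_sub]; abel
    rw [this]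
    calc ‖(1-lam)⁻¹ • (f ξ - f η) + h • (g ξ - g η)‖
        ≤ ‖(1-lam)⁻¹ • (f ξ - f η)‖ + ‖h • (g ξ - g η)‖ := norm_add_le _ _
      _ = (1-lam)⁻¹ * ‖f ξ - f η‖ + h * ‖g ξ - g η‖ := by
          rw [norm_smul, norm_smul, Real.norm_eq_abs, Real.norm_eq_abs,
            abs_of_pos hml, abs_of_pos hh]
      _ ≤ (1-lam)⁻¹ * (B₁ * ‖ξ - η‖) + h * (δ * ‖ξ - η‖) := by
          gcongr
          · exact hfl ξ η
          · exact hgl ξ η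
      _ = K₂ * ‖ξ - η‖ := by ring
  set L : ℝ := lam*K₂ + B₁*(1 + h*a*K₂) with hL
  -- zMap is L-Lipschitz
  have hzl : ∀ ξ η, ‖zMap f lam h a g ξ - zMap f lam h a g η‖ ≤ L * ‖ξ - η‖ := by
    intro ξ η
    set wξ := wMap f lam h g ξ
    set wη := wMap f lam h g η
    have hsplit : zMap f lam h a g ξ - zMap f lam h a g η
        = lam • (wξ - wη) + (f (ξ + (h*a) • wξ) - f (η + (h*a) • wη)) := by
      simp only [zMap, smul_sub]; abel
    rw [hsplit]
    have harg : ‖(ξ + (h*a) • wξ) - (η + (h*a) • wη)‖ ≤ ‖ξ - η‖ + h*a*(K₂ * ‖ξ - η‖) := by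
      have : (ξ + (h*a) • wξ) - (η + (h*a) • wη) = (ξ - η) + (h*a) • (wξ - wη) := by
        rw [smul_sub]; abel
      rw [this]
      calc ‖(ξ - η) + (h*a) • (wξ - wη)‖ ≤ ‖ξ - η‖ + ‖(h*a) • (wξ - wη)‖ := norm_add_le _ _
        _ = ‖ξ - η‖ + (h*a) * ‖wξ - wη‖ := by
            rw [norm_smul, Real.norm_eq_abs, abs_of_nonneg (by positivity)]
        _ ≤ ‖ξ - η‖ + h*a*(K₂ * ‖ξ - η‖) := by
            gcongr; exact hwl ξ η
    calc ‖lam • (wξ - wη) + (f (ξ + (h*a) • wξ) - f (η + (h*a) • wη))‖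
        ≤ ‖lam • (wξ - wη)‖ + ‖f (ξ + (h*a) • wξ) - f (η + (h*a) • wη)‖ := norm_add_le _ _
      _ ≤ lam * (K₂ * ‖ξ - η‖) + B₁ * (‖ξ - η‖ + h*a*(K₂ * ‖ξ - η‖)) := by
          gcongr
          · rw [norm_smul, Real.norm_eq_abs, abs_of_pos hlam0]
            exact mul_le_mul_of_nonneg_left (hwl ξ η) hlam0.le
          · exact le_trans (hfl _ _) (by gcongr)
      _ = L * ‖ξ - η‖ := by ring
  set c : ℝ := h * L with hcdef
  have hc1 : c < 1 := hc
  have hc0 : 0 ≤ c := by positivity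
  -- The contraction map
  set T : EuclideanSpace ℝ (Fin d) → EuclideanSpace ℝ (Fin d) :=
    fun ξ => p - h • zMap f lam h a g ξ with hT
  have hTl : ∀ ξ η, ‖T ξ - T η‖ ≤ c * ‖ξ - η‖ := by
    intro ξ η
    have : T ξ - T η = -(h • (zMap f lam h a g ξ - zMap f lam h a g η)) := by
      simp only [hT, smul_sub]; abel
    rw [this, norm_neg, norm_smul, Real.norm_eq_abs, abs_of_pos hh, hcdef, mul_assoc]
    gcongr
    exact hzl ξ η
  -- T is a contraction
  have hcontr : ContractingWith ⟨c, hc0⟩ T := by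
    constructor
    · exact_mod_cast hc1
    · apply LipschitzWith.of_dist_le_mul
      intro ξ η
      rw [dist_eq_norm, dist_eq_norm]
      exact_mod_cast hTl ξ η
  obtain ⟨ξ₀, hξ₀⟩ := hcontr.exists_fixedPoint p (by
    rw [edist_dist]; exact ENNReal.ofReal_ne_top)
  refine ⟨ξ₀, ?_, ?_⟩
  · -- existence
    have : T ξ₀ = ξ₀ := hξ₀.1
    rw [hT] at this
    simp only at this
    exact (sub_eq_iff_eq_add.mp this)
  · -- uniqueness
    intro η hη
    have hη' : T η = η := by
      rw [hT]; simp only; rw [hη]; abel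
    have hξ' : T ξ₀ = ξ₀ := hξ₀.1
    have hle : ‖η - ξ₀‖ ≤ c * ‖η - ξ₀‖ := by
      nth_rewrite 1 [← hη', ← hξ']
      exact hTl η ξ₀
    have : ‖η - ξ₀‖ = 0 := by nlinarith [norm_nonneg (η - ξ₀)]
    have := norm_eq_zero.mp this
    exact sub_eq_zero.mp this
end

section
/- Suppose h is small enough that Assumption h_small holds (in particular λ + hB₁(a + λλ̄) < 1 with γ satisfying the γ-inequality, δ satisfying the quadratic inequality α₂δ² + α₁δ + α₀ ≤ 0, and c := h(λK₂ + B₁(1 + haK₂)) < 1). Then the operator T defined by (Tg)(p) := λg(ξ) + aI⁽¹⁾_g(ξ) − λ̄I⁽²⁾_g(ξ), where ξ is the unique solution of p = ξ + h z_g(ξ), maps Γ(γ,δ) into Γ(γ,δ): that is, for every g ∈ Γ(γ,δ), Tg is bounded by γ and is δ-Lipschitz. -/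
/-- `I⁽¹⁾_g(ξ) := ∫₀¹ Df(ξ + s·h·a·w_g(ξ)) w_g(ξ) ds`. -/
noncomputable def I1 {d : ℕ}
    (f : EuclideanSpace ℝ (Fin d) → EuclideanSpace ℝ (Fin d)) (lam h a : ℝ)
    (g : EuclideanSpace ℝ (Fin d) → EuclideanSpace ℝ (Fin d))
    (ξ : EuclideanSpace ℝ (Fin d)) : EuclideanSpace ℝ (Fin d) :=
  ∫ s in (0:ℝ)..1, fderiv ℝ f (ξ + (s*(h*a)) • wMap f lam h g ξ) (wMap f lam h g ξ)

set_option maxHeartbeats 1000000 in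
/-- Lemma (`T` maps `Γ(γ,δ)` into `Γ(γ,δ)`): under the smallness assumptions on `h`
(the `γ`-inequality, the quadratic `δ`-inequality `α₂δ² + α₁δ + α₀ ≤ 0`, and `c < 1`),
for `g ∈ Γ(γ,δ)`, the function `Tg` defined by `(Tg)(p) = λg(ξ) + aI⁽¹⁾_g(ξ) − λ̄I⁽²⁾_g(ξ)`
with `p = ξ + h z_g(ξ)` is bounded by `γ` and `δ`-Lipschitz. -/
theorem T_maps_Gamma_to_Gamma
    {d : ℕ} (Φ : EuclideanSpace ℝ (Fin d) → ℝ)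
    (B₀ B₁ B₂ : ℝ) (hB₀ : 0 < B₀) (hB₁ : 0 < B₁) (hB₂ : 0 < B₂)
    (hΦ : ContDiff ℝ 3 Φ)
    (f : EuclideanSpace ℝ (Fin d) → EuclideanSpace ℝ (Fin d))
    (hf : f = fun x => -gradient Φ x)
    (hbd₀ : ∀ x, ‖f x‖ ≤ B₀)
    (hbd₁ : ∀ x, ‖fderiv ℝ f x‖ ≤ B₁)
    (hbd₂ : ∀ x, ‖fderiv ℝ (fderiv ℝ f) x‖ ≤ B₂)
    (lam a h γ δ : ℝ) (hlam : lam ∈ Set.Ioo (0:ℝ) 1) (ha : 0 ≤ a)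
    (hh : 0 < h) (hγ : 0 < γ) (hδ : 0 < δ)
    (lamBar K₁ K₂ K₃ α₂ α₁ α₀ : ℝ)
    (hlamBar : lamBar = (1-lam)⁻¹)
    (hK₁ : K₁ = lamBar*B₀ + h*γ)
    (hK₂ : K₂ = lamBar*B₁ + h*δ)
    (hK₃ : K₃ = B₀ + lam*K₁)
    (hα₂ : α₂ = h^2*(lam + h*a*B₁))
    (hα₁ : α₁ = lam - 1 + h*(B₁*(lamBar + a*(1 + h*lamBar*B₁))
        + lam*lamBar*(B₁ + h*B₂*K₃)
        + h*a*(a*B₂*K₁ + B₁*lamBar*(B₁ + h*B₂*K₃))))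
    (hα₀ : α₀ = a*B₂*K₁*(1 + h*a*lamBar*B₁) + lamBar*(a*B₁^2 + B₂*K₃)
        + lamBar^2*B₁*(1 + h*a*B₁)*(B₁ + h*B₂*K₃))
    (hsmall : lam + h*B₁*(a + lam*lamBar) < 1)
    (hγineq : (lam + h*B₁*(a + lam*lamBar)) * γ + lamBar*B₀*B₁*(a + lamBar) ≤ γ)
    (hδineq : α₂*δ^2 + α₁*δ + α₀ ≤ 0)
    (hc : h*(lam*K₂ + B₁*(1 + h*a*K₂)) < 1) :
    ∀ g Tg : EuclideanSpace ℝ (Fin d) → EuclideanSpace ℝ (Fin d),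
      (Continuous g ∧ (∀ ξ, ‖g ξ‖ ≤ γ) ∧ ∀ ξ η, ‖g ξ - g η‖ ≤ δ * ‖ξ - η‖) →
      (∀ p ξ : EuclideanSpace ℝ (Fin d), p = ξ + h • zMap f lam h a g ξ →
        Tg p = lam • g ξ + a • I1 f lam h a g ξ - lamBar • I2 f lam h a g ξ) →
      (∀ p, ‖Tg p‖ ≤ γ) ∧ (∀ p₁ p₂, ‖Tg p₁ - Tg p₂‖ ≤ δ * ‖p₁ - p₂‖) := by
  intro g Tg ⟨hgc, hgbd, hglip⟩ hTg
  obtain ⟨hl0, hl1⟩ := hlam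
  have h1l : (0:ℝ) < 1 - lam := by linarith
  have h1lne : (1:ℝ) - lam ≠ 0 := ne_of_gt h1l
  have hlb0 : 0 < lamBar := by rw [hlamBar]; positivity
  have hK₁0 : 0 < K₁ := by rw [hK₁]; positivity
  have hK₂0 : 0 < K₂ := by rw [hK₂]; positivity
  have hK₃0 : 0 < K₃ := by rw [hK₃]; positivity
  set Lz : ℝ := lam*K₂ + B₁*(1 + h*a*K₂) with hLz
  have hLz0 : 0 < Lz := by rw [hLz]; positivity
  have hc0 : 0 ≤ h * Lz := by positivity
  -- regularity of f
  have hf2 : ContDiff ℝ 2 f := by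
    rw [hf]
    have h1 : ContDiff ℝ 2 (fderiv ℝ Φ) := hΦ.fderiv_right (m := 2) (by norm_num)
    exact (((InnerProductSpace.toDual ℝ (EuclideanSpace ℝ (Fin d))).symm.contDiff).comp h1).neg
  have hfd : Differentiable ℝ f := hf2.differentiable (by norm_num)
  have hDfc : Continuous (fderiv ℝ f) :=
    (hf2.fderiv_right (m := 1) (by norm_num)).continuous
  have hDfd : Differentiable ℝ (fderiv ℝ f) :=
    (hf2.fderiv_right (m := 1) (by norm_num)).differentiable one_ne_zero
  have hf_lip : ∀ x y : EuclideanSpace ℝ (Fin d), ‖f x - f y‖ ≤ B₁ * ‖x - y‖ := fun x y =>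
    Convex.norm_image_sub_le_of_norm_fderiv_le (fun z _ => hfd z) (fun z _ => hbd₁ z)
      convex_univ trivial trivial
  have hDf_lip : ∀ x y : EuclideanSpace ℝ (Fin d),
      ‖fderiv ℝ f x - fderiv ℝ f y‖ ≤ B₂ * ‖x - y‖ := fun x y =>
    Convex.norm_image_sub_le_of_norm_fderiv_le (fun z _ => hDfd z) (fun z _ => hbd₂ z)
      convex_univ trivial trivial
  -- w bounds
  have hw_bd : ∀ ξ, ‖wMap f lam h g ξ‖ ≤ K₁ := by
    intro ξ
    rw [hK₁, hlamBar, wMap]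
    refine (norm_add_le _ _).trans ?_
    rw [norm_smul, norm_smul, Real.norm_eq_abs, Real.norm_eq_abs,
      abs_of_pos (by positivity), abs_of_pos hh]
    gcongr
    · exact hbd₀ ξ
    · exact hgbd ξ
  have hw_lip : ∀ ξ η, ‖wMap f lam h g ξ - wMap f lam h g η‖ ≤ K₂ * ‖ξ - η‖ := by
    intro ξ η
    have e : wMap f lam h g ξ - wMap f lam h g η
        = (1-lam)⁻¹ • (f ξ - f η) + h • (g ξ - g η) := by
      simp only [wMap, smul_sub]; abel
    rw [e, hK₂, hlamBar]
    refine (norm_add_le _ _).trans ?_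
    rw [norm_smul, norm_smul, Real.norm_eq_abs, Real.norm_eq_abs,
      abs_of_pos (by positivity), abs_of_pos hh, add_mul]
    refine add_le_add ?_ ?_
    · calc (1-lam)⁻¹ * ‖f ξ - f η‖ ≤ (1-lam)⁻¹ * (B₁ * ‖ξ - η‖) :=
            mul_le_mul_of_nonneg_left (hf_lip ξ η) (by positivity)
        _ = (1-lam)⁻¹ * B₁ * ‖ξ - η‖ := by ring
    · calc h * ‖g ξ - g η‖ ≤ h * (δ * ‖ξ - η‖) :=
            mul_le_mul_of_nonneg_left (hglip ξ η) hh.le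
        _ = h * δ * ‖ξ - η‖ := by ring
  -- z bounds
  have hz_bd : ∀ ξ, ‖zMap f lam h a g ξ‖ ≤ K₃ := by
    intro ξ
    rw [zMap, hK₃]
    refine (norm_add_le _ _).trans ?_
    rw [norm_smul, Real.norm_eq_abs, abs_of_pos hl0, add_comm]
    gcongr
    · exact hbd₀ _
    · exact hw_bd ξ
  have hz_lip : ∀ ξ η, ‖zMap f lam h a g ξ - zMap f lam h a g η‖ ≤ Lz * ‖ξ - η‖ := by
    intro ξ η
    have e : zMap f lam h a g ξ - zMap f lam h a g η
        = lam • (wMap f lam h g ξ - wMap f lam h g η)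
          + (f (ξ + (h*a) • wMap f lam h g ξ) - f (η + (h*a) • wMap f lam h g η)) := by
      simp only [zMap, smul_sub]; abel
    rw [e]
    refine (norm_add_le _ _).trans ?_
    rw [norm_smul, Real.norm_eq_abs, abs_of_pos hl0]
    have hb : ‖(ξ + (h*a) • wMap f lam h g ξ) - (η + (h*a) • wMap f lam h g η)‖
        ≤ (1 + h*a*K₂) * ‖ξ - η‖ := by
      have e2 : (ξ + (h*a) • wMap f lam h g ξ) - (η + (h*a) • wMap f lam h g η)
          = (ξ - η) + (h*a) • (wMap f lam h g ξ - wMap f lam h g η) := by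
        rw [smul_sub]; abel
      rw [e2]
      refine (norm_add_le _ _).trans ?_
      rw [norm_smul, Real.norm_eq_abs, abs_of_nonneg (by positivity)]
      calc ‖ξ - η‖ + h*a * ‖wMap f lam h g ξ - wMap f lam h g η‖
          ≤ ‖ξ - η‖ + h*a * (K₂ * ‖ξ - η‖) :=
            add_le_add_right (mul_le_mul_of_nonneg_left (hw_lip ξ η)
              (by positivity : (0:ℝ) ≤ h*a)) _
        _ = (1 + h*a*K₂) * ‖ξ - η‖ := by ring
    have h2 : ‖f (ξ + (h*a) • wMap f lam h g ξ) - f (η + (h*a) • wMap f lam h g η)‖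
        ≤ B₁ * ((1 + h*a*K₂) * ‖ξ - η‖) :=
      (hf_lip _ _).trans (mul_le_mul_of_nonneg_left hb hB₁.le)
    calc lam * ‖wMap f lam h g ξ - wMap f lam h g η‖
          + ‖f (ξ + (h*a) • wMap f lam h g ξ) - f (η + (h*a) • wMap f lam h g η)‖
        ≤ lam * (K₂ * ‖ξ - η‖) + B₁ * ((1 + h*a*K₂) * ‖ξ - η‖) :=
          add_le_add (mul_le_mul_of_nonneg_left (hw_lip ξ η) hl0.le) h2
      _ = Lz * ‖ξ - η‖ := by rw [hLz]; ring
  -- continuity of integrands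
  have hI1cont : ∀ ξ, Continuous (fun s : ℝ =>
      fderiv ℝ f (ξ + (s*(h*a)) • wMap f lam h g ξ) (wMap f lam h g ξ)) := by
    intro ξ
    have hc1 : Continuous (fun s : ℝ => ξ + (s*(h*a)) • wMap f lam h g ξ) :=
      continuous_const.add ((continuous_id.mul continuous_const).smul continuous_const)
    exact (hDfc.comp hc1).clm_apply continuous_const
  have hI2cont : ∀ ξ, Continuous (fun s : ℝ =>
      fderiv ℝ f (ξ + (s*h) • zMap f lam h a g ξ) (zMap f lam h a g ξ)) := by
    intro ξ
    have hc1 : Continuous (fun s : ℝ => ξ + (s*h) • zMap f lam h a g ξ) :=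
      continuous_const.add ((continuous_id.mul continuous_const).smul continuous_const)
    exact (hDfc.comp hc1).clm_apply continuous_const
  -- I1, I2 bounds
  have hI1_bd : ∀ ξ, ‖I1 f lam h a g ξ‖ ≤ B₁ * K₁ := by
    intro ξ
    rw [I1]
    have := intervalIntegral.norm_integral_le_of_norm_le_const
      (C := B₁ * K₁) (a := (0:ℝ)) (b := 1)
      (f := fun s : ℝ => fderiv ℝ f (ξ + (s*(h*a)) • wMap f lam h g ξ) (wMap f lam h g ξ))
      (fun s _ => by
        refine (ContinuousLinearMap.le_opNorm _ _).trans ?_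
        exact mul_le_mul (hbd₁ _) (hw_bd ξ) (norm_nonneg _) hB₁.le)
    have h10 : |(1:ℝ) - 0| = 1 := by norm_num
    rw [h10, mul_one] at this
    exact this
  have hI2_bd : ∀ ξ, ‖I2 f lam h a g ξ‖ ≤ B₁ * K₃ := by
    intro ξ
    rw [I2]
    have := intervalIntegral.norm_integral_le_of_norm_le_const
      (C := B₁ * K₃) (a := (0:ℝ)) (b := 1)
      (f := fun s : ℝ => fderiv ℝ f (ξ + (s*h) • zMap f lam h a g ξ) (zMap f lam h a g ξ))
      (fun s _ => by
        refine (ContinuousLinearMap.le_opNorm _ _).trans ?_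
        exact mul_le_mul (hbd₁ _) (hz_bd ξ) (norm_nonneg _) hB₁.le)
    have h10 : |(1:ℝ) - 0| = 1 := by norm_num
    rw [h10, mul_one] at this
    exact this
  -- I1 Lipschitz
  have hI1_lip : ∀ ξ η, ‖I1 f lam h a g ξ - I1 f lam h a g η‖
      ≤ (B₂*(1 + h*a*K₂)*K₁ + B₁*K₂) * ‖ξ - η‖ := by
    intro ξ η
    rw [I1, I1, ← intervalIntegral.integral_sub
      ((hI1cont ξ).intervalIntegrable 0 1) ((hI1cont η).intervalIntegrable 0 1)]
    have key : ∀ s ∈ Set.uIoc (0:ℝ) 1,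
        ‖fderiv ℝ f (ξ + (s*(h*a)) • wMap f lam h g ξ) (wMap f lam h g ξ)
          - fderiv ℝ f (η + (s*(h*a)) • wMap f lam h g η) (wMap f lam h g η)‖
        ≤ (B₂*(1 + h*a*K₂)*K₁ + B₁*K₂) * ‖ξ - η‖ := by
      intro s hs
      rw [Set.uIoc_of_le zero_le_one] at hs
      obtain ⟨hs0, hs1⟩ := hs
      set A₁ := ξ + (s*(h*a)) • wMap f lam h g ξ
      set A₂ := η + (s*(h*a)) • wMap f lam h g η
      have e : fderiv ℝ f A₁ (wMap f lam h g ξ) - fderiv ℝ f A₂ (wMap f lam h g η)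
          = (fderiv ℝ f A₁ - fderiv ℝ f A₂) (wMap f lam h g ξ)
            + (fderiv ℝ f A₂) (wMap f lam h g ξ - wMap f lam h g η) := by
        simp only [ContinuousLinearMap.sub_apply, map_sub]
        abel
      rw [e]
      have hA : ‖A₁ - A₂‖ ≤ (1 + h*a*K₂) * ‖ξ - η‖ := by
        have e2 : A₁ - A₂ = (ξ - η) + (s*(h*a)) • (wMap f lam h g ξ - wMap f lam h g η) := by
          rw [smul_sub]; simp only [A₁, A₂]; abel
        rw [e2]
        refine (norm_add_le _ _).trans ?_
        rw [norm_smul, Real.norm_eq_abs, abs_of_nonneg (by positivity)]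
        calc ‖ξ - η‖ + s*(h*a) * ‖wMap f lam h g ξ - wMap f lam h g η‖
            ≤ ‖ξ - η‖ + 1*(h*a) * (K₂ * ‖ξ - η‖) := by
              refine add_le_add_right ?_ _
              exact mul_le_mul (mul_le_mul_of_nonneg_right hs1 (by positivity))
                (hw_lip ξ η) (norm_nonneg _) (by positivity)
          _ = (1 + h*a*K₂) * ‖ξ - η‖ := by ring
      refine (norm_add_le _ _).trans ?_
      have t1 : ‖(fderiv ℝ f A₁ - fderiv ℝ f A₂) (wMap f lam h g ξ)‖
          ≤ (B₂ * ((1 + h*a*K₂) * ‖ξ - η‖)) * K₁ := by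
        refine (ContinuousLinearMap.le_opNorm _ _).trans ?_
        exact mul_le_mul ((hDf_lip A₁ A₂).trans (by gcongr)) (hw_bd ξ) (norm_nonneg _)
          (by positivity)
      have t2 : ‖(fderiv ℝ f A₂) (wMap f lam h g ξ - wMap f lam h g η)‖
          ≤ B₁ * (K₂ * ‖ξ - η‖) := by
        refine (ContinuousLinearMap.le_opNorm _ _).trans ?_
        exact mul_le_mul (hbd₁ _) (hw_lip ξ η) (norm_nonneg _) hB₁.le
      calc _ ≤ (B₂ * ((1 + h*a*K₂) * ‖ξ - η‖)) * K₁ + B₁ * (K₂ * ‖ξ - η‖) :=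
            add_le_add t1 t2
        _ = (B₂*(1 + h*a*K₂)*K₁ + B₁*K₂) * ‖ξ - η‖ := by ring
    have := intervalIntegral.norm_integral_le_of_norm_le_const key
    have h10 : |(1:ℝ) - 0| = 1 := by norm_num
    rw [h10, mul_one] at this
    exact this
  -- I2 Lipschitz
  have hI2_lip : ∀ ξ η, ‖I2 f lam h a g ξ - I2 f lam h a g η‖
      ≤ (B₂*(1 + h*Lz)*K₃ + B₁*Lz) * ‖ξ - η‖ := by
    intro ξ η
    rw [I2, I2, ← intervalIntegral.integral_sub
      ((hI2cont ξ).intervalIntegrable 0 1) ((hI2cont η).intervalIntegrable 0 1)]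
    have key : ∀ s ∈ Set.uIoc (0:ℝ) 1,
        ‖fderiv ℝ f (ξ + (s*h) • zMap f lam h a g ξ) (zMap f lam h a g ξ)
          - fderiv ℝ f (η + (s*h) • zMap f lam h a g η) (zMap f lam h a g η)‖
        ≤ (B₂*(1 + h*Lz)*K₃ + B₁*Lz) * ‖ξ - η‖ := by
      intro s hs
      rw [Set.uIoc_of_le zero_le_one] at hs
      obtain ⟨hs0, hs1⟩ := hs
      set A₁ := ξ + (s*h) • zMap f lam h a g ξ
      set A₂ := η + (s*h) • zMap f lam h a g η
      have e : fderiv ℝ f A₁ (zMap f lam h a g ξ) - fderiv ℝ f A₂ (zMap f lam h a g η)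
          = (fderiv ℝ f A₁ - fderiv ℝ f A₂) (zMap f lam h a g ξ)
            + (fderiv ℝ f A₂) (zMap f lam h a g ξ - zMap f lam h a g η) := by
        simp only [ContinuousLinearMap.sub_apply, map_sub]
        abel
      rw [e]
      have hA : ‖A₁ - A₂‖ ≤ (1 + h*Lz) * ‖ξ - η‖ := by
        have e2 : A₁ - A₂ = (ξ - η) + (s*h) • (zMap f lam h a g ξ - zMap f lam h a g η) := by
          rw [smul_sub]; simp only [A₁, A₂]; abel
        rw [e2]
        refine (norm_add_le _ _).trans ?_
        rw [norm_smul, Real.norm_eq_abs, abs_of_nonneg (by positivity)]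
        calc ‖ξ - η‖ + s*h * ‖zMap f lam h a g ξ - zMap f lam h a g η‖
            ≤ ‖ξ - η‖ + 1*h * (Lz * ‖ξ - η‖) := by
              refine add_le_add_right ?_ _
              exact mul_le_mul (mul_le_mul_of_nonneg_right hs1 (by positivity))
                (hz_lip ξ η) (norm_nonneg _) (by positivity)
          _ = (1 + h*Lz) * ‖ξ - η‖ := by ring
      refine (norm_add_le _ _).trans ?_
      have t1 : ‖(fderiv ℝ f A₁ - fderiv ℝ f A₂) (zMap f lam h a g ξ)‖
          ≤ (B₂ * ((1 + h*Lz) * ‖ξ - η‖)) * K₃ := by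
        refine (ContinuousLinearMap.le_opNorm _ _).trans ?_
        exact mul_le_mul ((hDf_lip A₁ A₂).trans (by gcongr)) (hz_bd ξ) (norm_nonneg _)
          (by positivity)
      have t2 : ‖(fderiv ℝ f A₂) (zMap f lam h a g ξ - zMap f lam h a g η)‖
          ≤ B₁ * (Lz * ‖ξ - η‖) := by
        refine (ContinuousLinearMap.le_opNorm _ _).trans ?_
        exact mul_le_mul (hbd₁ _) (hz_lip ξ η) (norm_nonneg _) hB₁.le
      calc _ ≤ (B₂ * ((1 + h*Lz) * ‖ξ - η‖)) * K₃ + B₁ * (Lz * ‖ξ - η‖) :=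
            add_le_add t1 t2
        _ = (B₂*(1 + h*Lz)*K₃ + B₁*Lz) * ‖ξ - η‖ := by ring
    have := intervalIntegral.norm_integral_le_of_norm_le_const key
    have h10 : |(1:ℝ) - 0| = 1 := by norm_num
    rw [h10, mul_one] at this
    exact this
  -- surjectivity of ξ ↦ ξ + h z(ξ)
  have hsurj : ∀ p, ∃ ξ, p = ξ + h • zMap f lam h a g ξ := by
    intro p
    set F : EuclideanSpace ℝ (Fin d) → EuclideanSpace ℝ (Fin d) :=
      fun ξ => p - h • zMap f lam h a g ξ with hF
    have hFlip : LipschitzWith (h*Lz).toNNReal F := by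
      refine LipschitzWith.of_dist_le_mul fun x y => ?_
      rw [Real.coe_toNNReal _ hc0, dist_eq_norm, dist_eq_norm]
      have e : F x - F y = h • (zMap f lam h a g y - zMap f lam h a g x) := by
        simp only [hF, smul_sub]; abel
      rw [e, norm_smul, Real.norm_eq_abs, abs_of_pos hh]
      calc h * ‖zMap f lam h a g y - zMap f lam h a g x‖
          ≤ h * (Lz * ‖y - x‖) := by gcongr; exact hz_lip y x
        _ = h*Lz * ‖x - y‖ := by rw [norm_sub_rev]; ring
    have hcontr : ContractingWith (h*Lz).toNNReal F :=
      ⟨Real.toNNReal_lt_one.mpr hc, hFlip⟩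
    refine ⟨hcontr.fixedPoint F, ?_⟩
    have hfix : F (hcontr.fixedPoint F) = hcontr.fixedPoint F := hcontr.fixedPoint_isFixedPt
    exact sub_eq_iff_eq_add.mp hfix
  -- distance comparison
  have hdist : ∀ ξ₁ ξ₂ : EuclideanSpace ℝ (Fin d),
      (1 - h*Lz) * ‖ξ₁ - ξ₂‖
        ≤ ‖(ξ₁ + h • zMap f lam h a g ξ₁) - (ξ₂ + h • zMap f lam h a g ξ₂)‖ := by
    intro ξ₁ ξ₂
    have e : ξ₁ - ξ₂ = ((ξ₁ + h • zMap f lam h a g ξ₁) - (ξ₂ + h • zMap f lam h a g ξ₂))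
        - h • (zMap f lam h a g ξ₁ - zMap f lam h a g ξ₂) := by
      rw [smul_sub]; abel
    have : ‖ξ₁ - ξ₂‖ ≤ ‖(ξ₁ + h • zMap f lam h a g ξ₁) - (ξ₂ + h • zMap f lam h a g ξ₂)‖
        + h*Lz*‖ξ₁ - ξ₂‖ := by
      conv_lhs => rw [e]
      refine (norm_sub_le _ _).trans ?_
      gcongr
      rw [norm_smul, Real.norm_eq_abs, abs_of_pos hh]
      calc h * ‖zMap f lam h a g ξ₁ - zMap f lam h a g ξ₂‖
          ≤ h * (Lz * ‖ξ₁ - ξ₂‖) := by gcongr; exact hz_lip ξ₁ ξ₂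
        _ = h*Lz*‖ξ₁ - ξ₂‖ := by ring
    linarith
  constructor
  · -- boundedness
    intro p
    obtain ⟨ξ, hpξ⟩ := hsurj p
    rw [hTg p ξ hpξ]
    have step : ‖lam • g ξ + a • I1 f lam h a g ξ - lamBar • I2 f lam h a g ξ‖
        ≤ lam*γ + a*(B₁*K₁) + lamBar*(B₁*K₃) := by
      refine ((norm_sub_le _ _).trans (add_le_add_left (norm_add_le _ _) _)).trans ?_
      rw [norm_smul, norm_smul, norm_smul, Real.norm_eq_abs, Real.norm_eq_abs,
        Real.norm_eq_abs, abs_of_pos hl0, abs_of_nonneg ha, abs_of_pos hlb0]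
      gcongr
      · exact hgbd ξ
      · exact hI1_bd ξ
      · exact hI2_bd ξ
    refine step.trans ?_
    have e : lam*γ + a*(B₁*K₁) + lamBar*(B₁*K₃)
        = (lam + h*B₁*(a + lam*lamBar)) * γ + lamBar*B₀*B₁*(a + lamBar) := by
      rw [hK₃, hK₁, hlamBar]
      field_simp
      ring
    linarith [hγineq]
  · -- Lipschitz
    intro p₁ p₂
    obtain ⟨ξ₁, hp₁⟩ := hsurj p₁
    obtain ⟨ξ₂, hp₂⟩ := hsurj p₂
    rw [hTg p₁ ξ₁ hp₁, hTg p₂ ξ₂ hp₂]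
    set L : ℝ := lam*δ + a*(B₂*(1 + h*a*K₂)*K₁ + B₁*K₂)
      + lamBar*(B₂*(1 + h*Lz)*K₃ + B₁*Lz) with hLdef
    have hstep : ‖(lam • g ξ₁ + a • I1 f lam h a g ξ₁ - lamBar • I2 f lam h a g ξ₁)
        - (lam • g ξ₂ + a • I1 f lam h a g ξ₂ - lamBar • I2 f lam h a g ξ₂)‖
        ≤ L * ‖ξ₁ - ξ₂‖ := by
      have e : (lam • g ξ₁ + a • I1 f lam h a g ξ₁ - lamBar • I2 f lam h a g ξ₁)
          - (lam • g ξ₂ + a • I1 f lam h a g ξ₂ - lamBar • I2 f lam h a g ξ₂)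
          = lam • (g ξ₁ - g ξ₂) + a • (I1 f lam h a g ξ₁ - I1 f lam h a g ξ₂)
            - lamBar • (I2 f lam h a g ξ₁ - I2 f lam h a g ξ₂) := by
        simp only [smul_sub]; abel
      rw [e]
      refine ((norm_sub_le _ _).trans (add_le_add_left (norm_add_le _ _) _)).trans ?_
      rw [norm_smul, norm_smul, norm_smul, Real.norm_eq_abs, Real.norm_eq_abs,
        Real.norm_eq_abs, abs_of_pos hl0, abs_of_nonneg ha, abs_of_pos hlb0]
      calc lam * ‖g ξ₁ - g ξ₂‖ + a * ‖I1 f lam h a g ξ₁ - I1 f lam h a g ξ₂‖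
            + lamBar * ‖I2 f lam h a g ξ₁ - I2 f lam h a g ξ₂‖
          ≤ lam * (δ * ‖ξ₁ - ξ₂‖) + a * ((B₂*(1 + h*a*K₂)*K₁ + B₁*K₂) * ‖ξ₁ - ξ₂‖)
            + lamBar * ((B₂*(1 + h*Lz)*K₃ + B₁*Lz) * ‖ξ₁ - ξ₂‖) := by
            gcongr
            · exact hglip ξ₁ ξ₂
            · exact hI1_lip ξ₁ ξ₂
            · exact hI2_lip ξ₁ ξ₂
        _ = L * ‖ξ₁ - ξ₂‖ := by rw [hLdef]; ring
    -- key algebraic identity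
    have hkey : L ≤ δ * (1 - h*Lz) := by
      have e : L - δ * (1 - h*Lz) = α₂*δ^2 + α₁*δ + α₀ := by
        rw [hLdef, hLz, hα₂, hα₁, hα₀, hK₃, hK₂, hK₁, hlamBar]
        field_simp
        ring
      linarith [hδineq]
    have hd2 : (1 - h*Lz) * ‖ξ₁ - ξ₂‖ ≤ ‖p₁ - p₂‖ := by
      rw [hp₁, hp₂]; exact hdist ξ₁ ξ₂
    have hn : (0:ℝ) ≤ ‖ξ₁ - ξ₂‖ := norm_nonneg _
    calc ‖(lam • g ξ₁ + a • I1 f lam h a g ξ₁ - lamBar • I2 f lam h a g ξ₁)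
        - (lam • g ξ₂ + a • I1 f lam h a g ξ₂ - lamBar • I2 f lam h a g ξ₂)‖
        ≤ L * ‖ξ₁ - ξ₂‖ := hstep
      _ ≤ (δ * (1 - h*Lz)) * ‖ξ₁ - ξ₂‖ := by
          exact mul_le_mul_of_nonneg_right hkey hn
      _ = δ * ((1 - h*Lz) * ‖ξ₁ - ξ₂‖) := by ring
      _ ≤ δ * ‖p₁ - p₂‖ := by
          exact mul_le_mul_of_nonneg_left hd2 hδ.le
end
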